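/- arXiv:2602.23775 — 9 statements merged into one kernel-verified Lean document; each statement's English description precedes it below -/
import Mathlib

section
/- Let λ0, λ1, λ2 > 0 and let (X1, X2) follow the bivariate Poisson distribution BPoi(λ0; λ1, λ2). Then for every bounded function f : ℕ × ℕ → ℝ, one has E[X1 · f(X1, X2)] = λ1 · E[f(X1 + 1, X2)] + λ0 · E[f(X1 + 1, X2 + 1)]. -/
open scoped NNReal ENNReal

/-- The bivariate Poisson distribution `BPoi(λ0; λ1, λ2)`: the distribution of
`(Z0 + Z1, Z0 + Z2)` where `Z0, Z1, Z2` are independent with `Zi ~ Poisson(λi)`. -/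
noncomputable def bpoi (l0 l1 l2 : ℝ≥0) : PMF (ℕ × ℕ) :=
  (ProbabilityTheory.poissonPMF l0).bind fun z0 =>
    (ProbabilityTheory.poissonPMF l1).bind fun z1 =>
      (ProbabilityTheory.poissonPMF l2).map fun z2 => (z0 + z1, z0 + z2)

/-- Expectation of a real-valued function under a distribution on `ℕ × ℕ`. -/
noncomputable def pExp (p : PMF (ℕ × ℕ)) (g : ℕ × ℕ → ℝ) : ℝ :=
  ∑' q : ℕ × ℕ, (p q).toReal * g q

open ProbabilityTheory

private lemma poisson_stein_pt (l : ℝ≥0) (n : ℕ) :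
    poissonPMF l (n + 1) * ((n : ℝ≥0∞) + 1) = (l : ℝ≥0∞) * poissonPMF l n := by
  have hco : ∀ k, poissonPMF l k = ENNReal.ofReal (poissonPMFReal l k) := fun _ => rfl
  have hreal : poissonPMFReal l (n + 1) * ((n : ℝ) + 1) = (l : ℝ) * poissonPMFReal l n := by
    have hfac : (n.factorial : ℝ) ≠ 0 := Nat.cast_ne_zero.mpr n.factorial_ne_zero
    have hn1 : ((n : ℝ) + 1) ≠ 0 := by positivity
    rw [poissonPMFReal, poissonPMFReal, Nat.factorial_succ, pow_succ]
    push_cast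
    field_simp
  rw [hco, hco,
    show ((n : ℝ≥0∞) + 1) = ENNReal.ofReal ((n : ℝ) + 1) by
      rw [ENNReal.ofReal_add (Nat.cast_nonneg n) zero_le_one]; simp,
    ← ENNReal.ofReal_mul ProbabilityTheory.poissonPMFReal_nonneg, hreal,
    ENNReal.ofReal_mul l.coe_nonneg, ENNReal.ofReal_coe_nnreal]

private lemma poisson_tsum_shift (l : ℝ≥0) (ψ : ℕ → ℝ≥0∞) :
    ∑' n, poissonPMF l n * ((n : ℝ≥0∞) * ψ n)
      = (l : ℝ≥0∞) * ∑' n, poissonPMF l n * ψ (n + 1) := by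
  rw [tsum_eq_zero_add' ENNReal.summable]
  simp only [Nat.cast_zero, zero_mul, mul_zero, zero_add, ← ENNReal.tsum_mul_left]
  refine tsum_congr fun n => ?_
  have hc : ((n + 1 : ℕ) : ℝ≥0∞) = (n : ℝ≥0∞) + 1 := by push_cast; ring
  rw [hc, ← mul_assoc, mul_comm (poissonPMF l (n + 1)) ((n : ℝ≥0∞) + 1),
    mul_comm ((n : ℝ≥0∞) + 1) (poissonPMF l (n + 1)), poisson_stein_pt, mul_assoc]

private lemma tsum_mul_const_left (c : ℝ≥0∞) (w x : ℕ → ℝ≥0∞) :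
    ∑' n, w n * (c * x n) = c * ∑' n, w n * x n := by
  rw [← ENNReal.tsum_mul_left]
  exact tsum_congr fun n => by ring

private lemma tsum_bind_mul {α : Type*} (p : PMF α) (h : α → PMF (ℕ × ℕ))
    (φ : ℕ × ℕ → ℝ≥0∞) :
    ∑' q, (p.bind h) q * φ q = ∑' a, p a * ∑' q, h a q * φ q := by
  simp only [PMF.bind_apply]
  calc ∑' q, (∑' a, p a * h a q) * φ q
      = ∑' (q) (a), p a * h a q * φ q := tsum_congr fun q => ENNReal.tsum_mul_right.symm
    _ = ∑' (a) (q), p a * h a q * φ q := ENNReal.tsum_comm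
    _ = ∑' a, p a * ∑' q, h a q * φ q := tsum_congr fun a => by
          simp only [mul_assoc]; exact ENNReal.tsum_mul_left

private lemma tsum_map_mul {α : Type*} (p : PMF α) (ψ : α → ℕ × ℕ) (φ : ℕ × ℕ → ℝ≥0∞) :
    ∑' q, (p.map ψ) q * φ q = ∑' a, p a * φ (ψ a) := by
  simp only [PMF.map_apply]
  refine (tsum_congr fun q => ENNReal.tsum_mul_right.symm).trans ?_
  rw [ENNReal.tsum_comm]
  refine tsum_congr fun a => ?_
  rw [tsum_eq_single (ψ a) (fun b hb => by simp [hb])]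
  simp

private lemma tsum_bpoi (l0 l1 l2 : ℝ≥0) (φ : ℕ × ℕ → ℝ≥0∞) :
    ∑' q, bpoi l0 l1 l2 q * φ q
      = ∑' z0, poissonPMF l0 z0 * ∑' z1, poissonPMF l1 z1 *
          ∑' z2, poissonPMF l2 z2 * φ (z0 + z1, z0 + z2) := by
  rw [bpoi, tsum_bind_mul]
  refine tsum_congr fun z0 => ?_
  rw [tsum_bind_mul]
  congr 1
  refine tsum_congr fun z1 => ?_
  rw [tsum_map_mul]

private lemma tsum_bpoi_stein (l0 l1 l2 : ℝ≥0) (φ : ℕ × ℕ → ℝ≥0∞) :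
    ∑' q, bpoi l0 l1 l2 q * ((q.1 : ℝ≥0∞) * φ q)
      = (l1 : ℝ≥0∞) * ∑' q, bpoi l0 l1 l2 q * φ (q.1 + 1, q.2)
        + (l0 : ℝ≥0∞) * ∑' q, bpoi l0 l1 l2 q * φ (q.1 + 1, q.2 + 1) := by
  rw [tsum_bpoi, tsum_bpoi, tsum_bpoi]
  simp only []
  calc ∑' z0, poissonPMF l0 z0 * ∑' z1, poissonPMF l1 z1 *
          ∑' z2, poissonPMF l2 z2 * (((z0 + z1 : ℕ) : ℝ≥0∞) * φ (z0 + z1, z0 + z2))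
      = ∑' z0, poissonPMF l0 z0 * ∑' z1, poissonPMF l1 z1 *
          (((z0 + z1 : ℕ) : ℝ≥0∞) * ∑' z2, poissonPMF l2 z2 * φ (z0 + z1, z0 + z2)) := by
        refine tsum_congr fun z0 => ?_
        congr 1
        refine tsum_congr fun z1 => ?_
        congr 1
        exact tsum_mul_const_left _ _ _
    _ = ∑' z0, poissonPMF l0 z0 *
          ((z0 : ℝ≥0∞) * ∑' z1, poissonPMF l1 z1 *
              ∑' z2, poissonPMF l2 z2 * φ (z0 + z1, z0 + z2)
            + (l1 : ℝ≥0∞) * ∑' z1, poissonPMF l1 z1 *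
                ∑' z2, poissonPMF l2 z2 * φ (z0 + (z1 + 1), z0 + z2)) := by
        refine tsum_congr fun z0 => ?_
        congr 1
        rw [← tsum_mul_const_left ((z0 : ℝ≥0∞)),
          ← poisson_tsum_shift l1
            (fun b => ∑' z2, poissonPMF l2 z2 * φ (z0 + b, z0 + z2)),
          ← ENNReal.tsum_add]
        refine tsum_congr fun z1 => ?_
        push_cast
        ring
    _ = (∑' z0, poissonPMF l0 z0 * ((z0 : ℝ≥0∞) * ∑' z1, poissonPMF l1 z1 *
            ∑' z2, poissonPMF l2 z2 * φ (z0 + z1, z0 + z2)))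
          + ∑' z0, poissonPMF l0 z0 * ((l1 : ℝ≥0∞) * ∑' z1, poissonPMF l1 z1 *
              ∑' z2, poissonPMF l2 z2 * φ (z0 + (z1 + 1), z0 + z2)) := by
        rw [← ENNReal.tsum_add]
        refine tsum_congr fun z0 => ?_
        rw [mul_add]
    _ = (l0 : ℝ≥0∞) * (∑' z0, poissonPMF l0 z0 * ∑' z1, poissonPMF l1 z1 *
            ∑' z2, poissonPMF l2 z2 * φ ((z0 + 1) + z1, (z0 + 1) + z2))
          + (l1 : ℝ≥0∞) * ∑' z0, poissonPMF l0 z0 * ∑' z1, poissonPMF l1 z1 *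
              ∑' z2, poissonPMF l2 z2 * φ (z0 + (z1 + 1), z0 + z2) := by
        rw [poisson_tsum_shift l0
            (fun b => ∑' z1, poissonPMF l1 z1 *
              ∑' z2, poissonPMF l2 z2 * φ (b + z1, b + z2)),
          tsum_mul_const_left]
    _ = (l1 : ℝ≥0∞) * (∑' z0, poissonPMF l0 z0 * ∑' z1, poissonPMF l1 z1 *
            ∑' z2, poissonPMF l2 z2 * φ (z0 + z1 + 1, z0 + z2))
          + (l0 : ℝ≥0∞) * ∑' z0, poissonPMF l0 z0 * ∑' z1, poissonPMF l1 z1 *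
              ∑' z2, poissonPMF l2 z2 * φ (z0 + z1 + 1, z0 + z2 + 1) := by
        rw [add_comm]
        congr 1
        · congr 1
          refine tsum_congr fun z0 => ?_
          congr 1
          refine tsum_congr fun z1 => ?_
          congr 1
          refine tsum_congr fun z2 => ?_
          rw [show z0 + 1 + z1 = z0 + z1 + 1 from by omega,
            show z0 + 1 + z2 = z0 + z2 + 1 from by omega]


private lemma tsum_toReal_pmf (p : PMF (ℕ × ℕ)) (v : ℕ × ℕ → ℝ) (hv : ∀ q, 0 ≤ v q) :
    ∑' q, (p q).toReal * v q = (∑' q, p q * ENNReal.ofReal (v q)).toReal := by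
  rw [ENNReal.tsum_toReal_eq fun q => ENNReal.mul_ne_top (p.apply_ne_top q)
    ENNReal.ofReal_ne_top]
  exact tsum_congr fun q => by
    rw [ENNReal.toReal_mul, ENNReal.toReal_ofReal (hv q)]

private lemma tsum_pmf_ne_top (p : PMF (ℕ × ℕ)) (v : ℕ × ℕ → ℝ) (C : ℝ)
    (hv : ∀ q, v q ≤ C) : ∑' q, p q * ENNReal.ofReal (v q) ≠ ⊤ := by
  have hle : ∑' q, p q * ENNReal.ofReal (v q) ≤ ∑' q, p q * ENNReal.ofReal C :=
    Summable.tsum_le_tsum (fun q => mul_le_mul_right (ENNReal.ofReal_le_ofReal (hv q)) _)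
      ENNReal.summable ENNReal.summable
  refine ne_top_of_le_ne_top ?_ hle
  rw [ENNReal.tsum_mul_right, p.tsum_coe, one_mul]
  exact ENNReal.ofReal_ne_top

private lemma summable_pmf_mul (p : PMF (ℕ × ℕ)) (v : ℕ × ℕ → ℝ) (hv : ∀ q, 0 ≤ v q)
    (h : ∑' q, p q * ENNReal.ofReal (v q) ≠ ⊤) :
    Summable fun q => (p q).toReal * v q :=
  (ENNReal.summable_toReal h).congr fun q => by
    rw [ENNReal.toReal_mul, ENNReal.toReal_ofReal (hv q)]

theorem stein_bpoi_first (l0 l1 l2 : ℝ≥0) (h0 : 0 < l0) (h1 : 0 < l1) (h2 : 0 < l2)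
    (f : ℕ × ℕ → ℝ) (hf : ∃ C : ℝ, ∀ q : ℕ × ℕ, |f q| ≤ C) :
    pExp (bpoi l0 l1 l2) (fun q => (q.1 : ℝ) * f q)
      = l1 * pExp (bpoi l0 l1 l2) (fun q => f (q.1 + 1, q.2))
        + l0 * pExp (bpoi l0 l1 l2) (fun q => f (q.1 + 1, q.2 + 1)) := by
  obtain ⟨C, hC⟩ := hf
  have hC0 : 0 ≤ C := (abs_nonneg _).trans (hC (0, 0))
  set μ := bpoi l0 l1 l2 with hμ
  set fp : ℕ × ℕ → ℝ := fun q => max (f q) 0 with hfp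
  set fm : ℕ × ℕ → ℝ := fun q => max (-f q) 0 with hfm
  have hfp0 : ∀ q, 0 ≤ fp q := fun q => le_max_right _ _
  have hfm0 : ∀ q, 0 ≤ fm q := fun q => le_max_right _ _
  have hfpC : ∀ q, fp q ≤ C := fun q => max_le ((le_abs_self _).trans (hC q)) hC0
  have hfmC : ∀ q, fm q ≤ C := fun q => max_le ((neg_le_abs _).trans (hC q)) hC0
  have hsub : ∀ q, fp q - fm q = f q := fun q => max_zero_sub_max_neg_zero_eq_self (f q)
  -- ENNReal quantities
  set Bp := ∑' q, μ q * ENNReal.ofReal (fp (q.1 + 1, q.2)) with hBp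
  set Bm := ∑' q, μ q * ENNReal.ofReal (fm (q.1 + 1, q.2)) with hBm
  set Cp := ∑' q, μ q * ENNReal.ofReal (fp (q.1 + 1, q.2 + 1)) with hCp
  set Cm := ∑' q, μ q * ENNReal.ofReal (fm (q.1 + 1, q.2 + 1)) with hCm
  set Ap := ∑' q, μ q * ENNReal.ofReal ((q.1 : ℝ) * fp q) with hAp
  set Am := ∑' q, μ q * ENNReal.ofReal ((q.1 : ℝ) * fm q) with hAm
  have hBp_ne : Bp ≠ ⊤ := tsum_pmf_ne_top μ _ C (fun q => hfpC _)
  have hBm_ne : Bm ≠ ⊤ := tsum_pmf_ne_top μ _ C (fun q => hfmC _)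
  have hCp_ne : Cp ≠ ⊤ := tsum_pmf_ne_top μ _ C (fun q => hfpC _)
  have hCm_ne : Cm ≠ ⊤ := tsum_pmf_ne_top μ _ C (fun q => hfmC _)
  have hconv : ∀ g : ℕ × ℕ → ℝ, (∀ q, 0 ≤ g q) →
      (∑' q, μ q * ENNReal.ofReal ((q.1 : ℝ) * g q))
        = ∑' q, μ q * ((q.1 : ℝ≥0∞) * ENNReal.ofReal (g q)) :=
    fun g hg => tsum_congr fun q => by
      rw [ENNReal.ofReal_mul (Nat.cast_nonneg _), ENNReal.ofReal_natCast]
  have coreP : Ap = (l1 : ℝ≥0∞) * Bp + (l0 : ℝ≥0∞) * Cp := by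
    rw [hAp, hconv fp hfp0, hBp, hCp]
    exact tsum_bpoi_stein l0 l1 l2 (fun q => ENNReal.ofReal (fp q))
  have coreM : Am = (l1 : ℝ≥0∞) * Bm + (l0 : ℝ≥0∞) * Cm := by
    rw [hAm, hconv fm hfm0, hBm, hCm]
    exact tsum_bpoi_stein l0 l1 l2 (fun q => ENNReal.ofReal (fm q))
  have hAp_ne : Ap ≠ ⊤ := by
    rw [coreP]
    exact ENNReal.add_ne_top.mpr
      ⟨ENNReal.mul_ne_top ENNReal.coe_ne_top hBp_ne,
       ENNReal.mul_ne_top ENNReal.coe_ne_top hCp_ne⟩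
  have hAm_ne : Am ≠ ⊤ := by
    rw [coreM]
    exact ENNReal.add_ne_top.mpr
      ⟨ENNReal.mul_ne_top ENNReal.coe_ne_top hBm_ne,
       ENNReal.mul_ne_top ENNReal.coe_ne_top hCm_ne⟩
  -- summabilities
  have SAp : Summable fun q => (μ q).toReal * ((q.1 : ℝ) * fp q) :=
    summable_pmf_mul μ _ (fun q => mul_nonneg (Nat.cast_nonneg _) (hfp0 q)) hAp_ne
  have SAm : Summable fun q => (μ q).toReal * ((q.1 : ℝ) * fm q) :=
    summable_pmf_mul μ _ (fun q => mul_nonneg (Nat.cast_nonneg _) (hfm0 q)) hAm_ne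
  have SBp : Summable fun q => (μ q).toReal * fp (q.1 + 1, q.2) :=
    summable_pmf_mul μ _ (fun q => hfp0 _) hBp_ne
  have SBm : Summable fun q => (μ q).toReal * fm (q.1 + 1, q.2) :=
    summable_pmf_mul μ _ (fun q => hfm0 _) hBm_ne
  have SCp : Summable fun q => (μ q).toReal * fp (q.1 + 1, q.2 + 1) :=
    summable_pmf_mul μ _ (fun q => hfp0 _) hCp_ne
  have SCm : Summable fun q => (μ q).toReal * fm (q.1 + 1, q.2 + 1) :=
    summable_pmf_mul μ _ (fun q => hfm0 _) hCm_ne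
  -- expectation identities
  have E1 : pExp μ (fun q => (q.1 : ℝ) * f q) = Ap.toReal - Am.toReal := by
    rw [pExp]
    calc ∑' q, (μ q).toReal * ((q.1 : ℝ) * f q)
        = ∑' q, ((μ q).toReal * ((q.1 : ℝ) * fp q)
            - (μ q).toReal * ((q.1 : ℝ) * fm q)) := tsum_congr fun q => by
          rw [← hsub q]; ring
      _ = (∑' q, (μ q).toReal * ((q.1 : ℝ) * fp q))
            - ∑' q, (μ q).toReal * ((q.1 : ℝ) * fm q) := Summable.tsum_sub SAp SAm
      _ = Ap.toReal - Am.toReal := by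
          rw [tsum_toReal_pmf μ _ (fun q => mul_nonneg (Nat.cast_nonneg _) (hfp0 q)),
            tsum_toReal_pmf μ _ (fun q => mul_nonneg (Nat.cast_nonneg _) (hfm0 q)),
            ← hAp, ← hAm]
  have E2 : pExp μ (fun q => f (q.1 + 1, q.2)) = Bp.toReal - Bm.toReal := by
    rw [pExp]
    calc ∑' q, (μ q).toReal * f (q.1 + 1, q.2)
        = ∑' q, ((μ q).toReal * fp (q.1 + 1, q.2)
            - (μ q).toReal * fm (q.1 + 1, q.2)) := tsum_congr fun q => by
          rw [← hsub (q.1 + 1, q.2)]; ring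
      _ = (∑' q, (μ q).toReal * fp (q.1 + 1, q.2))
            - ∑' q, (μ q).toReal * fm (q.1 + 1, q.2) := Summable.tsum_sub SBp SBm
      _ = Bp.toReal - Bm.toReal := by
          rw [tsum_toReal_pmf μ _ (fun q => hfp0 _),
            tsum_toReal_pmf μ _ (fun q => hfm0 _), ← hBp, ← hBm]
  have E3 : pExp μ (fun q => f (q.1 + 1, q.2 + 1)) = Cp.toReal - Cm.toReal := by
    rw [pExp]
    calc ∑' q, (μ q).toReal * f (q.1 + 1, q.2 + 1)
        = ∑' q, ((μ q).toReal * fp (q.1 + 1, q.2 + 1)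
            - (μ q).toReal * fm (q.1 + 1, q.2 + 1)) := tsum_congr fun q => by
          rw [← hsub (q.1 + 1, q.2 + 1)]; ring
      _ = (∑' q, (μ q).toReal * fp (q.1 + 1, q.2 + 1))
            - ∑' q, (μ q).toReal * fm (q.1 + 1, q.2 + 1) := Summable.tsum_sub SCp SCm
      _ = Cp.toReal - Cm.toReal := by
          rw [tsum_toReal_pmf μ _ (fun q => hfp0 _),
            tsum_toReal_pmf μ _ (fun q => hfm0 _), ← hCp, ← hCm]
  rw [E1, E2, E3, coreP, coreM,
    ENNReal.toReal_add (ENNReal.mul_ne_top ENNReal.coe_ne_top hBp_ne)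
      (ENNReal.mul_ne_top ENNReal.coe_ne_top hCp_ne),
    ENNReal.toReal_add (ENNReal.mul_ne_top ENNReal.coe_ne_top hBm_ne)
      (ENNReal.mul_ne_top ENNReal.coe_ne_top hCm_ne),
    ENNReal.toReal_mul, ENNReal.toReal_mul, ENNReal.toReal_mul, ENNReal.toReal_mul,
    ENNReal.coe_toReal, ENNReal.coe_toReal]
  ring
end

section
/- Let λ0, λ1, λ2 > 0 and let (X1, X2) follow the bivariate Poisson distribution BPoi(λ0; λ1, λ2). Then for every bounded function f : ℕ × ℕ → ℝ, one has E[X2 · f(X1, X2)] = λ2 · E[f(X1, X2 + 1)] + λ0 · E[f(X1 + 1, X2 + 1)]. -/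
open ProbabilityTheory Real


open scoped NNReal ENNReal

lemma ppmf_toReal (r : ℝ≥0) (k : ℕ) : (poissonPMF r k).toReal = poissonPMFReal r k := by
  rw [show poissonPMF r k = ENNReal.ofReal (poissonPMFReal r k) from rfl,
    ENNReal.toReal_ofReal poissonPMFReal_nonneg]

lemma pois_shift (r : ℝ≥0) (k : ℕ) :
    poissonPMFReal r (k + 1) * ((k : ℝ) + 1) = r * poissonPMFReal r k := by
  have hk : ((Nat.factorial k : ℕ) : ℝ) ≠ 0 := Nat.cast_ne_zero.mpr (Nat.factorial_ne_zero k)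
  have hk1 : ((k : ℝ) + 1) ≠ 0 := by positivity
  unfold poissonPMFReal
  rw [Nat.factorial_succ, pow_succ]
  push_cast
  field_simp

lemma pois_summable (r : ℝ≥0) : Summable (poissonPMFReal r) := (poissonPMFRealSum r).summable

lemma pois_mul_summable (r : ℝ≥0) : Summable (fun k => poissonPMFReal r k * k) := by
  rw [← summable_nat_add_iff 1]
  refine ((pois_summable r).mul_left (r : ℝ)).congr fun k => ?_
  push_cast
  rw [pois_shift]


noncomputable def wgt (l0 l1 l2 : ℝ≥0) (z : ℕ × ℕ × ℕ) : ℝ :=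
  poissonPMFReal l0 z.1 * (poissonPMFReal l1 z.2.1 * poissonPMFReal l2 z.2.2)

def mm (z : ℕ × ℕ × ℕ) : ℕ × ℕ := (z.1 + z.2.1, z.1 + z.2.2)

lemma wgt_nonneg (l0 l1 l2 : ℝ≥0) (z : ℕ × ℕ × ℕ) : 0 ≤ wgt l0 l1 l2 z := by
  exact mul_nonneg poissonPMFReal_nonneg
    (mul_nonneg poissonPMFReal_nonneg poissonPMFReal_nonneg)

lemma bpoi_apply (l0 l1 l2 : ℝ≥0) (q : ℕ × ℕ) :
    bpoi l0 l1 l2 q = ∑' z : ℕ × ℕ × ℕ, if q = mm z then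
      poissonPMF l0 z.1 * (poissonPMF l1 z.2.1 * poissonPMF l2 z.2.2) else 0 := by
  simp only [bpoi, PMF.bind_apply, PMF.map_apply]
  rw [ENNReal.tsum_prod']
  refine tsum_congr fun z0 => ?_
  rw [ENNReal.tsum_prod', ← ENNReal.tsum_mul_left]
  refine tsum_congr fun z1 => ?_
  rw [← ENNReal.tsum_mul_left, ← ENNReal.tsum_mul_left]
  refine tsum_congr fun z2 => ?_
  simp only [mm]
  split_ifs with h
  · simp [h, mul_assoc]
  · simp [h]

lemma bpoi_apply_toReal (l0 l1 l2 : ℝ≥0) (q : ℕ × ℕ) :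
    ((bpoi l0 l1 l2) q).toReal
      = ∑' z : ℕ × ℕ × ℕ, if q = mm z then wgt l0 l1 l2 z else 0 := by
  rw [bpoi_apply]
  rw [ENNReal.tsum_toReal_eq]
  · refine tsum_congr fun z => ?_
    split_ifs with h
    · simp [wgt, ENNReal.toReal_mul, ppmf_toReal]
    · simp
  · intro z
    split_ifs with h
    · exact ENNReal.mul_ne_top (PMF.apply_ne_top _ _)
        (ENNReal.mul_ne_top (PMF.apply_ne_top _ _) (PMF.apply_ne_top _ _))
    · simp

lemma pExp_eq (l0 l1 l2 : ℝ≥0) (g : ℕ × ℕ → ℝ)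
    (hg : Summable (fun z : ℕ × ℕ × ℕ => wgt l0 l1 l2 z * |g (mm z)|)) :
    pExp (bpoi l0 l1 l2) g = ∑' z : ℕ × ℕ × ℕ, wgt l0 l1 l2 z * g (mm z) := by
  set F : ℕ × ℕ → ℕ × ℕ × ℕ → ℝ :=
    fun q z => if q = mm z then wgt l0 l1 l2 z * g (mm z) else 0 with hF
  have habs : ∀ q z, |F q z| = if q = mm z then wgt l0 l1 l2 z * |g (mm z)| else 0 := by
    intro q z
    simp only [hF]
    split_ifs with h
    · rw [abs_mul, abs_of_nonneg (wgt_nonneg _ _ _ _)]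
    · simp
  -- summability in z for each q
  have hz : ∀ q, Summable fun z => F q z := by
    intro q
    refine Summable.of_abs ?_
    refine hg.of_nonneg_of_le (fun z => abs_nonneg _) fun z => ?_
    rw [habs]
    split_ifs with h
    · exact le_rfl
    · exact mul_nonneg (wgt_nonneg _ _ _ _) (abs_nonneg _)
  have hq : ∀ z, Summable fun q => F q z :=
    fun z => (hasSum_ite_eq (mm z) (wgt l0 l1 l2 z * g (mm z))).summable
  have hinj : Function.Injective
      (fun z : ℕ × ℕ × ℕ => ((mm z, z) : (ℕ × ℕ) × (ℕ × ℕ × ℕ))) :=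
    fun a b h => (Prod.ext_iff.mp h).2
  have hsupp : ∀ x ∉ Set.range (fun z : ℕ × ℕ × ℕ => ((mm z, z) : (ℕ × ℕ) × (ℕ × ℕ × ℕ))),
      |Function.uncurry F x| = 0 := by
    rintro ⟨q, z⟩ hx
    have hne : q ≠ mm z := by
      intro h
      exact hx ⟨z, by simp [h]⟩
    simp [Function.uncurry, hF, hne]
  have huc : Summable (Function.uncurry F) := by
    refine Summable.of_abs ?_
    rw [← Function.Injective.summable_iff hinj hsupp]
    refine hg.congr fun z => ?_
    simp [Function.uncurry, habs]
  calc pExp (bpoi l0 l1 l2) g = ∑' q : ℕ × ℕ, ∑' z : ℕ × ℕ × ℕ, F q z := by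
        refine tsum_congr fun q => ?_
        rw [bpoi_apply_toReal, ← tsum_mul_right]
        refine tsum_congr fun z => ?_
        simp only [hF]
        split_ifs with h
        · rw [h]
        · simp
    _ = ∑' z : ℕ × ℕ × ℕ, ∑' q : ℕ × ℕ, F q z := (Summable.tsum_comm' huc hz hq).symm
    _ = ∑' z : ℕ × ℕ × ℕ, wgt l0 l1 l2 z * g (mm z) := by
        refine tsum_congr fun z => ?_
        exact tsum_ite_eq (mm z) _

lemma summable_triple {A B C : ℕ → ℝ} (hA : Summable A) (hB : Summable B) (hC : Summable C)
    (hA0 : ∀ k, 0 ≤ A k) (hB0 : ∀ k, 0 ≤ B k) (hC0 : ∀ k, 0 ≤ C k) :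
    Summable (fun z : ℕ × ℕ × ℕ => A z.1 * (B z.2.1 * C z.2.2)) :=
  hA.mul_of_nonneg (hB.mul_of_nonneg hC hB0 hC0) hA0
    fun p => mul_nonneg (hB0 p.1) (hC0 p.2)

section main
variable (l0 l1 l2 : ℝ≥0)

lemma hw_summable : Summable (wgt l0 l1 l2) :=
  summable_triple (pois_summable l0) (pois_summable l1) (pois_summable l2)
    (fun _ => poissonPMFReal_nonneg) (fun _ => poissonPMFReal_nonneg)
    (fun _ => poissonPMFReal_nonneg)

lemma hw0_summable : Summable (fun z : ℕ × ℕ × ℕ => wgt l0 l1 l2 z * z.1) := by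
  refine (summable_triple (pois_mul_summable l0) (pois_summable l1) (pois_summable l2)
    (fun k => mul_nonneg poissonPMFReal_nonneg (Nat.cast_nonneg k))
    (fun _ => poissonPMFReal_nonneg) (fun _ => poissonPMFReal_nonneg)).congr fun z => ?_
  simp only [wgt]; ring

lemma hw2_summable : Summable (fun z : ℕ × ℕ × ℕ => wgt l0 l1 l2 z * z.2.2) := by
  refine (summable_triple (pois_summable l0) (pois_summable l1) (pois_mul_summable l2)
    (fun _ => poissonPMFReal_nonneg) (fun _ => poissonPMFReal_nonneg)
    (fun k => mul_nonneg poissonPMFReal_nonneg (Nat.cast_nonneg k))).congr fun z => ?_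
  simp only [wgt]; ring

end main

lemma key2 (l0 l1 l2 : ℝ≥0) (f : ℕ × ℕ → ℝ) :
    ∑' z : ℕ × ℕ × ℕ, wgt l0 l1 l2 z * (z.2.2 : ℝ) * f (mm z)
      = l2 * ∑' z : ℕ × ℕ × ℕ, wgt l0 l1 l2 z * f ((mm z).1, (mm z).2 + 1) := by
  set i : ℕ × ℕ × ℕ → ℕ × ℕ × ℕ := fun z => (z.1, z.2.1, z.2.2 + 1) with hi_def
  have hi : Function.Injective i := by
    rintro ⟨x, y, t⟩ ⟨x', y', t'⟩ h
    simp only [i, Prod.mk.injEq] at h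
    obtain ⟨h1, h2, h3⟩ := h
    simp_all
  have hsupp : Function.support
      (fun z : ℕ × ℕ × ℕ => wgt l0 l1 l2 z * (z.2.2 : ℝ) * f (mm z)) ⊆ Set.range i := by
    intro z hz
    have h22 : z.2.2 ≠ 0 := by
      intro h
      apply hz
      simp [h]
    have h22' : z.2.2 - 1 + 1 = z.2.2 := by omega
    exact ⟨(z.1, z.2.1, z.2.2 - 1), by simp [i, h22']⟩
  calc ∑' z : ℕ × ℕ × ℕ, wgt l0 l1 l2 z * (z.2.2 : ℝ) * f (mm z)
      = ∑' z : ℕ × ℕ × ℕ, wgt l0 l1 l2 (i z) * ((i z).2.2 : ℝ) * f (mm (i z)) :=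
        (Function.Injective.tsum_eq hi hsupp).symm
    _ = ∑' z : ℕ × ℕ × ℕ, (l2 : ℝ) * (wgt l0 l1 l2 z * f ((mm z).1, (mm z).2 + 1)) := by
        refine tsum_congr fun z => ?_
        simp only [i, wgt, mm]
        have e1 : z.1 + (z.2.2 + 1) = z.1 + z.2.2 + 1 := by omega
        rw [e1]
        have hs := pois_shift l2 z.2.2
        push_cast
        linear_combination (poissonPMFReal l0 z.1 * poissonPMFReal l1 z.2.1
          * f (z.1 + z.2.1, z.1 + z.2.2 + 1)) * hs
    _ = l2 * ∑' z : ℕ × ℕ × ℕ, wgt l0 l1 l2 z * f ((mm z).1, (mm z).2 + 1) := tsum_mul_left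

lemma key0 (l0 l1 l2 : ℝ≥0) (f : ℕ × ℕ → ℝ) :
    ∑' z : ℕ × ℕ × ℕ, wgt l0 l1 l2 z * (z.1 : ℝ) * f (mm z)
      = l0 * ∑' z : ℕ × ℕ × ℕ, wgt l0 l1 l2 z * f ((mm z).1 + 1, (mm z).2 + 1) := by
  set i : ℕ × ℕ × ℕ → ℕ × ℕ × ℕ := fun z => (z.1 + 1, z.2.1, z.2.2) with hi_def
  have hi : Function.Injective i := by
    rintro ⟨x, y, t⟩ ⟨x', y', t'⟩ h
    simp only [i, Prod.mk.injEq] at h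
    obtain ⟨h1, h2, h3⟩ := h
    simp_all
  have hsupp : Function.support
      (fun z : ℕ × ℕ × ℕ => wgt l0 l1 l2 z * (z.1 : ℝ) * f (mm z)) ⊆ Set.range i := by
    intro z hz
    have h1 : z.1 ≠ 0 := by
      intro h
      apply hz
      simp [h]
    have h1' : z.1 - 1 + 1 = z.1 := by omega
    exact ⟨(z.1 - 1, z.2.1, z.2.2), by simp [i, h1']⟩
  calc ∑' z : ℕ × ℕ × ℕ, wgt l0 l1 l2 z * (z.1 : ℝ) * f (mm z)
      = ∑' z : ℕ × ℕ × ℕ, wgt l0 l1 l2 (i z) * ((i z).1 : ℝ) * f (mm (i z)) :=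
        (Function.Injective.tsum_eq hi hsupp).symm
    _ = ∑' z : ℕ × ℕ × ℕ, (l0 : ℝ) * (wgt l0 l1 l2 z * f ((mm z).1 + 1, (mm z).2 + 1)) := by
        refine tsum_congr fun z => ?_
        simp only [i, wgt, mm]
        have e1 : z.1 + 1 + z.2.1 = z.1 + z.2.1 + 1 := by omega
        have e2 : z.1 + 1 + z.2.2 = z.1 + z.2.2 + 1 := by omega
        rw [e1, e2]
        have hs := pois_shift l0 z.1
        push_cast
        linear_combination (poissonPMFReal l1 z.2.1 * poissonPMFReal l2 z.2.2
          * f (z.1 + z.2.1 + 1, z.1 + z.2.2 + 1)) * hs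
    _ = l0 * ∑' z : ℕ × ℕ × ℕ, wgt l0 l1 l2 z * f ((mm z).1 + 1, (mm z).2 + 1) :=
        tsum_mul_left

set_option maxHeartbeats 1000000 in
theorem stein_bpoi_second (l0 l1 l2 : ℝ≥0) (h0 : 0 < l0) (h1 : 0 < l1) (h2 : 0 < l2)
    (f : ℕ × ℕ → ℝ) (hf : ∃ C : ℝ, ∀ q : ℕ × ℕ, |f q| ≤ C) :
    pExp (bpoi l0 l1 l2) (fun q => (q.2 : ℝ) * f q)
      = l2 * pExp (bpoi l0 l1 l2) (fun q => f (q.1, q.2 + 1))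
        + l0 * pExp (bpoi l0 l1 l2) (fun q => f (q.1 + 1, q.2 + 1)) := by
  obtain ⟨C, hfC⟩ := hf
  have hC0 : 0 ≤ C := le_trans (abs_nonneg _) (hfC (0, 0))
  have hw := hw_summable l0 l1 l2
  have hw0 := hw0_summable l0 l1 l2
  have hw2 := hw2_summable l0 l1 l2
  -- summability for bounded g
  have hbdd : ∀ g' : ℕ × ℕ → ℝ, (∀ q, |g' q| ≤ C) →
      Summable (fun z : ℕ × ℕ × ℕ => wgt l0 l1 l2 z * |g' (mm z)|) := by
    intro g' hg'
    refine (hw.mul_right C).of_nonneg_of_le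
      (fun z => mul_nonneg (wgt_nonneg _ _ _ _) (abs_nonneg _)) fun z => ?_
    exact mul_le_mul_of_nonneg_left (hg' _) (wgt_nonneg _ _ _ _)
  -- summability for the LHS integrand
  have hg0 : Summable (fun z : ℕ × ℕ × ℕ =>
      wgt l0 l1 l2 z * |((mm z).2 : ℝ) * f (mm z)|) := by
    refine ((hw0.add hw2).mul_right C).of_nonneg_of_le
      (fun z => mul_nonneg (wgt_nonneg _ _ _ _) (abs_nonneg _)) fun z => ?_
    rw [abs_mul, abs_of_nonneg (Nat.cast_nonneg _)]
    calc wgt l0 l1 l2 z * (((mm z).2 : ℝ) * |f (mm z)|)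
        ≤ wgt l0 l1 l2 z * (((mm z).2 : ℝ) * C) := by
          have := wgt_nonneg l0 l1 l2 z
          have := hfC (mm z)
          have : (0:ℝ) ≤ ((mm z).2 : ℝ) := Nat.cast_nonneg _
          gcongr
      _ = (wgt l0 l1 l2 z * (z.1 : ℝ) + wgt l0 l1 l2 z * (z.2.2 : ℝ)) * C := by
          simp only [mm]
          push_cast
          ring
  -- summability of the two split pieces
  have hs2 : Summable (fun z : ℕ × ℕ × ℕ =>
      wgt l0 l1 l2 z * (z.2.2 : ℝ) * f (mm z)) := by
    refine Summable.of_abs ?_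
    refine ((hw2.mul_right C).of_nonneg_of_le (fun z => abs_nonneg _) fun z => ?_)
    rw [abs_mul, abs_mul, abs_of_nonneg (wgt_nonneg _ _ _ _),
      abs_of_nonneg (Nat.cast_nonneg _)]
    have h1 : |f (mm z)| ≤ C := hfC _
    have h2 : 0 ≤ wgt l0 l1 l2 z * (z.2.2 : ℝ) :=
      mul_nonneg (wgt_nonneg _ _ _ _) (Nat.cast_nonneg _)
    exact mul_le_mul_of_nonneg_left h1 h2
  have hs0 : Summable (fun z : ℕ × ℕ × ℕ =>
      wgt l0 l1 l2 z * (z.1 : ℝ) * f (mm z)) := by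
    refine Summable.of_abs ?_
    refine ((hw0.mul_right C).of_nonneg_of_le (fun z => abs_nonneg _) fun z => ?_)
    rw [abs_mul, abs_mul, abs_of_nonneg (wgt_nonneg _ _ _ _),
      abs_of_nonneg (Nat.cast_nonneg _)]
    have h1 : |f (mm z)| ≤ C := hfC _
    have h2 : 0 ≤ wgt l0 l1 l2 z * (z.1 : ℝ) :=
      mul_nonneg (wgt_nonneg _ _ _ _) (Nat.cast_nonneg _)
    exact mul_le_mul_of_nonneg_left h1 h2
  have E0 := pExp_eq l0 l1 l2 (fun q => (q.2 : ℝ) * f q) hg0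
  have E1 := pExp_eq l0 l1 l2 (fun q => f (q.1, q.2 + 1)) (hbdd (fun q => f (q.1, q.2 + 1)) fun q => hfC _)
  have E2 := pExp_eq l0 l1 l2 (fun q => f (q.1 + 1, q.2 + 1)) (hbdd (fun q => f (q.1 + 1, q.2 + 1)) fun q => hfC _)
  rw [E0, E1, E2]
  calc ∑' z : ℕ × ℕ × ℕ, wgt l0 l1 l2 z * (((mm z).2 : ℝ) * f (mm z))
      = ∑' z : ℕ × ℕ × ℕ, (wgt l0 l1 l2 z * (z.2.2 : ℝ) * f (mm z)
          + wgt l0 l1 l2 z * (z.1 : ℝ) * f (mm z)) := by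
        refine tsum_congr fun z => ?_
        simp only [mm]
        push_cast
        ring
    _ = (∑' z : ℕ × ℕ × ℕ, wgt l0 l1 l2 z * (z.2.2 : ℝ) * f (mm z))
          + ∑' z : ℕ × ℕ × ℕ, wgt l0 l1 l2 z * (z.1 : ℝ) * f (mm z) :=
        Summable.tsum_add hs2 hs0
    _ = l2 * (∑' z : ℕ × ℕ × ℕ, wgt l0 l1 l2 z * f ((mm z).1, (mm z).2 + 1))
          + l0 * ∑' z : ℕ × ℕ × ℕ, wgt l0 l1 l2 z * f ((mm z).1 + 1, (mm z).2 + 1) := by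
        rw [key2, key0]
end

section
/- Let λ0, λ1, λ2 > 0 and let (X1, X2) follow the bivariate Poisson distribution BPoi(λ0; λ1, λ2). Then for every bounded function f : ℕ × ℕ → ℝ, one has E[(X1 − X2) · f(X1, X2)] = λ1 · E[f(X1 + 1, X2)] − λ2 · E[f(X1, X2 + 1)]. -/
open scoped NNReal ENNReal

namespace SteinBpoiAux

open ProbabilityTheory

noncomputable def tri (l0 l1 l2 : ℝ≥0) : PMF (ℕ × ℕ × ℕ) :=
  (poissonPMF l0).bind fun z0 =>
    (poissonPMF l1).bind fun z1 =>
      (poissonPMF l2).map fun z2 => (z0, z1, z2)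

lemma tri_apply (l0 l1 l2 : ℝ≥0) (z : ℕ × ℕ × ℕ) :
    tri l0 l1 l2 z = poissonPMF l0 z.1 * (poissonPMF l1 z.2.1 * poissonPMF l2 z.2.2) := by
  obtain ⟨a, b, c⟩ := z
  simp only [tri, PMF.bind_apply, PMF.map_apply]
  rw [tsum_eq_single a, tsum_eq_single b, tsum_eq_single c]
  · simp
  · intro w hw
    rw [if_neg (by simp [Prod.ext_iff]; tauto)]
  · intro y hy
    refine mul_eq_zero_of_right _ (ENNReal.tsum_eq_zero.mpr fun w => ?_)
    rw [if_neg (by simp [Prod.ext_iff]; tauto)]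
  · intro x hx
    refine mul_eq_zero_of_right _ (ENNReal.tsum_eq_zero.mpr fun y =>
      mul_eq_zero_of_right _ (ENNReal.tsum_eq_zero.mpr fun w => ?_))
    rw [if_neg (by simp [Prod.ext_iff]; tauto)]

/-- The map sending `(z0, z1, z2)` to `(z0 + z1, z0 + z2)`. -/
def φ3 : ℕ × ℕ × ℕ → ℕ × ℕ := fun z => (z.1 + z.2.1, z.1 + z.2.2)

lemma bpoi_eq (l0 l1 l2 : ℝ≥0) : bpoi l0 l1 l2 = (tri l0 l1 l2).map φ3 := by
  simp [bpoi, tri, φ3, PMF.map, PMF.bind_bind, PMF.pure_bind, Function.comp_def]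

lemma map_tsum_en {α β : Type*} (p : PMF α) (φ : α → β) (h : β → ℝ≥0∞) :
    ∑' b, (p.map φ) b * h b = ∑' a, p a * h (φ a) := by
  classical
  simp only [PMF.map_apply]
  have : ∀ b : β, (∑' a, if b = φ a then p a else 0) * h b
      = ∑' a, (if b = φ a then p a * h b else 0) := by
    intro b
    rw [← ENNReal.tsum_mul_right]
    exact tsum_congr fun a => by split_ifs <;> simp
  rw [tsum_congr this, ENNReal.tsum_comm]
  refine tsum_congr fun a => ?_
  rw [tsum_eq_single (φ a)]
  · rw [if_pos rfl]
  · intro b hb; rw [if_neg hb]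

lemma map_tsum_real_nonneg {α β : Type*} (p : PMF α) (φ : α → β) (u : β → ℝ)
    (hu : ∀ b, 0 ≤ u b) (hs : Summable fun a => (p a).toReal * u (φ a)) :
    ∑' b, ((p.map φ) b).toReal * u b = ∑' a, (p a).toReal * u (φ a) := by
  have hterm : ∀ a : α, p a * ENNReal.ofReal (u (φ a))
      = ENNReal.ofReal ((p a).toReal * u (φ a)) := by
    intro a
    rw [ENNReal.ofReal_mul ENNReal.toReal_nonneg, ENNReal.ofReal_toReal (p.apply_ne_top a)]
  have key := map_tsum_en p φ (fun b => ENNReal.ofReal (u b))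
  have hfin : ∑' a, p a * ENNReal.ofReal (u (φ a))
      = ENNReal.ofReal (∑' a, (p a).toReal * u (φ a)) := by
    rw [tsum_congr hterm, ← ENNReal.ofReal_tsum_of_nonneg
      (fun a => mul_nonneg ENNReal.toReal_nonneg (hu _)) hs]
  have hterm2 : ∀ b : β, ((p.map φ) b).toReal * u b
      = ((p.map φ) b * ENNReal.ofReal (u b)).toReal := by
    intro b
    rw [ENNReal.toReal_mul, ENNReal.toReal_ofReal (hu b)]
  rw [tsum_congr hterm2, ← ENNReal.tsum_toReal_eq
    (fun b => ENNReal.mul_ne_top ((p.map φ).apply_ne_top b) ENNReal.ofReal_ne_top),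
    key, hfin, ENNReal.toReal_ofReal]
  exact tsum_nonneg fun a => mul_nonneg ENNReal.toReal_nonneg (hu _)

lemma map_summable_real_nonneg {α β : Type*} (p : PMF α) (φ : α → β) (u : β → ℝ)
    (hu : ∀ b, 0 ≤ u b) (hs : Summable fun a => (p a).toReal * u (φ a)) :
    Summable fun b => ((p.map φ) b).toReal * u b := by
  have hterm2 : ∀ b : β, ((p.map φ) b).toReal * u b
      = ((p.map φ) b * ENNReal.ofReal (u b)).toReal := by
    intro b
    rw [ENNReal.toReal_mul, ENNReal.toReal_ofReal (hu b)]
  have hfin : (∑' b, (p.map φ) b * ENNReal.ofReal (u b)) ≠ ∞ := by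
    rw [map_tsum_en p φ (fun b => ENNReal.ofReal (u b)), tsum_congr (fun a => by
      rw [ENNReal.ofReal_mul ENNReal.toReal_nonneg, ENNReal.ofReal_toReal (p.apply_ne_top a)] :
      ∀ a : α, p a * ENNReal.ofReal (u (φ a)) = ENNReal.ofReal ((p a).toReal * u (φ a))),
      ← ENNReal.ofReal_tsum_of_nonneg (fun a => mul_nonneg ENNReal.toReal_nonneg (hu _)) hs]
    exact ENNReal.ofReal_ne_top
  exact (funext hterm2 : _) ▸ ENNReal.summable_toReal hfin

lemma map_tsum_real {α β : Type*} (p : PMF α) (φ : α → β) (g : β → ℝ)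
    (hs : Summable fun a => (p a).toReal * |g (φ a)|) :
    ∑' b, ((p.map φ) b).toReal * g b = ∑' a, (p a).toReal * g (φ a) := by
  set gp : β → ℝ := fun b => max (g b) 0 with hgp
  set gm : β → ℝ := fun b => max (-g b) 0 with hgm
  have hgp0 : ∀ b, 0 ≤ gp b := fun b => le_max_right _ _
  have hgm0 : ∀ b, 0 ≤ gm b := fun b => le_max_right _ _
  have hsplit : ∀ b, g b = gp b - gm b := fun b => by
    simp [hgp, hgm, max_def]; split_ifs <;> linarith
  have hsp : Summable fun a => (p a).toReal * gp (φ a) := by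
    refine Summable.of_nonneg_of_le (fun a => mul_nonneg ENNReal.toReal_nonneg (hgp0 _))
      (fun a => ?_) hs
    exact mul_le_mul_of_nonneg_left (max_le (le_abs_self _) (abs_nonneg _))
      ENNReal.toReal_nonneg
  have hsm : Summable fun a => (p a).toReal * gm (φ a) := by
    refine Summable.of_nonneg_of_le (fun a => mul_nonneg ENNReal.toReal_nonneg (hgm0 _))
      (fun a => ?_) hs
    exact mul_le_mul_of_nonneg_left (max_le (neg_le_abs _) (abs_nonneg _))
      ENNReal.toReal_nonneg
  have e1 : ∀ b : β, ((p.map φ) b).toReal * g b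
      = ((p.map φ) b).toReal * gp b - ((p.map φ) b).toReal * gm b := by
    intro b; rw [hsplit b]; ring
  have e2 : ∀ a : α, (p a).toReal * g (φ a)
      = (p a).toReal * gp (φ a) - (p a).toReal * gm (φ a) := by
    intro a; rw [hsplit (φ a)]; ring
  rw [tsum_congr e1, tsum_congr e2,
    Summable.tsum_sub (map_summable_real_nonneg p φ gp hgp0 hsp) (map_summable_real_nonneg p φ gm hgm0 hsm),
    Summable.tsum_sub hsp hsm,
    map_tsum_real_nonneg p φ gp hgp0 hsp, map_tsum_real_nonneg p φ gm hgm0 hsm]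

lemma pois_rec (r : ℝ≥0) (n : ℕ) :
    ((n : ℝ) + 1) * poissonPMFReal r (n + 1) = r * poissonPMFReal r n := by
  simp only [poissonPMFReal, pow_succ, Nat.factorial_succ, Nat.cast_mul, Nat.cast_add,
    Nat.cast_one]
  have h1 : ((n : ℝ) + 1) ≠ 0 := by positivity
  have h2 : (n.factorial : ℝ) ≠ 0 := by positivity
  field_simp

lemma summable_pois (r : ℝ≥0) : Summable (poissonPMFReal r) :=
  (poissonPMFRealSum r).summable

lemma summable_pois_mul (r : ℝ≥0) :
    Summable (fun n : ℕ => (n : ℝ) * poissonPMFReal r n) := by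
  rw [← summable_nat_add_iff 1]
  have : (fun n : ℕ => ((n + 1 : ℕ) : ℝ) * poissonPMFReal r (n + 1))
      = fun n : ℕ => (r : ℝ) * poissonPMFReal r n := by
    funext n
    push_cast
    rw [pois_rec]
  rw [this]
  exact (summable_pois r).mul_left _

lemma summable_triple {f0 f1 f2 : ℕ → ℝ} (h0 : Summable f0) (h1 : Summable f1)
    (h2 : Summable f2) (n0 : ∀ n, 0 ≤ f0 n) (n1 : ∀ n, 0 ≤ f1 n) (n2 : ∀ n, 0 ≤ f2 n) :
    Summable fun z : ℕ × ℕ × ℕ => f0 z.1 * (f1 z.2.1 * f2 z.2.2) := by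
  have h12 : Summable fun y : ℕ × ℕ => f1 y.1 * f2 y.2 :=
    h1.mul_of_nonneg h2 n1 n2
  exact h0.mul_of_nonneg h12 n0 (fun y => mul_nonneg (n1 _) (n2 _))

/-- The real weight of the triple `(z0, z1, z2)`. -/
noncomputable def W3 (l0 l1 l2 : ℝ≥0) (z : ℕ × ℕ × ℕ) : ℝ :=
  poissonPMFReal l0 z.1 * (poissonPMFReal l1 z.2.1 * poissonPMFReal l2 z.2.2)

lemma W3_nonneg (l0 l1 l2 : ℝ≥0) (z : ℕ × ℕ × ℕ) : 0 ≤ W3 l0 l1 l2 z :=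
  mul_nonneg poissonPMFReal_nonneg (mul_nonneg poissonPMFReal_nonneg poissonPMFReal_nonneg)

lemma tri_toReal (l0 l1 l2 : ℝ≥0) (z : ℕ × ℕ × ℕ) :
    ((tri l0 l1 l2) z).toReal = W3 l0 l1 l2 z := by
  rw [tri_apply]
  have : ∀ (r : ℝ≥0) (n : ℕ), poissonPMF r n = ENNReal.ofReal (poissonPMFReal r n) :=
    fun r n => rfl
  rw [this, this, this, ENNReal.toReal_mul, ENNReal.toReal_mul,
    ENNReal.toReal_ofReal poissonPMFReal_nonneg, ENNReal.toReal_ofReal poissonPMFReal_nonneg,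
    ENNReal.toReal_ofReal poissonPMFReal_nonneg, W3]

lemma summable_W3 (l0 l1 l2 : ℝ≥0) : Summable (W3 l0 l1 l2) :=
  summable_triple (summable_pois l0) (summable_pois l1) (summable_pois l2)
    (fun _ => poissonPMFReal_nonneg) (fun _ => poissonPMFReal_nonneg)
    (fun _ => poissonPMFReal_nonneg)

lemma summable_W3_fst (l0 l1 l2 : ℝ≥0) :
    Summable fun z : ℕ × ℕ × ℕ => W3 l0 l1 l2 z * (z.2.1 : ℝ) := by
  have h := summable_triple (f1 := fun n : ℕ => (n : ℝ) * poissonPMFReal l1 n)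
    (summable_pois l0) (summable_pois_mul l1) (summable_pois l2)
    (fun _ => poissonPMFReal_nonneg)
    (fun n => mul_nonneg (Nat.cast_nonneg n) poissonPMFReal_nonneg)
    (fun _ => poissonPMFReal_nonneg)
  have : (fun z : ℕ × ℕ × ℕ => W3 l0 l1 l2 z * (z.2.1 : ℝ))
      = fun z : ℕ × ℕ × ℕ => poissonPMFReal l0 z.1 *
        (((z.2.1 : ℝ) * poissonPMFReal l1 z.2.1) * poissonPMFReal l2 z.2.2) := by
    funext z; simp only [W3]; ring
  rw [this]; exact h

lemma summable_W3_snd (l0 l1 l2 : ℝ≥0) :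
    Summable fun z : ℕ × ℕ × ℕ => W3 l0 l1 l2 z * (z.2.2 : ℝ) := by
  have h := summable_triple (f2 := fun n : ℕ => (n : ℝ) * poissonPMFReal l2 n)
    (summable_pois l0) (summable_pois l1) (summable_pois_mul l2)
    (fun _ => poissonPMFReal_nonneg)
    (fun _ => poissonPMFReal_nonneg)
    (fun n => mul_nonneg (Nat.cast_nonneg n) poissonPMFReal_nonneg)
  have : (fun z : ℕ × ℕ × ℕ => W3 l0 l1 l2 z * (z.2.2 : ℝ))
      = fun z : ℕ × ℕ × ℕ => poissonPMFReal l0 z.1 *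
        (poissonPMFReal l1 z.2.1 * ((z.2.2 : ℝ) * poissonPMFReal l2 z.2.2)) := by
    funext z; simp only [W3]; ring
  rw [this]; exact h

lemma pExp_repr (l0 l1 l2 : ℝ≥0) (g : ℕ × ℕ → ℝ)
    (hg : Summable fun z : ℕ × ℕ × ℕ => W3 l0 l1 l2 z * |g (φ3 z)|) :
    pExp (bpoi l0 l1 l2) g = ∑' z : ℕ × ℕ × ℕ, W3 l0 l1 l2 z * g (φ3 z) := by
  have hg' : Summable fun z : ℕ × ℕ × ℕ => ((tri l0 l1 l2) z).toReal * |g (φ3 z)| := by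
    have : (fun z : ℕ × ℕ × ℕ => ((tri l0 l1 l2) z).toReal * |g (φ3 z)|)
        = fun z => W3 l0 l1 l2 z * |g (φ3 z)| := funext fun z => by rw [tri_toReal]
    rw [this]; exact hg
  rw [pExp, bpoi_eq, map_tsum_real _ φ3 g hg']
  exact tsum_congr fun z => by rw [tri_toReal]

lemma stein1 (l0 l1 l2 : ℝ≥0) (f : ℕ × ℕ → ℝ) :
    ∑' z : ℕ × ℕ × ℕ, W3 l0 l1 l2 z * ((z.2.1 : ℝ) * f (φ3 z))
      = l1 * ∑' z : ℕ × ℕ × ℕ, W3 l0 l1 l2 z * f (z.1 + z.2.1 + 1, z.1 + z.2.2) := by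
  set G : ℕ × ℕ × ℕ → ℝ := fun z => W3 l0 l1 l2 z * ((z.2.1 : ℝ) * f (φ3 z)) with hG
  set i : ℕ × ℕ × ℕ → ℕ × ℕ × ℕ := fun z => (z.1, z.2.1 + 1, z.2.2) with hi
  have hinj : Function.Injective i := by
    intro a b h
    simp only [hi, Prod.ext_iff] at h ⊢
    exact ⟨h.1, by omega, h.2.2⟩
  have hsupp : Function.support G ⊆ Set.range i := by
    intro z hz
    rcases Nat.eq_zero_or_pos z.2.1 with h0 | h0
    · exfalso; apply hz; simp [hG, h0]
    · exact ⟨(z.1, z.2.1 - 1, z.2.2), by simp [hi, Prod.ext_iff]; omega⟩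
  rw [← hinj.tsum_eq hsupp, ← tsum_mul_left]
  refine tsum_congr fun z => ?_
  obtain ⟨a, b, c⟩ := z
  have h := pois_rec l1 b
  simp only [hG, hi, W3, φ3]
  push_cast
  have : a + (b + 1) = a + b + 1 := by ring
  rw [this]
  linear_combination (poissonPMFReal l0 a * poissonPMFReal l2 c * f (a + b + 1, a + c)) * h

lemma stein2 (l0 l1 l2 : ℝ≥0) (f : ℕ × ℕ → ℝ) :
    ∑' z : ℕ × ℕ × ℕ, W3 l0 l1 l2 z * ((z.2.2 : ℝ) * f (φ3 z))
      = l2 * ∑' z : ℕ × ℕ × ℕ, W3 l0 l1 l2 z * f (z.1 + z.2.1, z.1 + z.2.2 + 1) := by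
  set G : ℕ × ℕ × ℕ → ℝ := fun z => W3 l0 l1 l2 z * ((z.2.2 : ℝ) * f (φ3 z)) with hG
  set i : ℕ × ℕ × ℕ → ℕ × ℕ × ℕ := fun z => (z.1, z.2.1, z.2.2 + 1) with hi
  have hinj : Function.Injective i := by
    intro a b h
    simp only [hi, Prod.ext_iff] at h ⊢
    exact ⟨h.1, h.2.1, by omega⟩
  have hsupp : Function.support G ⊆ Set.range i := by
    intro z hz
    rcases Nat.eq_zero_or_pos z.2.2 with h0 | h0
    · exfalso; apply hz; simp [hG, h0]
    · exact ⟨(z.1, z.2.1, z.2.2 - 1), by simp [hi, Prod.ext_iff]; omega⟩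
  rw [← hinj.tsum_eq hsupp, ← tsum_mul_left]
  refine tsum_congr fun z => ?_
  obtain ⟨a, b, c⟩ := z
  have h := pois_rec l2 c
  simp only [hG, hi, W3, φ3]
  push_cast
  have : a + (c + 1) = a + c + 1 := by ring
  rw [this]
  linear_combination (poissonPMFReal l0 a * poissonPMFReal l1 b * f (a + b, a + c + 1)) * h

end SteinBpoiAux

open SteinBpoiAux

theorem stein_bpoi_difference (l0 l1 l2 : ℝ≥0) (h0 : 0 < l0) (h1 : 0 < l1) (h2 : 0 < l2)
    (f : ℕ × ℕ → ℝ) (hf : ∃ C : ℝ, ∀ q : ℕ × ℕ, |f q| ≤ C) :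
    pExp (bpoi l0 l1 l2) (fun q => ((q.1 : ℝ) - (q.2 : ℝ)) * f q)
      = l1 * pExp (bpoi l0 l1 l2) (fun q => f (q.1 + 1, q.2))
        - l2 * pExp (bpoi l0 l1 l2) (fun q => f (q.1, q.2 + 1)) := by
  obtain ⟨C, hC⟩ := hf
  have hC0 : 0 ≤ C := le_trans (abs_nonneg _) (hC (0, 0))
  set W := W3 l0 l1 l2 with hW
  -- summability of the three integrands
  have hsA : Summable fun z : ℕ × ℕ × ℕ => W z * (z.2.1 : ℝ) * C :=
    (summable_W3_fst l0 l1 l2).mul_right C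
  have hsB : Summable fun z : ℕ × ℕ × ℕ => W z * (z.2.2 : ℝ) * C :=
    (summable_W3_snd l0 l1 l2).mul_right C
  have habsA : Summable fun z : ℕ × ℕ × ℕ => |W z * ((z.2.1 : ℝ) * f (φ3 z))| := by
    refine Summable.of_nonneg_of_le (fun z => abs_nonneg _) (fun z => ?_) hsA
    rw [abs_mul, abs_mul, abs_of_nonneg (W3_nonneg l0 l1 l2 z),
      abs_of_nonneg (Nat.cast_nonneg _), mul_assoc]
    exact mul_le_mul_of_nonneg_left
      (mul_le_mul_of_nonneg_left (hC _) (Nat.cast_nonneg _))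
      (W3_nonneg l0 l1 l2 z)
  have habsB : Summable fun z : ℕ × ℕ × ℕ => |W z * ((z.2.2 : ℝ) * f (φ3 z))| := by
    refine Summable.of_nonneg_of_le (fun z => abs_nonneg _) (fun z => ?_) hsB
    rw [abs_mul, abs_mul, abs_of_nonneg (W3_nonneg l0 l1 l2 z),
      abs_of_nonneg (Nat.cast_nonneg _), mul_assoc]
    exact mul_le_mul_of_nonneg_left
      (mul_le_mul_of_nonneg_left (hC _) (Nat.cast_nonneg _))
      (W3_nonneg l0 l1 l2 z)
  have hA : Summable fun z : ℕ × ℕ × ℕ => W z * ((z.2.1 : ℝ) * f (φ3 z)) :=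
    summable_abs_iff.mp habsA
  have hB : Summable fun z : ℕ × ℕ × ℕ => W z * ((z.2.2 : ℝ) * f (φ3 z)) :=
    summable_abs_iff.mp habsB
  -- representation of the left-hand side
  have hrepr1 : pExp (bpoi l0 l1 l2) (fun q => ((q.1 : ℝ) - (q.2 : ℝ)) * f q)
      = ∑' z : ℕ × ℕ × ℕ, W z * ((((φ3 z).1 : ℝ) - ((φ3 z).2 : ℝ)) * f (φ3 z)) := by
    refine pExp_repr l0 l1 l2 _ ?_
    refine Summable.of_nonneg_of_le
      (fun z => mul_nonneg (W3_nonneg l0 l1 l2 z) (abs_nonneg _)) (fun z => ?_)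
      (hsA.add hsB)
    have hle : |(((φ3 z).1 : ℝ) - ((φ3 z).2 : ℝ)) * f (φ3 z)|
        ≤ ((z.2.1 : ℝ) + (z.2.2 : ℝ)) * C := by
      rw [abs_mul]
      refine mul_le_mul ?_ (hC _) (abs_nonneg _) (by positivity)
      have hb : (0:ℝ) ≤ (z.2.1 : ℝ) := Nat.cast_nonneg _
      have hc : (0:ℝ) ≤ (z.2.2 : ℝ) := Nat.cast_nonneg _
      simp only [φ3]
      push_cast
      rw [abs_le]
      constructor <;> linarith
    refine le_trans (mul_le_mul_of_nonneg_left hle (W3_nonneg l0 l1 l2 z))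
      (le_of_eq (by ring))
  -- representations of the two right-hand terms
  have hsC : Summable fun z : ℕ × ℕ × ℕ => W z * C := (summable_W3 l0 l1 l2).mul_right C
  have hrepr2 : pExp (bpoi l0 l1 l2) (fun q => f (q.1 + 1, q.2))
      = ∑' z : ℕ × ℕ × ℕ, W z * f ((φ3 z).1 + 1, (φ3 z).2) := by
    refine pExp_repr l0 l1 l2 _ ?_
    refine Summable.of_nonneg_of_le
      (fun z => mul_nonneg (W3_nonneg l0 l1 l2 z) (abs_nonneg _)) (fun z => ?_) hsC
    exact mul_le_mul_of_nonneg_left (hC _) (W3_nonneg l0 l1 l2 z)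
  have hrepr3 : pExp (bpoi l0 l1 l2) (fun q => f (q.1, q.2 + 1))
      = ∑' z : ℕ × ℕ × ℕ, W z * f ((φ3 z).1, (φ3 z).2 + 1) := by
    refine pExp_repr l0 l1 l2 _ ?_
    refine Summable.of_nonneg_of_le
      (fun z => mul_nonneg (W3_nonneg l0 l1 l2 z) (abs_nonneg _)) (fun z => ?_) hsC
    exact mul_le_mul_of_nonneg_left (hC _) (W3_nonneg l0 l1 l2 z)
  rw [hrepr1, hrepr2, hrepr3]
  have hsplit : ∀ z : ℕ × ℕ × ℕ, W z * ((((φ3 z).1 : ℝ) - ((φ3 z).2 : ℝ)) * f (φ3 z))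
      = W z * ((z.2.1 : ℝ) * f (φ3 z)) - W z * ((z.2.2 : ℝ) * f (φ3 z)) := by
    intro z
    simp only [φ3]
    push_cast
    ring
  rw [tsum_congr hsplit, Summable.tsum_sub hA hB, stein1 l0 l1 l2 f, stein2 l0 l1 l2 f]
  simp only [hW, φ3]
end

section
/- Let N ∈ ℕ with N ≥ 1, let p00, p10, p01, p11 > 0 with p00 + p10 + p01 + p11 = 1, and let (X1, X2) follow the bivariate binomial distribution BVB with these parameters. Then for every function f : {0, 1, …, N} × {0, 1, …, N} → ℝ, one has p00 · E[X1 · f(X1, X2)] + p01 · E[X1 · f(X1, X2 + 1)] = p10 · E[(N − X1) · f(X1 + 1, X2)] + p11 · E[(N − X1) · f(X1 + 1, X2 + 1)]. -/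
open scoped NNReal ENNReal

/-- The distribution of the (componentwise) sum of `n` i.i.d. bivariate random
vectors, each with distribution `bern`.  For a bivariate Bernoulli `bern` with
probabilities `p00, p10, p01, p11`, `iidSum bern N` is the bivariate binomial
distribution `BVB(N; p00, p10, p01, p11)` of type I. -/
noncomputable def iidSum (bern : PMF (ℕ × ℕ)) : ℕ → PMF (ℕ × ℕ)
  | 0 => PMF.pure (0, 0)
  | n + 1 => (iidSum bern n).bind fun a => bern.map fun b => (a.1 + b.1, a.2 + b.2)

/-- The four-point support of a bivariate Bernoulli. -/
def S4 : Finset (ℕ × ℕ) := {(0,0),(1,0),(0,1),(1,1)}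

/-- The square `{0,…,n} × {0,…,n}`. -/
def Fn (n : ℕ) : Finset (ℕ × ℕ) := Finset.range (n+1) ×ˢ Finset.range (n+1)

/-- Finite-sum version of the expectation. -/
noncomputable def fE (μ : PMF (ℕ × ℕ)) (n : ℕ) (g : ℕ × ℕ → ℝ) : ℝ :=
  ∑ q ∈ Fn n, (μ q).toReal * g q

lemma bern_zero (p00 p10 p01 p11 : ℝ≥0) (hsum : p00 + p10 + p01 + p11 = 1)
    (bern : PMF (ℕ × ℕ))
    (hb00 : bern (0, 0) = (p00 : ℝ≥0∞)) (hb10 : bern (1, 0) = (p10 : ℝ≥0∞))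
    (hb01 : bern (0, 1) = (p01 : ℝ≥0∞)) (hb11 : bern (1, 1) = (p11 : ℝ≥0∞)) :
    ∀ b ∉ S4, bern b = 0 := by
  intro b hb
  have h0 : bern 0 = (p00 : ℝ≥0∞) := hb00
  have h1 : bern 1 = (p11 : ℝ≥0∞) := hb11
  have hS : ∑ x ∈ S4, bern x = 1 := by
    have h : ((p00 + p10 + p01 + p11 : ℝ≥0) : ℝ≥0∞) = 1 := by rw [hsum]; simp
    push_cast at h
    simp only [S4, Finset.sum_insert, Finset.mem_insert, Finset.mem_singleton,
      Finset.sum_singleton]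
    simp [h0, h1, hb10, hb01, Prod.ext_iff]
    rw [← h, hb00, hb11]; ring
  by_contra hne
  have hle : ∑ x ∈ insert b S4, bern x ≤ 1 := by
    rw [← PMF.tsum_coe bern]
    exact Summable.sum_le_tsum _ (fun _ _ => zero_le) ENNReal.summable
  rw [Finset.sum_insert hb, hS] at hle
  rw [add_comm] at hle
  exact absurd hle (not_le.mpr (ENNReal.lt_add_right ENNReal.one_ne_top hne))

lemma iid_zero (bern : PMF (ℕ × ℕ)) (hbz : ∀ b ∉ S4, bern b = 0) :
    ∀ n q, q ∉ Fn n → iidSum bern n q = 0 := by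
  intro n
  induction n with
  | zero =>
    intro q hq
    simp only [iidSum, PMF.pure_apply]
    rw [if_neg]
    rintro rfl
    simp [Fn] at hq
  | succ n ih =>
    intro q hq
    simp only [iidSum, PMF.bind_apply, PMF.map_apply]
    rw [ENNReal.tsum_eq_zero]
    intro a
    rcases eq_or_ne (iidSum bern n a) 0 with h | h
    · simp [h]
    · have ha : a ∈ Fn n := by by_contra hc; exact h (ih a hc)
      rw [ENNReal.tsum_eq_zero.mpr, mul_zero]
      intro b
      rcases eq_or_ne (bern b) 0 with h2 | h2
      · simp [h2]
      · have hbS : b ∈ S4 := by by_contra hc; exact h2 (hbz b hc)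
        rw [if_neg]
        rintro rfl
        simp only [Fn, Finset.mem_product, Finset.mem_range] at ha hq
        fin_cases hbS <;> simp_all <;> omega

lemma pExp_eq_fE (μ : PMF (ℕ × ℕ)) (n : ℕ) (hz : ∀ q ∉ Fn n, μ q = 0)
    (g : ℕ × ℕ → ℝ) : pExp μ g = fE μ n g :=
  tsum_eq_sum (fun q hq => by rw [hz q hq]; simp)

lemma iid_succ_apply (bern : PMF (ℕ × ℕ)) (hbz : ∀ b ∉ S4, bern b = 0) (n : ℕ)
    (q : ℕ × ℕ) :
    iidSum bern (n+1) q
      = ∑ a ∈ Fn n, ∑ b ∈ S4,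
          if q = (a.1 + b.1, a.2 + b.2) then iidSum bern n a * bern b else 0 := by
  simp only [iidSum, PMF.bind_apply, PMF.map_apply]
  rw [tsum_eq_sum (s := Fn n) (fun a ha => by rw [iid_zero bern hbz n a ha]; simp)]
  refine Finset.sum_congr rfl fun a _ => ?_
  rw [tsum_eq_sum (s := S4) (fun b hb => by rw [hbz b hb]; simp), Finset.mul_sum]
  refine Finset.sum_congr rfl fun b _ => ?_
  split_ifs <;> simp

lemma mem_Fn_add {n : ℕ} {a b : ℕ × ℕ} (ha : a ∈ Fn n) (hb : b ∈ S4) :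
    ((a.1 + b.1, a.2 + b.2) : ℕ × ℕ) ∈ Fn (n+1) := by
  simp only [Fn, Finset.mem_product, Finset.mem_range] at ha ⊢
  fin_cases hb <;> simp <;> omega

lemma fE_succ (bern : PMF (ℕ × ℕ)) (hbz : ∀ b ∉ S4, bern b = 0) (n : ℕ)
    (g : ℕ × ℕ → ℝ) :
    fE (iidSum bern (n+1)) (n+1) g
      = ∑ b ∈ S4, (bern b).toReal *
          fE (iidSum bern n) n (fun a => g (a.1 + b.1, a.2 + b.2)) := by
  unfold fE
  have key : ∀ q, ((iidSum bern (n+1)) q).toReal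
      = ∑ a ∈ Fn n, ∑ b ∈ S4,
          if q = (a.1 + b.1, a.2 + b.2) then
            ((iidSum bern n) a).toReal * (bern b).toReal else 0 := by
    intro q
    rw [iid_succ_apply bern hbz n q]
    rw [ENNReal.toReal_sum (fun a _ => ENNReal.sum_ne_top.mpr (fun b _ => by
      split_ifs <;> simp [ENNReal.mul_ne_top, PMF.apply_ne_top]))]
    refine Finset.sum_congr rfl fun a _ => ?_
    rw [ENNReal.toReal_sum (fun b _ => by
      split_ifs <;> simp [ENNReal.mul_ne_top, PMF.apply_ne_top])]
    refine Finset.sum_congr rfl fun b _ => ?_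
    split_ifs <;> simp [ENNReal.toReal_mul]
  calc ∑ q ∈ Fn (n+1), ((iidSum bern (n+1)) q).toReal * g q
      = ∑ q ∈ Fn (n+1), ∑ a ∈ Fn n, ∑ b ∈ S4,
          (if q = (a.1 + b.1, a.2 + b.2) then
            ((iidSum bern n) a).toReal * (bern b).toReal else 0) * g q := by
        refine Finset.sum_congr rfl fun q _ => ?_
        rw [key q, Finset.sum_mul]
        exact Finset.sum_congr rfl fun a _ => by rw [Finset.sum_mul]
    _ = ∑ a ∈ Fn n, ∑ b ∈ S4, ∑ q ∈ Fn (n+1),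
          (if q = (a.1 + b.1, a.2 + b.2) then
            ((iidSum bern n) a).toReal * (bern b).toReal * g q else 0) := by
        rw [Finset.sum_comm]
        refine Finset.sum_congr rfl fun a _ => ?_
        rw [Finset.sum_comm]
        refine Finset.sum_congr rfl fun b _ => Finset.sum_congr rfl fun q _ => ?_
        split_ifs <;> simp
    _ = ∑ a ∈ Fn n, ∑ b ∈ S4,
          ((iidSum bern n) a).toReal * (bern b).toReal * g (a.1 + b.1, a.2 + b.2) := by
        refine Finset.sum_congr rfl fun a ha => Finset.sum_congr rfl fun b hb => ?_
        rw [Finset.sum_ite_eq' (Fn (n+1)) _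
          (fun q => ((iidSum bern n) a).toReal * (bern b).toReal * g q),
          if_pos (mem_Fn_add ha hb)]
    _ = ∑ b ∈ S4, (bern b).toReal *
          ∑ a ∈ Fn n, ((iidSum bern n) a).toReal * g (a.1 + b.1, a.2 + b.2) := by
        rw [Finset.sum_comm]
        refine Finset.sum_congr rfl fun b _ => ?_
        rw [Finset.mul_sum]
        exact Finset.sum_congr rfl fun a _ => by ring

lemma sum_S4 (h : ℕ × ℕ → ℝ) :
    ∑ b ∈ S4, h b = h (0,0) + h (1,0) + h (0,1) + h (1,1) := by
  simp [S4, Finset.sum_insert, Prod.ext_iff]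
  ring

lemma fE_congr (μ : PMF (ℕ × ℕ)) (n : ℕ) {g g' : ℕ × ℕ → ℝ}
    (h : ∀ q, g q = g' q) : fE μ n g = fE μ n g' := by
  unfold fE; exact Finset.sum_congr rfl fun q _ => by rw [h q]

lemma fE_add (μ : PMF (ℕ × ℕ)) (n : ℕ) (g h : ℕ × ℕ → ℝ) :
    fE μ n (fun q => g q + h q) = fE μ n g + fE μ n h := by
  unfold fE
  rw [← Finset.sum_add_distrib]
  exact Finset.sum_congr rfl fun q _ => by ring

lemma fE_split_x1 (μ : PMF (ℕ × ℕ)) (n : ℕ) (h : ℕ × ℕ → ℝ) :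
    fE μ n (fun a => ((a.1 : ℝ) + 1) * h a)
      = fE μ n (fun a => (a.1 : ℝ) * h a) + fE μ n h := by
  rw [← fE_add]
  exact fE_congr μ n fun a => by ring

lemma fE_y_shift (μ : PMF (ℕ × ℕ)) (n m : ℕ) (h : ℕ × ℕ → ℝ) :
    fE μ n (fun a => ((m : ℝ) + 1 - ((a.1 : ℝ) + 1)) * h a)
      = fE μ n (fun a => ((m : ℝ) - (a.1 : ℝ)) * h a) :=
  fE_congr μ n fun a => by ring

lemma fE_y_split (μ : PMF (ℕ × ℕ)) (n m : ℕ) (h : ℕ × ℕ → ℝ) :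
    fE μ n (fun a => ((m : ℝ) + 1 - (a.1 : ℝ)) * h a)
      = fE μ n (fun a => ((m : ℝ) - (a.1 : ℝ)) * h a) + fE μ n h := by
  rw [← fE_add]
  exact fE_congr μ n fun a => by ring

lemma stein_fE (p00 p10 p01 p11 : ℝ≥0)
    (hsum : p00 + p10 + p01 + p11 = 1)
    (bern : PMF (ℕ × ℕ))
    (hb00 : bern (0, 0) = (p00 : ℝ≥0∞)) (hb10 : bern (1, 0) = (p10 : ℝ≥0∞))
    (hb01 : bern (0, 1) = (p01 : ℝ≥0∞)) (hb11 : bern (1, 1) = (p11 : ℝ≥0∞)) :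
    ∀ (n : ℕ) (f : ℕ × ℕ → ℝ),
    (p00 : ℝ) * fE (iidSum bern n) n (fun q => (q.1 : ℝ) * f q)
        + (p01 : ℝ) * fE (iidSum bern n) n (fun q => (q.1 : ℝ) * f (q.1, q.2 + 1))
      = (p10 : ℝ) * fE (iidSum bern n) n (fun q => ((n : ℝ) - (q.1 : ℝ)) * f (q.1 + 1, q.2))
        + (p11 : ℝ) * fE (iidSum bern n) n
            (fun q => ((n : ℝ) - (q.1 : ℝ)) * f (q.1 + 1, q.2 + 1)) := by
  have hbz := bern_zero p00 p10 p01 p11 hsum bern hb00 hb10 hb01 hb11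
  intro n
  induction n with
  | zero =>
    intro f
    simp [fE, Fn]
  | succ n ih =>
    intro f
    have ihf := ih f
    have ihf1 := ih (fun p => f (p.1 + 1, p.2))
    have ihf2 := ih (fun p => f (p.1, p.2 + 1))
    have ihf12 := ih (fun p => f (p.1 + 1, p.2 + 1))
    simp only [] at ihf ihf1 ihf2 ihf12
    simp only [fE_succ bern hbz n, sum_S4]
    simp only [hb00, hb10, hb01, hb11, ENNReal.coe_toReal, add_zero,
      Prod.mk.eta, Nat.cast_add, Nat.cast_one, fE_split_x1, fE_y_shift, fE_y_split]
    linear_combination (p00 : ℝ) * ihf + (p10 : ℝ) * ihf1 + (p01 : ℝ) * ihf2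
      + (p11 : ℝ) * ihf12

theorem stein_bvb_first (N : ℕ) (hN : 1 ≤ N) (p00 p10 p01 p11 : ℝ≥0)
    (h00 : 0 < p00) (h10 : 0 < p10) (h01 : 0 < p01) (h11 : 0 < p11)
    (hsum : p00 + p10 + p01 + p11 = 1)
    (bern : PMF (ℕ × ℕ))
    (hb00 : bern (0, 0) = (p00 : ℝ≥0∞)) (hb10 : bern (1, 0) = (p10 : ℝ≥0∞))
    (hb01 : bern (0, 1) = (p01 : ℝ≥0∞)) (hb11 : bern (1, 1) = (p11 : ℝ≥0∞))
    (f : ℕ × ℕ → ℝ) :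
    (p00 : ℝ) * pExp (iidSum bern N) (fun q => (q.1 : ℝ) * f q)
        + (p01 : ℝ) * pExp (iidSum bern N) (fun q => (q.1 : ℝ) * f (q.1, q.2 + 1))
      = (p10 : ℝ) * pExp (iidSum bern N) (fun q => ((N : ℝ) - (q.1 : ℝ)) * f (q.1 + 1, q.2))
        + (p11 : ℝ) * pExp (iidSum bern N)
            (fun q => ((N : ℝ) - (q.1 : ℝ)) * f (q.1 + 1, q.2 + 1)) := by
  have hbz := bern_zero p00 p10 p01 p11 hsum bern hb00 hb10 hb01 hb11
  have hz := iid_zero bern hbz N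
  simp only [pExp_eq_fE (iidSum bern N) N hz]
  exact stein_fE p00 p10 p01 p11 hsum bern hb00 hb10 hb01 hb11 N f
end

section
/- Let N ∈ ℕ with N ≥ 1, let p00, p10, p01, p11 > 0 with p00 + p10 + p01 + p11 = 1, and let (X1, X2) follow the bivariate binomial distribution BVB with these parameters. Then for every function f : {0, 1, …, N} × {0, 1, …, N} → ℝ, one has p00 · E[X2 · f(X1, X2)] + p10 · E[X2 · f(X1 + 1, X2)] = p01 · E[(N − X2) · f(X1, X2 + 1)] + p11 · E[(N − X2) · f(X1 + 1, X2 + 1)]. -/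
open scoped NNReal ENNReal

def Sfin : Finset (ℕ × ℕ) := {(0,0), (1,0), (0,1), (1,1)}

lemma bern_supp (p00 p10 p01 p11 : ℝ≥0) (hsum : p00 + p10 + p01 + p11 = 1)
    (bern : PMF (ℕ × ℕ))
    (hb00 : bern (0, 0) = (p00 : ℝ≥0∞)) (hb10 : bern (1, 0) = (p10 : ℝ≥0∞))
    (hb01 : bern (0, 1) = (p01 : ℝ≥0∞)) (hb11 : bern (1, 1) = (p11 : ℝ≥0∞)) :
    ∀ b ∉ Sfin, bern b = 0 := by
  intro q hq
  have hS : ∑ b ∈ Sfin, bern b = 1 := by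
    rw [show (1 : ℝ≥0∞) = ((p00 + p10 + p01 + p11 : ℝ≥0) : ℝ≥0∞) by rw [hsum]; simp]
    have : Sfin = {(0,0), (1,0), (0,1), (1,1)} := rfl
    rw [this]
    rw [show ((0,0) : ℕ × ℕ) = (0,0) from rfl]
    rw [Finset.sum_insert (by decide), Finset.sum_insert (by decide),
      Finset.sum_insert (by decide), Finset.sum_singleton, hb00, hb10, hb01, hb11]
    push_cast; ring
  have hle : ∑ b ∈ insert q Sfin, bern b ≤ 1 := by
    rw [← bern.tsum_coe]
    exact Summable.sum_le_tsum _ (fun _ _ => zero_le) ENNReal.summable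
  rw [Finset.sum_insert hq, hS] at hle
  have : bern q + 1 ≤ 0 + 1 := by simpa using hle
  simpa using (ENNReal.add_le_add_iff_right (by norm_num)).mp this

def Tfin (n : ℕ) : Finset (ℕ × ℕ) := Finset.range (n+1) ×ˢ Finset.range (n+1)

lemma mem_Tfin {n : ℕ} {q : ℕ × ℕ} : q ∈ Tfin n ↔ q.1 ≤ n ∧ q.2 ≤ n := by
  simp [Tfin, Nat.lt_succ_iff]

lemma Sfin_le {b : ℕ × ℕ} (hb : b ∈ Sfin) : b.1 ≤ 1 ∧ b.2 ≤ 1 := by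
  fin_cases hb <;> simp

lemma iidSum_supp (bern : PMF (ℕ × ℕ)) (hbs : ∀ b ∉ Sfin, bern b = 0) :
    ∀ n, ∀ q ∉ Tfin n, iidSum bern n q = 0 := by
  intro n
  induction n with
  | zero =>
    intro q hq
    have : q ≠ (0,0) := by rintro rfl; exact hq (by simp [Tfin])
    simpa [iidSum, PMF.pure_apply] using this
  | succ n ih =>
    intro q hq
    show (iidSum bern n).bind _ q = 0
    rw [PMF.bind_apply]
    refine ENNReal.tsum_eq_zero.mpr fun a => ?_
    by_cases ha : a ∈ Tfin n
    · rw [PMF.map_apply]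
      refine mul_eq_zero_of_right _ (ENNReal.tsum_eq_zero.mpr fun b => ?_)
      by_cases hb : b ∈ Sfin
      · have h1 : (a.1 + b.1, a.2 + b.2) ∈ Tfin (n+1) := by
          have := mem_Tfin.mp ha
          have := Sfin_le hb
          exact mem_Tfin.mpr ⟨by omega, by omega⟩
        have : q ≠ (a.1 + b.1, a.2 + b.2) := by rintro rfl; exact hq h1
        simp [this]
      · simp [hbs b hb]
    · simp [ih a ha]

lemma pExp_finsum {p : PMF (ℕ × ℕ)} {s : Finset (ℕ × ℕ)} (h : ∀ q ∉ s, p q = 0)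
    (g : ℕ × ℕ → ℝ) : pExp p g = ∑ q ∈ s, (p q).toReal * g q :=
  tsum_eq_sum (fun q hq => by rw [h q hq]; simp)

lemma step (bern : PMF (ℕ × ℕ)) (hbs : ∀ b ∉ Sfin, bern b = 0) (n : ℕ) (g : ℕ × ℕ → ℝ) :
    pExp (iidSum bern (n+1)) g
      = ∑ b ∈ Sfin, (bern b).toReal * pExp (iidSum bern n) (fun a => g (a.1+b.1, a.2+b.2)) := by
  have hsupp := iidSum_supp bern hbs
  have hpt : ∀ q, iidSum bern (n+1) q
      = ∑ a ∈ Tfin n, ∑ b ∈ Sfin,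
          iidSum bern n a * (if q = (a.1+b.1, a.2+b.2) then bern b else 0) := by
    intro q
    show (iidSum bern n).bind _ q = _
    rw [PMF.bind_apply, tsum_eq_sum (s := Tfin n) (fun a ha => by simp [hsupp n a ha])]
    refine Finset.sum_congr rfl fun a _ => ?_
    rw [PMF.map_apply, tsum_eq_sum (s := Sfin) (fun b hb => by simp [hbs b hb]), Finset.mul_sum]
    exact Finset.sum_congr rfl fun b _ => by congr!
  rw [pExp_finsum (hsupp (n+1)) g]
  have h1 : ∀ q ∈ Tfin (n+1), (iidSum bern (n+1) q).toReal * g q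
      = ∑ b ∈ Sfin, ∑ a ∈ Tfin n,
          (if q = (a.1+b.1, a.2+b.2) then (iidSum bern n a).toReal * (bern b).toReal * g q
           else 0) := by
    intro q _
    rw [hpt q, Finset.sum_comm, ENNReal.toReal_sum (fun a _ => ENNReal.sum_ne_top.mpr fun b _ =>
      ENNReal.mul_ne_top (PMF.apply_ne_top _ _) (by split <;> simp [PMF.apply_ne_top]))]
    rw [Finset.sum_mul]
    refine Finset.sum_congr rfl fun a _ => ?_
    rw [ENNReal.toReal_sum (fun b _ => by
      refine ENNReal.mul_ne_top (PMF.apply_ne_top _ _) ?_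
      split <;> simp [PMF.apply_ne_top]), Finset.sum_mul]
    refine Finset.sum_congr rfl fun b _ => ?_
    split_ifs with h <;> simp [ENNReal.toReal_mul] <;> ring
  rw [Finset.sum_congr rfl h1, Finset.sum_comm]
  refine Finset.sum_congr rfl fun b hb => ?_
  rw [Finset.sum_comm, pExp_finsum (hsupp n), Finset.mul_sum]
  refine Finset.sum_congr rfl fun a ha => ?_
  rw [Finset.sum_ite_eq' (Tfin (n+1)) (a.1 + b.1, a.2 + b.2)
    (fun q => (iidSum bern n a).toReal * (bern b).toReal * g q)]
  have hmem : (a.1 + b.1, a.2 + b.2) ∈ Tfin (n+1) := by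
    have := mem_Tfin.mp ha
    have := Sfin_le hb
    exact mem_Tfin.mpr ⟨by omega, by omega⟩
  rw [if_pos hmem]
  ring

lemma pExp_pure (h : ℕ × ℕ → ℝ) : pExp (PMF.pure ((0,0) : ℕ × ℕ)) h = h (0,0) := by
  rw [pExp_finsum (s := {(0,0)}) (fun q hq => by
    rw [PMF.pure_apply, if_neg (by simpa using hq)]), Finset.sum_singleton]
  simp [PMF.pure_apply]

lemma pExp_split {p : PMF (ℕ × ℕ)} {s : Finset (ℕ × ℕ)} (h : ∀ q ∉ s, p q = 0)
    (h1 h2 : ℕ × ℕ → ℝ) :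
    pExp p (fun q => h1 q + h2 q) = pExp p h1 + pExp p h2 := by
  rw [pExp_finsum h, pExp_finsum h, pExp_finsum h, ← Finset.sum_add_distrib]
  exact Finset.sum_congr rfl fun _ _ => by ring

section
variable (p00 p10 p01 p11 : ℝ≥0) (bern : PMF (ℕ × ℕ))
  (hbs : ∀ b ∉ Sfin, bern b = 0)
  (hb00 : bern (0, 0) = (p00 : ℝ≥0∞)) (hb10 : bern (1, 0) = (p10 : ℝ≥0∞))
  (hb01 : bern (0, 1) = (p01 : ℝ≥0∞)) (hb11 : bern (1, 1) = (p11 : ℝ≥0∞))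

include hbs hb00 hb10 hb01 hb11

lemma step4 (n : ℕ) (w : ℕ × ℕ → ℝ) :
    pExp (iidSum bern (n+1)) w
      = (p00 : ℝ) * pExp (iidSum bern n) (fun a => w a)
        + (p10 : ℝ) * pExp (iidSum bern n) (fun a => w (a.1+1, a.2))
        + (p01 : ℝ) * pExp (iidSum bern n) (fun a => w (a.1, a.2+1))
        + (p11 : ℝ) * pExp (iidSum bern n) (fun a => w (a.1+1, a.2+1)) := by
  rw [step bern hbs n w]
  rw [show Sfin = {(0,0), (1,0), (0,1), (1,1)} from rfl]
  rw [Finset.sum_insert (by decide), Finset.sum_insert (by decide),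
    Finset.sum_insert (by decide), Finset.sum_singleton, hb00, hb10, hb01, hb11]
  simp only [ENNReal.coe_toReal, add_zero, Prod.mk.eta]
  ring

lemma momC (n : ℕ) (g : ℕ × ℕ → ℝ) :
    pExp (iidSum bern (n+1)) (fun q => (q.2 : ℝ) * g q)
      = ((n : ℝ) + 1) * ((p01 : ℝ) * pExp (iidSum bern n) (fun a => g (a.1, a.2+1))
          + (p11 : ℝ) * pExp (iidSum bern n) (fun a => g (a.1+1, a.2+1))) := by
  induction n generalizing g with
  | zero =>
      rw [step4 p00 p10 p01 p11 bern hbs hb00 hb10 hb01 hb11 0]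
      simp only [show iidSum bern 0 = PMF.pure (0,0) from rfl, pExp_pure]
      norm_num
  | succ n ih =>
      rw [step4 p00 p10 p01 p11 bern hbs hb00 hb10 hb01 hb11 (n+1)
        (fun q => (q.2 : ℝ) * g q)]
      beta_reduce
      push_cast
      rw [show (fun a : ℕ × ℕ => ((a.2:ℝ)+1) * g (a.1, a.2+1))
            = fun a => (a.2:ℝ) * g (a.1, a.2+1) + g (a.1, a.2+1) from funext fun a => by ring]
      rw [show (fun a : ℕ × ℕ => ((a.2:ℝ)+1) * g (a.1+1, a.2+1))
            = fun a => (a.2:ℝ) * g (a.1+1, a.2+1) + g (a.1+1, a.2+1) from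
          funext fun a => by ring]
      rw [pExp_split (iidSum_supp bern hbs (n+1)) _ _,
        pExp_split (iidSum_supp bern hbs (n+1)) _ _]
      rw [ih g, ih (fun a => g (a.1+1, a.2)), ih (fun a => g (a.1, a.2+1)),
        ih (fun a => g (a.1+1, a.2+1))]
      rw [step4 p00 p10 p01 p11 bern hbs hb00 hb10 hb01 hb11 n (fun a => g (a.1, a.2+1)),
        step4 p00 p10 p01 p11 bern hbs hb00 hb10 hb01 hb11 n (fun a => g (a.1+1, a.2+1))]
      beta_reduce
      push_cast
      ring

lemma momD (n : ℕ) (g : ℕ × ℕ → ℝ) :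
    pExp (iidSum bern (n+1)) (fun q => ((n : ℝ) + 1 - (q.2 : ℝ)) * g q)
      = ((n : ℝ) + 1) * ((p00 : ℝ) * pExp (iidSum bern n) (fun a => g a)
          + (p10 : ℝ) * pExp (iidSum bern n) (fun a => g (a.1+1, a.2))) := by
  induction n generalizing g with
  | zero =>
      rw [step4 p00 p10 p01 p11 bern hbs hb00 hb10 hb01 hb11 0]
      simp only [show iidSum bern 0 = PMF.pure (0,0) from rfl, pExp_pure]
      norm_num
  | succ n ih =>
      push_cast
      rw [step4 p00 p10 p01 p11 bern hbs hb00 hb10 hb01 hb11 (n+1)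
        (fun q => ((n : ℝ) + 1 + 1 - (q.2 : ℝ)) * g q)]
      beta_reduce
      push_cast
      rw [show (fun a : ℕ × ℕ => ((n:ℝ) + 1 + 1 - (a.2:ℝ)) * g a)
            = fun a => ((n:ℝ) + 1 - (a.2:ℝ)) * g a + g a from funext fun a => by ring]
      rw [show (fun a : ℕ × ℕ => ((n:ℝ) + 1 + 1 - (a.2:ℝ)) * g (a.1+1, a.2))
            = fun a => ((n:ℝ) + 1 - (a.2:ℝ)) * g (a.1+1, a.2) + g (a.1+1, a.2) from
          funext fun a => by ring]
      rw [show (fun a : ℕ × ℕ => ((n:ℝ) + 1 + 1 - ((a.2:ℝ) + 1)) * g (a.1, a.2+1))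
            = fun a => ((n:ℝ) + 1 - (a.2:ℝ)) * g (a.1, a.2+1) from funext fun a => by ring]
      rw [show (fun a : ℕ × ℕ => ((n:ℝ) + 1 + 1 - ((a.2:ℝ) + 1)) * g (a.1+1, a.2+1))
            = fun a => ((n:ℝ) + 1 - (a.2:ℝ)) * g (a.1+1, a.2+1) from funext fun a => by ring]
      rw [pExp_split (iidSum_supp bern hbs (n+1)) _ _,
        pExp_split (iidSum_supp bern hbs (n+1)) _ _]
      rw [ih g, ih (fun a => g (a.1+1, a.2)), ih (fun a => g (a.1, a.2+1)),
        ih (fun a => g (a.1+1, a.2+1))]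
      rw [show (fun q : ℕ × ℕ => g q) = g from rfl]
      rw [step4 p00 p10 p01 p11 bern hbs hb00 hb10 hb01 hb11 n g,
        step4 p00 p10 p01 p11 bern hbs hb00 hb10 hb01 hb11 n (fun a => g (a.1+1, a.2))]
      beta_reduce
      push_cast
      ring

end

theorem stein_bvb_second (N : ℕ) (hN : 1 ≤ N) (p00 p10 p01 p11 : ℝ≥0)
    (h00 : 0 < p00) (h10 : 0 < p10) (h01 : 0 < p01) (h11 : 0 < p11)
    (hsum : p00 + p10 + p01 + p11 = 1)
    (bern : PMF (ℕ × ℕ))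
    (hb00 : bern (0, 0) = (p00 : ℝ≥0∞)) (hb10 : bern (1, 0) = (p10 : ℝ≥0∞))
    (hb01 : bern (0, 1) = (p01 : ℝ≥0∞)) (hb11 : bern (1, 1) = (p11 : ℝ≥0∞))
    (f : ℕ × ℕ → ℝ) :
    (p00 : ℝ) * pExp (iidSum bern N) (fun q => (q.2 : ℝ) * f q)
        + (p10 : ℝ) * pExp (iidSum bern N) (fun q => (q.2 : ℝ) * f (q.1 + 1, q.2))
      = (p01 : ℝ) * pExp (iidSum bern N) (fun q => ((N : ℝ) - (q.2 : ℝ)) * f (q.1, q.2 + 1))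
        + (p11 : ℝ) * pExp (iidSum bern N)
            (fun q => ((N : ℝ) - (q.2 : ℝ)) * f (q.1 + 1, q.2 + 1)) := by
  obtain ⟨M, rfl⟩ : ∃ M, N = M + 1 := ⟨N - 1, (Nat.succ_pred_eq_of_pos hN).symm⟩
  have hbs := bern_supp p00 p10 p01 p11 hsum bern hb00 hb10 hb01 hb11
  push_cast
  rw [momC p00 p10 p01 p11 bern hbs hb00 hb10 hb01 hb11 M f,
    momC p00 p10 p01 p11 bern hbs hb00 hb10 hb01 hb11 M (fun q => f (q.1 + 1, q.2)),
    momD p00 p10 p01 p11 bern hbs hb00 hb10 hb01 hb11 M (fun q => f (q.1, q.2 + 1)),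
    momD p00 p10 p01 p11 bern hbs hb00 hb10 hb01 hb11 M (fun q => f (q.1 + 1, q.2 + 1))]
  beta_reduce
  ring
end

section
/- Let N ∈ ℕ with N ≥ 1, let p00, p10, p01, p11 > 0 with p00 + p10 + p01 + p11 = 1, and let (X1, X2) be a random vector taking values in {0, 1, …, N}². Suppose that for every function f : {0, 1, …, N} × {0, 1, …, N} → ℝ both identities hold: p00 · E[X1 · f(X1, X2)] + p01 · E[X1 · f(X1, X2 + 1)] = p10 · E[(N − X1) · f(X1 + 1, X2)] + p11 · E[(N − X1) · f(X1 + 1, X2 + 1)] and p00 · E[X2 · f(X1, X2)] + p10 · E[X2 · f(X1 + 1, X2)] = p01 · E[(N − X2) · f(X1, X2 + 1)] + p11 · E[(N − X2) · f(X1 + 1, X2 + 1)]. Then (X1, X2) follows the bivariate binomial distribution BVB with these parameters; equivalently, its joint probability generating function satisfies E[s^{X1} t^{X2}] = (p00 + p10·s + p01·t + p11·s·t)^N for all s, t with |s|, |t| ≤ 1. -/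
open scoped NNReal ENNReal

/-!
Testing the two Stein identities against indicator functions turns them into a linear recurrence
for the point masses `a (i, j) = P(X = (i, j))`. Since `p00 ≠ 0`, the recurrence determines `a`
from `a (0, 0)`, so its solutions form a line. The coefficients of
`(p00 + p10 s + p01 t + p11 s t) ^ N = (A + B s) ^ N`, with `A, B` linear in `t`, satisfy the same
recurrence, read off by comparing coefficients in `(A + B s) ∂ₛ (A + B s) ^ N = N B (A + B s) ^ N`.
Both sequences have total mass one, so they coincide.
-/

open Polynomial

namespace Polynomial

variable {R : Type*}

theorem coeff_X_mul_derivative [Semiring R] (f : R[X]) (i : ℕ) :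
    (X * derivative f).coeff i = f.coeff i * i := by
  cases i with
  | zero => simp
  | succ i => simp [coeff_X_mul, coeff_derivative]

theorem linear_mul_derivative_linear_pow [CommSemiring R] (a b : R) (n : ℕ) :
    (C a + C b * X) * derivative ((C a + C b * X) ^ n) = C (n * b) * (C a + C b * X) ^ n := by
  cases n with
  | zero => simp
  | succ n =>
    rw [derivative_pow_succ]
    simp only [derivative_add, derivative_C, derivative_C_mul_X, zero_add, Nat.cast_succ, C_mul]
    ring

theorem coeff_linear_pow_succ [CommRing R] (a b : R) (n i : ℕ) :
    a * (i + 1) * ((C a + C b * X) ^ n).coeff (i + 1)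
      = (n - i) * b * ((C a + C b * X) ^ n).coeff i := by
  have h := congrArg (coeff · i) (linear_mul_derivative_linear_pow a b n)
  simp only [add_mul, coeff_add, coeff_C_mul, mul_assoc, coeff_X_mul_derivative,
    coeff_derivative] at h
  linear_combination h

theorem natDegree_coeff_pow_le [Semiring R] {P : R[X][X]} {d : ℕ}
    (hP : ∀ i, (P.coeff i).natDegree ≤ d) (n i : ℕ) : ((P ^ n).coeff i).natDegree ≤ n * d := by
  induction n generalizing i with
  | zero => rcases i with _ | i <;> simp [coeff_one]
  | succ n ih =>
    rw [pow_succ, coeff_mul, add_one_mul]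
    exact natDegree_sum_le_of_forall_le _ _ fun x _ =>
      natDegree_mul_le.trans (add_le_add (ih x.1) (hP x.2))

theorem hasSum_coeff_coeff_mul_pow [CommSemiring R] [TopologicalSpace R] {P : R[X][X]}
    {n : ℕ} (hP : P.natDegree ≤ n) (hPi : ∀ i, (P.coeff i).natDegree ≤ n) (s t : R) :
    HasSum (fun q : ℕ × ℕ => (P.coeff q.1).coeff q.2 * s ^ q.1 * t ^ q.2) (P.evalEval t s) := by
  have hbox : ∀ q ∉ Finset.range (n + 1) ×ˢ Finset.range (n + 1),
      (P.coeff q.1).coeff q.2 * s ^ q.1 * t ^ q.2 = 0 := by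
    rintro ⟨i, j⟩ hq
    rcases Nat.lt_or_ge n i with hi | hi
    · simp [coeff_eq_zero_of_natDegree_lt (hP.trans_lt hi)]
    · have hj : n < j := by simp_all
      simp [coeff_eq_zero_of_natDegree_lt ((hPi i).trans_lt hj)]
  suffices P.evalEval t s = ∑ q ∈ Finset.range (n + 1) ×ˢ Finset.range (n + 1),
      (P.coeff q.1).coeff q.2 * s ^ q.1 * t ^ q.2 from this ▸ hasSum_sum_of_ne_finset_zero hbox
  rw [Finset.sum_product, evalEval, eval_eq_sum_range' (Nat.lt_succ_of_le hP), eval_finsetSum]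
  refine Finset.sum_congr rfl fun i _ => ?_
  rw [eval_mul, eval_pow, eval_C, eval_eq_sum_range' (Nat.lt_succ_of_le (hPi i)),
    Finset.sum_mul]
  exact Finset.sum_congr rfl fun j _ => by ring

end Polynomial

structure IsBVBRecurrence {R : Type*} [CommRing R] (N : ℕ) (w x y z : R) (a : ℕ × ℕ → R) :
    Prop where
  zero_succ : ∀ j : ℕ, w * (j + 1) * a (0, j + 1) = (N - j) * y * a (0, j)
  succ_zero : ∀ i : ℕ, w * (i + 1) * a (i + 1, 0) = (N - i) * x * a (i, 0)
  succ_succ : ∀ i j : ℕ, w * (i + 1) * a (i + 1, j + 1) + y * (i + 1) * a (i + 1, j)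
    = (N - i) * (x * a (i, j + 1) + z * a (i, j))

namespace IsBVBRecurrence

section CommRing

variable {R : Type*} [CommRing R] {N : ℕ} {w x y z : R} {a b : ℕ × ℕ → R}

theorem sub (ha : IsBVBRecurrence N w x y z a) (hb : IsBVBRecurrence N w x y z b) :
    IsBVBRecurrence N w x y z (a - b) where
  zero_succ j := by simp only [Pi.sub_apply]; linear_combination ha.zero_succ j - hb.zero_succ j
  succ_zero i := by simp only [Pi.sub_apply]; linear_combination ha.succ_zero i - hb.succ_zero i
  succ_succ i j := by
    simp only [Pi.sub_apply]; linear_combination ha.succ_succ i j - hb.succ_succ i j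

theorem const_smul (ha : IsBVBRecurrence N w x y z a) (c : R) :
    IsBVBRecurrence N w x y z (c • a) where
  zero_succ j := by simp only [Pi.smul_apply, smul_eq_mul]; linear_combination c * ha.zero_succ j
  succ_zero i := by simp only [Pi.smul_apply, smul_eq_mul]; linear_combination c * ha.succ_zero i
  succ_succ i j := by
    simp only [Pi.smul_apply, smul_eq_mul]; linear_combination c * ha.succ_succ i j

end CommRing

variable {K : Type*} [Field K] [CharZero K] {N : ℕ} {w x y z : K} {a b : ℕ × ℕ → K}

theorem eq_zero (hw : w ≠ 0) (ha : IsBVBRecurrence N w x y z a) (h0 : a (0, 0) = 0) : a = 0 := by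
  have hcancel (k : ℕ) : w * ((k : K) + 1) ≠ 0 := mul_ne_zero hw (Nat.cast_add_one_ne_zero k)
  suffices ∀ i j, a (i, j) = 0 from funext fun q => this q.1 q.2
  intro i j
  induction i generalizing j with
  | zero =>
    induction j with
    | zero => exact h0
    | succ j ih =>
      refine mul_left_cancel₀ (hcancel j) ?_
      linear_combination ha.zero_succ j + (N - j) * y * ih
  | succ i ih =>
    induction j with
    | zero =>
      refine mul_left_cancel₀ (hcancel i) ?_
      linear_combination ha.succ_zero i + (N - i) * x * ih 0
    | succ j ihj =>
      refine mul_left_cancel₀ (hcancel i) ?_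
      linear_combination ha.succ_succ i j - y * (i + 1) * ihj + (N - i) * x * ih (j + 1)
        + (N - i) * z * ih j

theorem smul_eq_smul (hw : w ≠ 0) (ha : IsBVBRecurrence N w x y z a)
    (hb : IsBVBRecurrence N w x y z b) : b (0, 0) • a = a (0, 0) • b :=
  sub_eq_zero.1 <| ((ha.const_smul _).sub (hb.const_smul _)).eq_zero hw <| by simp [mul_comm]

theorem eq_of_hasSum [TopologicalSpace K] [IsTopologicalRing K] [T2Space K] (hw : w ≠ 0)
    (ha : IsBVBRecurrence N w x y z a) (hb : IsBVBRecurrence N w x y z b) {σ : K}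
    (hσ : σ ≠ 0) (has : HasSum a σ) (hbs : HasSum b σ) : a = b := by
  have hsmul := ha.smul_eq_smul hw hb
  have hb00 : b (0, 0) ≠ 0 := fun h => hσ <| hbs.unique <| by
    rw [hb.eq_zero hw h]; exact hasSum_zero
  have h00 : b (0, 0) = a (0, 0) := by
    have h : HasSum (b (0, 0) • a) (b (0, 0) • σ) := has.const_smul _
    rw [hsmul] at h
    have h' := h.unique (hbs.const_smul (a (0, 0)))
    rw [smul_eq_mul, smul_eq_mul] at h'
    exact mul_right_cancel₀ hσ h'
  rw [h00] at hsmul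
  exact smul_right_injective _ (h00 ▸ hb00) hsmul

end IsBVBRecurrence

section BVBCoeff

variable {R : Type*}

/-- `w + x s + y t + z s t`, with `s` the outer and `t` the inner variable. -/
noncomputable def bvbPoly [CommSemiring R] (w x y z : R) : R[X][X] :=
  C (C w + C y * X) + C (C x + C z * X) * X

noncomputable def bvbCoeff [CommSemiring R] (N : ℕ) (w x y z : R) (q : ℕ × ℕ) : R :=
  ((bvbPoly w x y z ^ N).coeff q.1).coeff q.2

theorem isBVBRecurrence_bvbCoeff [CommRing R] (N : ℕ) (w x y z : R) :
    IsBVBRecurrence N w x y z (bvbCoeff N w x y z) := by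
  have hrow (i : ℕ) : (C w + C y * X) * ((i : R[X]) + 1) * (bvbPoly w x y z ^ N).coeff (i + 1)
      = ((N : R[X]) - (i : R[X])) * (C x + C z * X) * (bvbPoly w x y z ^ N).coeff i :=
    coeff_linear_pow_succ (C w + C y * X) (C x + C z * X) N i
  simp only [← C_eq_natCast, ← C_1, ← C_add, ← C_sub, mul_add, add_mul, mul_assoc] at hrow
  have hcol : (bvbPoly w x y z ^ N).coeff 0 = (C w + C y * X) ^ N := by
    simp [coeff_zero_eq_eval_zero, bvbPoly]
  refine ⟨fun j => ?_, fun i => ?_, fun i j => ?_⟩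
  · simpa [bvbCoeff, hcol] using coeff_linear_pow_succ w y N j
  · have h := congrArg (coeff · 0) (hrow i)
    simp only [coeff_add, coeff_C_mul, coeff_X_mul_zero] at h
    simp only [bvbCoeff]
    linear_combination h
  · have h := congrArg (coeff · (j + 1)) (hrow i)
    simp only [coeff_add, coeff_C_mul, coeff_X_mul] at h
    simp only [bvbCoeff]
    linear_combination h

theorem hasSum_bvbCoeff_mul_pow [CommSemiring R] [TopologicalSpace R] (N : ℕ) (w x y z s t : R) :
    HasSum (fun q : ℕ × ℕ => bvbCoeff N w x y z q * s ^ q.1 * t ^ q.2)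
      ((w + x * s + y * t + z * s * t) ^ N) := by
  have hdeg : (bvbPoly w x y z).natDegree ≤ 1 := by
    rw [bvbPoly, natDegree_C_add]
    exact (natDegree_C_mul_le _ _).trans natDegree_X_le
  have hcoeff (i : ℕ) : ((bvbPoly w x y z).coeff i).natDegree ≤ 1 := by
    rcases i with _ | _ | i <;>
      simp [bvbPoly, coeff_C, coeff_X, (natDegree_C_mul_le _ _).trans natDegree_X_le]
  have h : HasSum (fun q : ℕ × ℕ => bvbCoeff N w x y z q * s ^ q.1 * t ^ q.2)
      ((bvbPoly w x y z).evalEval t s ^ N) := by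
    rw [← evalEval_pow]
    refine hasSum_coeff_coeff_mul_pow (n := N) ?_ (fun i => ?_) s t
    · simpa using natDegree_pow_le_of_le N hdeg
    · simpa using natDegree_coeff_pow_le hcoeff N i
  convert h using 2
  simp [bvbPoly, evalEval_C]
  ring

end BVBCoeff

theorem PMF.hasSum_toReal {α : Type*} (p : PMF α) : HasSum (fun a => (p a).toReal) 1 := by
  have h := ENNReal.hasSum_toReal (p.tsum_coe ▸ ENNReal.one_ne_top)
  rwa [← ENNReal.tsum_toReal_eq p.apply_ne_top, p.tsum_coe, ENNReal.toReal_one] at h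

section Stein

variable (p : PMF (ℕ × ℕ))

theorem pExp_mul_single_comp (g : ℕ × ℕ → ℝ) (e : ℕ × ℕ → ℕ × ℕ) (r : ℕ × ℕ)
    (he : ∀ q, e q = e r → q = r) :
    pExp p (fun q => g q * (Pi.single (e r) 1 : ℕ × ℕ → ℝ) (e q)) = (p r).toReal * g r := by
  rw [pExp, tsum_eq_single r fun q hq => by simp [mt (he q) hq]]
  simp

theorem pExp_mul_single_comp_of_forall_ne (g : ℕ × ℕ → ℝ) (e : ℕ × ℕ → ℕ × ℕ) (r : ℕ × ℕ)
    (h : ∀ q, e q ≠ r) : pExp p (fun q => g q * (Pi.single r 1 : ℕ × ℕ → ℝ) (e q)) = 0 := by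
  simp [pExp, h]

variable {p}

theorem isBVBRecurrence_of_stein {N : ℕ} {w x y z : ℝ}
    (hstein1 : ∀ f : ℕ × ℕ → ℝ,
      w * pExp p (fun q => (q.1 : ℝ) * f q) + y * pExp p (fun q => (q.1 : ℝ) * f (q.1, q.2 + 1))
        = x * pExp p (fun q => ((N : ℝ) - (q.1 : ℝ)) * f (q.1 + 1, q.2))
          + z * pExp p (fun q => ((N : ℝ) - (q.1 : ℝ)) * f (q.1 + 1, q.2 + 1)))
    (hstein2 : ∀ f : ℕ × ℕ → ℝ,
      w * pExp p (fun q => (q.2 : ℝ) * f q) + x * pExp p (fun q => (q.2 : ℝ) * f (q.1 + 1, q.2))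
        = y * pExp p (fun q => ((N : ℝ) - (q.2 : ℝ)) * f (q.1, q.2 + 1))
          + z * pExp p (fun q => ((N : ℝ) - (q.2 : ℝ)) * f (q.1 + 1, q.2 + 1))) :
    IsBVBRecurrence N w x y z (fun q => (p q).toReal) := by
  refine ⟨fun j => ?_, fun i => ?_, fun i j => ?_⟩
  · have h := hstein2 (Pi.single (0, j + 1) 1)
    rw [pExp_mul_single_comp p _ (fun q => q) (0, j + 1) fun _ => id,
      pExp_mul_single_comp_of_forall_ne p _ (fun q => (q.1 + 1, q.2)) _ (by simp),
      pExp_mul_single_comp p _ (fun q => (q.1, q.2 + 1)) (0, j) (by simp [Prod.ext_iff]),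
      pExp_mul_single_comp_of_forall_ne p _ (fun q => (q.1 + 1, q.2 + 1)) _ (by simp)] at h
    push_cast at h
    linear_combination h
  · have h := hstein1 (Pi.single (i + 1, 0) 1)
    rw [pExp_mul_single_comp p _ (fun q => q) (i + 1, 0) fun _ => id,
      pExp_mul_single_comp_of_forall_ne p _ (fun q => (q.1, q.2 + 1)) _ (by simp),
      pExp_mul_single_comp p _ (fun q => (q.1 + 1, q.2)) (i, 0) (by simp [Prod.ext_iff]),
      pExp_mul_single_comp_of_forall_ne p _ (fun q => (q.1 + 1, q.2 + 1)) _ (by simp)] at h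
    push_cast at h
    linear_combination h
  · have h := hstein1 (Pi.single (i + 1, j + 1) 1)
    rw [pExp_mul_single_comp p _ (fun q => q) (i + 1, j + 1) fun _ => id,
      pExp_mul_single_comp p _ (fun q => (q.1, q.2 + 1)) (i + 1, j) (by simp [Prod.ext_iff]),
      pExp_mul_single_comp p _ (fun q => (q.1 + 1, q.2)) (i, j + 1) (by simp [Prod.ext_iff]),
      pExp_mul_single_comp p _ (fun q => (q.1 + 1, q.2 + 1)) (i, j) (by simp [Prod.ext_iff])] at h
    push_cast at h
    linear_combination h

end Stein

theorem stein_bvb_converse_general (N : ℕ) (p00 p10 p01 p11 : ℝ≥0)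
    (h00 : 0 < p00)
    (hsum : p00 + p10 + p01 + p11 = 1)
    (p : PMF (ℕ × ℕ))
    (hstein1 : ∀ f : ℕ × ℕ → ℝ,
      (p00 : ℝ) * pExp p (fun q => (q.1 : ℝ) * f q)
          + (p01 : ℝ) * pExp p (fun q => (q.1 : ℝ) * f (q.1, q.2 + 1))
        = (p10 : ℝ) * pExp p (fun q => ((N : ℝ) - (q.1 : ℝ)) * f (q.1 + 1, q.2))
          + (p11 : ℝ) * pExp p (fun q => ((N : ℝ) - (q.1 : ℝ)) * f (q.1 + 1, q.2 + 1)))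
    (hstein2 : ∀ f : ℕ × ℕ → ℝ,
      (p00 : ℝ) * pExp p (fun q => (q.2 : ℝ) * f q)
          + (p10 : ℝ) * pExp p (fun q => (q.2 : ℝ) * f (q.1 + 1, q.2))
        = (p01 : ℝ) * pExp p (fun q => ((N : ℝ) - (q.2 : ℝ)) * f (q.1, q.2 + 1))
          + (p11 : ℝ) * pExp p (fun q => ((N : ℝ) - (q.2 : ℝ)) * f (q.1 + 1, q.2 + 1))) :
    ∀ s t : ℝ, |s| ≤ 1 → |t| ≤ 1 →
      (∑' q : ℕ × ℕ, (p q).toReal * s ^ q.1 * t ^ q.2)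
        = ((p00 : ℝ) + (p10 : ℝ) * s + (p01 : ℝ) * t + (p11 : ℝ) * s * t) ^ N := by
  intro s t _ _
  have hsum_real : (p00 : ℝ) + p10 + p01 + p11 = 1 := by exact_mod_cast hsum
  have hbvb_mass : HasSum (bvbCoeff N (p00 : ℝ) p10 p01 p11) 1 := by
    simpa [hsum_real] using hasSum_bvbCoeff_mul_pow N (p00 : ℝ) p10 p01 p11 1 1
  have hp : ∀ q, (p q).toReal = bvbCoeff N (p00 : ℝ) p10 p01 p11 q := congrFun <|
    (isBVBRecurrence_of_stein hstein1 hstein2).eq_of_hasSum (NNReal.coe_pos.2 h00).ne'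
      (isBVBRecurrence_bvbCoeff N _ _ _ _) one_ne_zero p.hasSum_toReal hbvb_mass
  simp only [hp]
  exact (hasSum_bvbCoeff_mul_pow N _ _ _ _ s t).tsum_eq

theorem stein_bvb_converse (N : ℕ) (hN : 1 ≤ N) (p00 p10 p01 p11 : ℝ≥0)
    (h00 : 0 < p00) (h10 : 0 < p10) (h01 : 0 < p01) (h11 : 0 < p11)
    (hsum : p00 + p10 + p01 + p11 = 1)
    (p : PMF (ℕ × ℕ))
    (hrange : ∀ q : ℕ × ℕ, p q ≠ 0 → q.1 ≤ N ∧ q.2 ≤ N)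
    (hstein1 : ∀ f : ℕ × ℕ → ℝ,
      (p00 : ℝ) * pExp p (fun q => (q.1 : ℝ) * f q)
          + (p01 : ℝ) * pExp p (fun q => (q.1 : ℝ) * f (q.1, q.2 + 1))
        = (p10 : ℝ) * pExp p (fun q => ((N : ℝ) - (q.1 : ℝ)) * f (q.1 + 1, q.2))
          + (p11 : ℝ) * pExp p (fun q => ((N : ℝ) - (q.1 : ℝ)) * f (q.1 + 1, q.2 + 1)))
    (hstein2 : ∀ f : ℕ × ℕ → ℝ,
      (p00 : ℝ) * pExp p (fun q => (q.2 : ℝ) * f q)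
          + (p10 : ℝ) * pExp p (fun q => (q.2 : ℝ) * f (q.1 + 1, q.2))
        = (p01 : ℝ) * pExp p (fun q => ((N : ℝ) - (q.2 : ℝ)) * f (q.1, q.2 + 1))
          + (p11 : ℝ) * pExp p (fun q => ((N : ℝ) - (q.2 : ℝ)) * f (q.1 + 1, q.2 + 1))) :
    ∀ s t : ℝ, |s| ≤ 1 → |t| ≤ 1 →
      (∑' q : ℕ × ℕ, (p q).toReal * s ^ q.1 * t ^ q.2)
        = ((p00 : ℝ) + (p10 : ℝ) * s + (p01 : ℝ) * t + (p11 : ℝ) * s * t) ^ N :=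
  stein_bvb_converse_general N p00 p10 p01 p11 h00 hsum p hstein1 hstein2
end

section
/- Let N ∈ ℕ with N ≥ 1, let p00, p10, p01, p11 > 0 with p00 + p10 + p01 + p11 = 1, and let p(x, y) denote the joint probability mass function of the bivariate binomial distribution BVB with these parameters, with the convention p(x, y) = 0 if x < 0 or y < 0. Then for all integers x, y ≥ 0: p00 · x · p(x, y) = −p01 · x · p(x, y − 1) + p10 · (N − x + 1) · p(x − 1, y) + p11 · (N − x + 1) · p(x − 1, y − 1), and p00 · y · p(x, y) = −p10 · y · p(x − 1, y) + p01 · (N − y + 1) · p(x, y − 1) + p11 · (N − y + 1) · p(x − 1, y − 1). -/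
open scoped NNReal ENNReal

/-!
With `L(s, t) = p00 + p10 s + p01 t + p11 s t`, the generating function of `BVB` is `G_N = L^N`,
so `L · ∂ₛ G_N = N (∂ₛ L) G_N`; comparing coefficients of `s^(x-1) t^y` gives the first identity,
and the second is its mirror image. On coefficient arrays over `ℤ × ℤ`, multiplying by `L` is
applying the four-point mask `shiftComb`, and `∂ₛ` amounts to multiplying the coefficient at
`(x, y)` by `x`. The identity then follows by induction on `N`: the commutator of multiplication
by `x` with the mask of `L` is the mask of `∂ₛ L`.
-/
namespace PMF

variable {α β : Type*}

theorem bind_map_add_apply {G : Type*} [AddGroup G] (μ : PMF G) (ν : PMF α) (g : α → G)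
    (z : G) : (μ.bind fun a => ν.map fun e => a + g e) z = ∑' e, ν e * μ (z - g e) := by
  simp only [bind_apply, map_apply, ← ENNReal.tsum_mul_left]
  rw [ENNReal.tsum_comm]
  refine tsum_congr fun e => ?_
  rw [tsum_eq_single (z - g e) fun a ha => by
    rw [if_neg fun h => ha (eq_sub_of_add_eq h.symm), mul_zero]]
  rw [if_pos (sub_add_cancel z (g e)).symm, mul_comm]

theorem map_bind_map_add {M N : Type*} [AddMonoid M] [AddMonoid N] (f : M →+ N)
    (μ ν : PMF M) :
    (μ.bind fun a => ν.map (a + ·)).map f = (μ.map f).bind fun b => ν.map fun e => b + f e := by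
  rw [map_bind, bind_map]
  congr 1
  funext a
  simp only [map_comp, Function.comp_def, map_add]

theorem map_apply_of_injective {f : α → β} (hf : f.Injective) (p : PMF α)
    (a : α) : p.map f (f a) = p a := by
  rw [map_apply, tsum_eq_single a fun a' ha' => if_neg fun h => ha' (hf h).symm, if_pos rfl]

theorem map_apply_of_notMem_range {f : α → β} (p : PMF α) {b : β}
    (hb : b ∉ Set.range f) : p.map f b = 0 := by
  rw [map_apply]
  exact ENNReal.tsum_eq_zero.mpr fun a => if_neg fun h => hb ⟨a, h.symm⟩

theorem support_subset_of_sum_eq_one (p : PMF α) {s : Finset α}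
    (hs : ∑ a ∈ s, p a = 1) : p.support ⊆ s :=
  (p.toOuterMeasure_apply_eq_one_iff _).mp (by rwa [toOuterMeasure_apply_finset])

end PMF

section ShiftComb

variable {R : Type*} [CommRing R]

def shiftComb (a b c d : R) (f : ℤ → ℤ → R) (x y : ℤ) : R :=
  a * f x y + b * f (x - 1) y + c * f x (y - 1) + d * f (x - 1) (y - 1)

theorem shiftComb_swap (a b c d : R) (f : ℤ → ℤ → R) (x y : ℤ) :
    shiftComb a b c d f x y = shiftComb a c b d (fun u v => f v u) y x := by
  simp only [shiftComb]
  ring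

theorem shiftComb_mul_fst_of_iterate {a b c d : R} {Q : ℕ → ℤ → ℤ → R}
    (hrec : ∀ n, Q (n + 1) = shiftComb a b c d (Q n)) (h0 : ∀ x y, x ≠ 0 → Q 0 x y = 0)
    (n : ℕ) (x y : ℤ) :
    shiftComb a b c d (fun u v => u * Q n u v) x y = n * shiftComb 0 b 0 d (Q n) x y := by
  induction n generalizing x y with
  | zero =>
    have hx : ∀ u v : ℤ, (u : R) * Q 0 u v = 0 := fun u v => by
      rcases eq_or_ne u 0 with rfl | hu <;> simp [*]
    have h10 := hx (x - 1) y
    have h11 := hx (x - 1) (y - 1)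
    push_cast at h10 h11
    simp [shiftComb, hx, h10, h11]
  | succ n ih =>
    have h00 := ih x y
    have h10 := ih (x - 1) y
    have h01 := ih x (y - 1)
    have h11 := ih (x - 1) (y - 1)
    simp only [shiftComb, hrec] at h00 h10 h01 h11 ⊢
    push_cast at h00 h10 h01 h11 ⊢
    linear_combination a * h00 + b * h10 + c * h01 + d * h11

theorem shiftComb_mul_snd_of_iterate {a b c d : R} {Q : ℕ → ℤ → ℤ → R}
    (hrec : ∀ n, Q (n + 1) = shiftComb a b c d (Q n)) (h0 : ∀ x y, y ≠ 0 → Q 0 x y = 0)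
    (n : ℕ) (x y : ℤ) :
    shiftComb a b c d (fun u v => v * Q n u v) x y = n * shiftComb 0 0 c d (Q n) x y := by
  rw [shiftComb_swap, shiftComb_swap 0]
  exact shiftComb_mul_fst_of_iterate (Q := fun n u v => Q n v u)
    (fun n => funext₂ fun u v => by rw [hrec, shiftComb_swap]) (fun u v hu => h0 v u hu) n y x

end ShiftComb

def natCastProd : ℕ × ℕ →+ ℤ × ℤ := (Nat.castAddMonoidHom ℤ).prodMap (Nat.castAddMonoidHom ℤ)

@[simp]
theorem natCastProd_apply (a : ℕ × ℕ) : natCastProd a = ((a.1 : ℤ), (a.2 : ℤ)) := rfl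

theorem natCastProd_injective : Function.Injective natCastProd :=
  Nat.cast_injective.prodMap Nat.cast_injective

noncomputable def iidSumExt (bern : PMF (ℕ × ℕ)) (n : ℕ) (x y : ℤ) : ℝ :=
  ((iidSum bern n).map natCastProd (x, y)).toReal

theorem iidSumExt_eq_ite (bern : PMF (ℕ × ℕ)) (n : ℕ) (x y : ℤ) :
    iidSumExt bern n x y =
      if 0 ≤ x ∧ 0 ≤ y then (iidSum bern n (x.toNat, y.toNat)).toReal else 0 := by
  split_ifs with h
  · have hxy : natCastProd (x.toNat, y.toNat) = (x, y) := by simp [h.1, h.2]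
    rw [iidSumExt, ← hxy, PMF.map_apply_of_injective natCastProd_injective]
  · rw [iidSumExt, PMF.map_apply_of_notMem_range, ENNReal.toReal_zero]
    rintro ⟨⟨a, b⟩, hab⟩
    simp only [natCastProd_apply, Prod.mk.injEq] at hab
    omega

theorem iidSumExt_zero_apply (bern : PMF (ℕ × ℕ)) (x y : ℤ) :
    iidSumExt bern 0 x y = if x = 0 ∧ y = 0 then 1 else 0 := by
  simp [iidSumExt, iidSum, PMF.pure_map, PMF.pure_apply, apply_ite ENNReal.toReal]

theorem iidSumExt_succ {bern : PMF (ℕ × ℕ)}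
    (hbern : bern.support ⊆ ↑({(0, 0), (1, 0), (0, 1), (1, 1)} : Finset (ℕ × ℕ))) (n : ℕ) :
    iidSumExt bern (n + 1) = shiftComb (bern (0, 0)).toReal (bern (1, 0)).toReal
      (bern (0, 1)).toReal (bern (1, 1)).toReal (iidSumExt bern n) := by
  funext x y
  have hstep : (iidSum bern (n + 1)).map natCastProd =
      ((iidSum bern n).map natCastProd).bind fun b => bern.map fun e => b + natCastProd e :=
    PMF.map_bind_map_add natCastProd (iidSum bern n) bern
  have hsupp : ∀ e ∉ ({(0, 0), (1, 0), (0, 1), (1, 1)} : Finset (ℕ × ℕ)),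
      bern e * (iidSum bern n).map natCastProd ((x, y) - natCastProd e) = 0 := fun e he => by
    rw [(bern.apply_eq_zero_iff e).mpr fun h => he (hbern h), zero_mul]
  rw [iidSumExt, hstep, PMF.bind_map_add_apply, tsum_eq_sum hsupp, ENNReal.toReal_sum
    fun e _ => ENNReal.mul_ne_top (PMF.apply_ne_top _ _) (PMF.apply_ne_top _ _)]
  simp [shiftComb, iidSumExt, ENNReal.toReal_mul, add_assoc]

theorem bvb_pmf_recursion_general (N : ℕ) (p00 p10 p01 p11 : ℝ≥0)
    (hsum : p00 + p10 + p01 + p11 = 1)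
    (bern : PMF (ℕ × ℕ))
    (hb00 : bern (0, 0) = (p00 : ℝ≥0∞)) (hb10 : bern (1, 0) = (p10 : ℝ≥0∞))
    (hb01 : bern (0, 1) = (p01 : ℝ≥0∞)) (hb11 : bern (1, 1) = (p11 : ℝ≥0∞))
    (pz : ℤ → ℤ → ℝ)
    (hpz : ∀ x y : ℤ, pz x y =
      if 0 ≤ x ∧ 0 ≤ y then ((iidSum bern N) (x.toNat, y.toNat)).toReal else 0) :
    ∀ x y : ℕ,
      ((p00 : ℝ) * (x : ℝ) * pz (x : ℤ) (y : ℤ)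
        = -(p01 : ℝ) * (x : ℝ) * pz (x : ℤ) ((y : ℤ) - 1)
          + (p10 : ℝ) * ((N : ℝ) - (x : ℝ) + 1) * pz ((x : ℤ) - 1) (y : ℤ)
          + (p11 : ℝ) * ((N : ℝ) - (x : ℝ) + 1) * pz ((x : ℤ) - 1) ((y : ℤ) - 1))
      ∧ ((p00 : ℝ) * (y : ℝ) * pz (x : ℤ) (y : ℤ)
        = -(p10 : ℝ) * (y : ℝ) * pz ((x : ℤ) - 1) (y : ℤ)
          + (p01 : ℝ) * ((N : ℝ) - (y : ℝ) + 1) * pz (x : ℤ) ((y : ℤ) - 1)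
          + (p11 : ℝ) * ((N : ℝ) - (y : ℝ) + 1) * pz ((x : ℤ) - 1) ((y : ℤ) - 1)) := by
  have hbern : bern.support ⊆ ↑({(0, 0), (1, 0), (0, 1), (1, 1)} : Finset (ℕ × ℕ)) :=
    bern.support_subset_of_sum_eq_one (by
      simp [hb00, hb10, hb01, hb11, ← ENNReal.coe_add, ← hsum, add_assoc])
  have hrec : ∀ n,
      iidSumExt bern (n + 1) = shiftComb (p00 : ℝ) p10 p01 p11 (iidSumExt bern n) := by
    simpa [hb00, hb10, hb01, hb11] using iidSumExt_succ hbern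
  obtain rfl : pz = iidSumExt bern N := funext₂ fun x y => by rw [hpz, iidSumExt_eq_ite]
  intro x y
  have hx := shiftComb_mul_fst_of_iterate hrec
    (fun u v hu => by simp [iidSumExt_zero_apply, hu]) N x y
  have hy := shiftComb_mul_snd_of_iterate hrec
    (fun u v hv => by simp [iidSumExt_zero_apply, hv]) N x y
  simp only [shiftComb] at hx hy
  push_cast at hx hy
  exact ⟨by linear_combination hx, by linear_combination hy⟩

theorem bvb_pmf_recursion (N : ℕ) (hN : 1 ≤ N) (p00 p10 p01 p11 : ℝ≥0)
    (h00 : 0 < p00) (h10 : 0 < p10) (h01 : 0 < p01) (h11 : 0 < p11)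
    (hsum : p00 + p10 + p01 + p11 = 1)
    (bern : PMF (ℕ × ℕ))
    (hb00 : bern (0, 0) = (p00 : ℝ≥0∞)) (hb10 : bern (1, 0) = (p10 : ℝ≥0∞))
    (hb01 : bern (0, 1) = (p01 : ℝ≥0∞)) (hb11 : bern (1, 1) = (p11 : ℝ≥0∞))
    (pz : ℤ → ℤ → ℝ)
    (hpz : ∀ x y : ℤ, pz x y =
      if 0 ≤ x ∧ 0 ≤ y then ((iidSum bern N) (x.toNat, y.toNat)).toReal else 0) :
    ∀ x y : ℕ,
      ((p00 : ℝ) * (x : ℝ) * pz (x : ℤ) (y : ℤ)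
        = -(p01 : ℝ) * (x : ℝ) * pz (x : ℤ) ((y : ℤ) - 1)
          + (p10 : ℝ) * ((N : ℝ) - (x : ℝ) + 1) * pz ((x : ℤ) - 1) (y : ℤ)
          + (p11 : ℝ) * ((N : ℝ) - (x : ℝ) + 1) * pz ((x : ℤ) - 1) ((y : ℤ) - 1))
      ∧ ((p00 : ℝ) * (y : ℝ) * pz (x : ℤ) (y : ℤ)
        = -(p10 : ℝ) * (y : ℝ) * pz ((x : ℤ) - 1) (y : ℤ)
          + (p01 : ℝ) * ((N : ℝ) - (y : ℝ) + 1) * pz (x : ℤ) ((y : ℤ) - 1)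
          + (p11 : ℝ) * ((N : ℝ) - (y : ℝ) + 1) * pz ((x : ℤ) - 1) ((y : ℤ) - 1)) :=
  bvb_pmf_recursion_general N p00 p10 p01 p11 hsum bern hb00 hb10 hb01 hb11 pz hpz
end

section
/- Let N ∈ ℕ with N ≥ 1, let p00, p10, p01, p11 > 0 with p00 + p10 + p01 + p11 = 1, set a1 = p10 + p11, a2 = p01 + p11, a = p11, and let (X1, X2) follow the bivariate binomial distribution BVB with these parameters. For integers r, s ≥ 0, let μ_(r,s) = E[(X1)_(r) · (X2)_(s)] denote the joint factorial moments, where x_(k) = x(x−1)⋯(x−k+1) is the falling factorial with x_(0) = 1. Then for all integers r ≥ 1 and s ≥ 1: μ_(r,s) = (N − r + 1)·a1·μ_(r−1,s) − s·a2·μ_(r,s−1) + (N − r + 1)·s·a·μ_(r−1,s−1). -/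
/-!
With `L(t, u) = 1 + a₁ t + a₂ u + a t u`, the factorial moment generating function
`E[(1 + t)^X₁ (1 + u)^X₂]` of `BVB(n)` is `Fₙ = Lⁿ`, and `μ_(r,s) = ∂ₜʳ ∂ᵤˢ F_N (0)`.
Applying `∂ₜ^(r-1) ∂ᵤˢ` at `0` to `L ∂ₜ F_N = N (a₁ + a u) F_N` gives the recursion. That identity
holds for every `n` because `Φₙ = L ∂ₜ Fₙ - n (a₁ + a u) Fₙ` satisfies `Φ₀ = 0` and
`Φₙ₊₁ = L Φₙ`. On derivatives at `0`, multiplication by `L` is the recurrence of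
`factMoment_iidSum_succ`.
-/

open scoped NNReal ENNReal

/-- The joint factorial moment `μ_(r,s) = E[(X1)_(r) (X2)_(s)]` of a distribution
on `ℕ × ℕ`, where `x_(k) = x (x-1) ⋯ (x-k+1)` is the falling factorial. -/
noncomputable def factMoment (p : PMF (ℕ × ℕ)) (r s : ℕ) : ℝ :=
  ∑' q : ℕ × ℕ, (p q).toReal * (q.1.descFactorial r : ℝ) * (q.2.descFactorial s : ℝ)

namespace Nat

theorem succ_descFactorial_eq_add (n k : ℕ) :
    (n + 1).descFactorial k = n.descFactorial k + k * n.descFactorial (k - 1) := by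
  rcases k with _ | k
  · simp
  rcases le_or_gt k n with hk | hk
  · rw [succ_descFactorial_succ, descFactorial_succ, add_tsub_cancel_right, ← Nat.add_mul]
    congr 1
    omega
  · rw [descFactorial_eq_zero_iff_lt.mpr (Nat.succ_lt_succ hk)]
    simp [descFactorial_eq_zero_iff_lt.mpr hk]

end Nat

namespace PMF

variable {α β : Type*}

theorem tsum_bind_mul (p : PMF α) (f : α → PMF β) (g : β → ℝ≥0∞) :
    ∑' b, p.bind f b * g b = ∑' a, p a * ∑' b, f a b * g b := by
  simp only [bind_apply, ← ENNReal.tsum_mul_right, ← ENNReal.tsum_mul_left, mul_assoc]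
  exact ENNReal.tsum_comm

theorem tsum_map_mul (p : PMF α) (h : α → β) (g : β → ℝ≥0∞) :
    ∑' b, p.map h b * g b = ∑' a, p a * g (h a) := by
  rw [map, tsum_bind_mul]
  simp [pure_apply]

theorem tsum_mul_eq_sum_of_sum_eq_one (p : PMF α) {s : Finset α} (hs : ∑ a ∈ s, p a = 1)
    (g : α → ℝ≥0∞) : ∑' a, p a * g a = ∑ a ∈ s, p a * g a := by
  classical
  refine tsum_eq_sum fun a ha => ?_
  have h : ∑ x ∈ insert a s, p x ≤ 1 := p.tsum_coe ▸ ENNReal.sum_le_tsum _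
  rw [Finset.sum_insert ha, hs] at h
  have hpa : p a ≤ 0 := ENNReal.le_of_add_le_add_right ENNReal.one_ne_top (by simpa using h)
  simp [nonpos_iff_eq_zero.mp hpa]

end PMF

section Recursion

variable {R : Type*} [CommRing R] (a₁ a₂ a : R)

/-- `∂ₜʳ ∂ᵤˢ Φₙ (0)` for `Φₙ = (1 + a₁ t + a₂ u + a t u) ∂ₜ Fₙ - n (a₁ + a u) Fₙ`, when
`m n r s = ∂ₜʳ ∂ᵤˢ Fₙ (0)`. -/
def momentDefect (m : ℕ → ℕ → ℕ → R) (n r s : ℕ) : R :=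
  m n (r + 1) s + r * a₁ * m n r s + s * a₂ * m n (r + 1) (s - 1)
    + r * s * a * m n r (s - 1) - n * a₁ * m n r s - n * s * a * m n r (s - 1)

variable {a₁ a₂ a} {m : ℕ → ℕ → ℕ → R}

theorem momentDefect_zero (h₀ : ∀ r s, m 0 r s = if r = 0 ∧ s = 0 then 1 else 0) (r s : ℕ) :
    momentDefect a₁ a₂ a m 0 r s = 0 := by
  rcases r with _ | r <;> simp [momentDefect, h₀]

theorem momentDefect_succ
    (hsucc : ∀ n r s, m (n + 1) r s = m n r s + r * a₁ * m n (r - 1) s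
      + s * a₂ * m n r (s - 1) + r * s * a * m n (r - 1) (s - 1)) (n r s : ℕ) :
    momentDefect a₁ a₂ a m (n + 1) r s = momentDefect a₁ a₂ a m n r s
      + r * a₁ * momentDefect a₁ a₂ a m n (r - 1) s
      + s * a₂ * momentDefect a₁ a₂ a m n r (s - 1)
      + r * s * a * momentDefect a₁ a₂ a m n (r - 1) (s - 1) := by
  rcases r with _ | r <;> rcases s with _ | s <;> simp [momentDefect, hsucc] <;> ring

theorem momentDefect_eq_zero (h₀ : ∀ r s, m 0 r s = if r = 0 ∧ s = 0 then 1 else 0)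
    (hsucc : ∀ n r s, m (n + 1) r s = m n r s + r * a₁ * m n (r - 1) s
      + s * a₂ * m n r (s - 1) + r * s * a * m n (r - 1) (s - 1)) (n r s : ℕ) :
    momentDefect a₁ a₂ a m n r s = 0 := by
  induction n generalizing r s with
  | zero => exact momentDefect_zero h₀ r s
  | succ n ih => simp [momentDefect_succ hsucc, ih]

end Recursion

def jointDescFactorial (r s : ℕ) (q : ℕ × ℕ) : ℕ :=
  q.1.descFactorial r * q.2.descFactorial s

theorem weighted_shift_jointDescFactorial {R : Type*} [CommSemiring R]
    {c₀₀ c₁₀ c₀₁ c₁₁ : R} (hc : c₀₀ + c₁₀ + c₀₁ + c₁₁ = 1) (x y r s : ℕ) :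
    c₀₀ * jointDescFactorial r s (x, y) + c₁₀ * jointDescFactorial r s (x + 1, y)
      + c₀₁ * jointDescFactorial r s (x, y + 1)
      + c₁₁ * jointDescFactorial r s (x + 1, y + 1)
      = jointDescFactorial r s (x, y)
        + r * (c₁₀ + c₁₁) * jointDescFactorial (r - 1) s (x, y)
        + s * (c₀₁ + c₁₁) * jointDescFactorial r (s - 1) (x, y)
        + r * s * c₁₁ * jointDescFactorial (r - 1) (s - 1) (x, y) := by
  conv_rhs => rw [← one_mul (jointDescFactorial r s (x, y) : R), ← hc]
  push_cast [jointDescFactorial, Nat.succ_descFactorial_eq_add]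
  ring

noncomputable def efactMoment (p : PMF (ℕ × ℕ)) (r s : ℕ) : ℝ≥0∞ :=
  ∑' q, p q * jointDescFactorial r s q

theorem factMoment_eq_toReal_efactMoment (p : PMF (ℕ × ℕ)) (r s : ℕ) :
    factMoment p r s = (efactMoment p r s).toReal := by
  rw [efactMoment, ENNReal.tsum_toReal_eq fun q => ENNReal.mul_ne_top (p.apply_ne_top q)
    (ENNReal.natCast_ne_top _)]
  simp [factMoment, jointDescFactorial, mul_assoc]

theorem efactMoment_pure (x : ℕ × ℕ) (r s : ℕ) :
    efactMoment (PMF.pure x) r s = jointDescFactorial r s x := by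
  simp [efactMoment, PMF.pure_apply, ite_mul]

theorem factMoment_iidSum_zero (bern : PMF (ℕ × ℕ)) (r s : ℕ) :
    factMoment (iidSum bern 0) r s = if r = 0 ∧ s = 0 then 1 else 0 := by
  rw [factMoment_eq_toReal_efactMoment, iidSum, efactMoment_pure]
  rcases r with _ | r <;> rcases s with _ | s <;> simp [jointDescFactorial]

section Bernoulli

variable {p00 p10 p01 p11 : ℝ≥0} {bern : PMF (ℕ × ℕ)}
  (hsum : p00 + p10 + p01 + p11 = 1)
  (hb00 : bern (0, 0) = (p00 : ℝ≥0∞)) (hb10 : bern (1, 0) = (p10 : ℝ≥0∞))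
  (hb01 : bern (0, 1) = (p01 : ℝ≥0∞)) (hb11 : bern (1, 1) = (p11 : ℝ≥0∞))
include hsum hb00 hb10 hb01 hb11

theorem tsum_bern_mul (φ : ℕ × ℕ → ℝ≥0∞) :
    ∑' b, bern b * φ b
      = p00 * φ (0, 0) + p10 * φ (1, 0) + p01 * φ (0, 1) + p11 * φ (1, 1) := by
  have hsum' : (p00 : ℝ≥0∞) + p10 + p01 + p11 = 1 := by exact_mod_cast hsum
  rw [bern.tsum_mul_eq_sum_of_sum_eq_one (s := {(0, 0), (1, 0), (0, 1), (1, 1)})]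
  · simp [hb00, hb10, hb01, hb11, add_assoc]
  · simp [hb00, hb10, hb01, hb11, ← hsum', add_assoc]

theorem efactMoment_iidSum_succ (n r s : ℕ) :
    efactMoment (iidSum bern (n + 1)) r s = efactMoment (iidSum bern n) r s
      + r * (p10 + p11) * efactMoment (iidSum bern n) (r - 1) s
      + s * (p01 + p11) * efactMoment (iidSum bern n) r (s - 1)
      + r * s * p11 * efactMoment (iidSum bern n) (r - 1) (s - 1) := by
  have hsum' : (p00 : ℝ≥0∞) + p10 + p01 + p11 = 1 := by exact_mod_cast hsum
  simp only [efactMoment, iidSum, PMF.tsum_bind_mul, PMF.tsum_map_mul,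
    tsum_bern_mul hsum hb00 hb10 hb01 hb11, add_zero, Prod.mk.eta,
    weighted_shift_jointDescFactorial hsum', ← ENNReal.tsum_mul_left, ← ENNReal.tsum_add]
  exact tsum_congr fun q => by ring

theorem efactMoment_iidSum_ne_top (n r s : ℕ) : efactMoment (iidSum bern n) r s ≠ ⊤ := by
  induction n generalizing r s with
  | zero => simp [iidSum, efactMoment_pure]
  | succ n ih =>
    rw [efactMoment_iidSum_succ hsum hb00 hb10 hb01 hb11]
    simp [ENNReal.mul_eq_top, ih]

theorem factMoment_iidSum_succ (n r s : ℕ) :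
    factMoment (iidSum bern (n + 1)) r s = factMoment (iidSum bern n) r s
      + r * (p10 + p11 : ℝ) * factMoment (iidSum bern n) (r - 1) s
      + s * (p01 + p11 : ℝ) * factMoment (iidSum bern n) r (s - 1)
      + r * s * (p11 : ℝ) * factMoment (iidSum bern n) (r - 1) (s - 1) := by
  have hfin := efactMoment_iidSum_ne_top hsum hb00 hb10 hb01 hb11 n
  simp only [factMoment_eq_toReal_efactMoment, efactMoment_iidSum_succ hsum hb00 hb10 hb01 hb11]
  rw [ENNReal.toReal_add, ENNReal.toReal_add, ENNReal.toReal_add]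
  all_goals simp [ENNReal.mul_eq_top, ENNReal.toReal_add, hfin]

end Bernoulli

theorem bvb_factorial_moment_recursion_general (N : ℕ) (p00 p10 p01 p11 : ℝ≥0)
    (hsum : p00 + p10 + p01 + p11 = 1)
    (bern : PMF (ℕ × ℕ))
    (hb00 : bern (0, 0) = (p00 : ℝ≥0∞)) (hb10 : bern (1, 0) = (p10 : ℝ≥0∞))
    (hb01 : bern (0, 1) = (p01 : ℝ≥0∞)) (hb11 : bern (1, 1) = (p11 : ℝ≥0∞))
    (a1 a2 a : ℝ) (ha1 : a1 = (p10 : ℝ) + (p11 : ℝ)) (ha2 : a2 = (p01 : ℝ) + (p11 : ℝ))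
    (ha : a = (p11 : ℝ)) :
    ∀ r s : ℕ, 1 ≤ r → 1 ≤ s →
      factMoment (iidSum bern N) r s
        = ((N : ℝ) - (r : ℝ) + 1) * a1 * factMoment (iidSum bern N) (r - 1) s
          - (s : ℝ) * a2 * factMoment (iidSum bern N) r (s - 1)
          + ((N : ℝ) - (r : ℝ) + 1) * (s : ℝ) * a
              * factMoment (iidSum bern N) (r - 1) (s - 1) := by
  rintro _ s hr -
  obtain ⟨r, rfl⟩ := Nat.exists_eq_add_of_le' hr
  subst ha1 ha2 ha
  have h := momentDefect_eq_zero (m := fun n => factMoment (iidSum bern n))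
    (factMoment_iidSum_zero bern) (factMoment_iidSum_succ hsum hb00 hb10 hb01 hb11) N r s
  unfold momentDefect at h
  rw [add_tsub_cancel_right]
  push_cast
  linear_combination h

theorem bvb_factorial_moment_recursion (N : ℕ) (hN : 1 ≤ N) (p00 p10 p01 p11 : ℝ≥0)
    (h00 : 0 < p00) (h10 : 0 < p10) (h01 : 0 < p01) (h11 : 0 < p11)
    (hsum : p00 + p10 + p01 + p11 = 1)
    (bern : PMF (ℕ × ℕ))
    (hb00 : bern (0, 0) = (p00 : ℝ≥0∞)) (hb10 : bern (1, 0) = (p10 : ℝ≥0∞))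
    (hb01 : bern (0, 1) = (p01 : ℝ≥0∞)) (hb11 : bern (1, 1) = (p11 : ℝ≥0∞))
    (a1 a2 a : ℝ) (ha1 : a1 = (p10 : ℝ) + (p11 : ℝ)) (ha2 : a2 = (p01 : ℝ) + (p11 : ℝ))
    (ha : a = (p11 : ℝ)) :
    ∀ r s : ℕ, 1 ≤ r → 1 ≤ s →
      factMoment (iidSum bern N) r s
        = ((N : ℝ) - (r : ℝ) + 1) * a1 * factMoment (iidSum bern N) (r - 1) s
          - (s : ℝ) * a2 * factMoment (iidSum bern N) r (s - 1)
          + ((N : ℝ) - (r : ℝ) + 1) * (s : ℝ) * a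
              * factMoment (iidSum bern N) (r - 1) (s - 1) :=
  bvb_factorial_moment_recursion_general N p00 p10 p01 p11 hsum bern hb00 hb10 hb01 hb11 a1 a2 a ha1
    ha2 ha
end

section
/- Let ν > 0, π1, π2 ∈ (0, 1), π0 ∈ (−π1·π2, 1) with π• := π0 + π1 + π2 < 1, and let (X1, X2) follow the bivariate negative-binomial distribution BNB(ν; π1, π2, π0). Then for every bounded function f : ℕ × ℕ → ℝ, one has E[X2 · f(X1, X2)] − π1 · E[X2 · f(X1 + 1, X2)] = π2 · E[(ν + X2) · f(X1, X2 + 1)] + π0 · E[(ν + X2) · f(X1 + 1, X2 + 1)]. -/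
open scoped NNReal ENNReal

/-- `isBNB ν π1 π2 π0 p` says that `p` is the bivariate negative-binomial
distribution `BNB(ν; π1, π2, π0)`, i.e. its joint probability generating function
is `((1 - π•)/(1 - π1 s - π2 t - π0 s t))^ν` for all `|s|, |t| ≤ 1`,
where `π• = π0 + π1 + π2`. -/
def isBNB (ν π1 π2 π0 : ℝ) (p : PMF (ℕ × ℕ)) : Prop :=
  ∀ s t : ℝ, |s| ≤ 1 → |t| ≤ 1 →
    (∑' q : ℕ × ℕ, (p q).toReal * s ^ q.1 * t ^ q.2)
      = ((1 - (π0 + π1 + π2)) / (1 - π1 * s - π2 * t - π0 * s * t)) ^ ν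



lemma shift_summable {e : ℕ → ℝ} {r : ℝ} (hr : 0 < r)
    (hs : Summable fun n => |e n| * r ^ n) (k : ℕ) :
    Summable fun n => |e (n + k)| * r ^ n := by
  have h1 : Summable fun n => |e (n + k)| * r ^ (n + k) := (summable_nat_add_iff k).2 hs
  have h2 : Summable fun n => (|e (n + k)| * r ^ (n + k)) * (r ^ k)⁻¹ := h1.mul_right _
  refine h2.congr fun n => ?_
  field_simp [pow_add]
  ring

lemma coeff_zero_of_tsum_zero (e : ℕ → ℝ) (r : ℝ) (hr : 0 < r)
    (hs : Summable fun n => |e n| * r ^ n)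
    (h : ∀ t : ℝ, |t| ≤ r → ∑' n, e n * t ^ n = 0) : ∀ n, e n = 0 := by
  have habs : ∀ (k : ℕ) (t : ℝ), |t| ≤ r → Summable fun n => e (n + k) * t ^ n := by
    intro k t ht
    refine Summable.of_norm_bounded (shift_summable hr hs k) fun n => ?_
    rw [norm_mul, norm_pow]
    exact mul_le_mul_of_nonneg_left (pow_le_pow_left₀ (abs_nonneg t) ht n) (abs_nonneg _)
  set H : ℕ → Prop := fun k => ∀ t : ℝ, |t| ≤ r → t ≠ 0 → ∑' n, e (n + k) * t ^ n = 0 with hH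
  have step : ∀ k, H k → e k = 0 ∧ H (k + 1) := by
    intro k hk
    set M : ℝ := ∑' n, |e (n + (k + 1))| * r ^ n with hM
    have hM0 : 0 ≤ M := tsum_nonneg fun n => by positivity
    have key : ∀ t : ℝ, |t| ≤ r → t ≠ 0 →
        e k + t * ∑' n, e (n + (k + 1)) * t ^ n = 0 := by
      intro t ht ht0
      have h1 := hk t ht ht0
      rw [Summable.tsum_eq_zero_add (habs k t ht)] at h1
      simp only [pow_zero, mul_one, zero_add] at h1
      have h2 : ∑' n, e (n + 1 + k) * t ^ (n + 1)
          = t * ∑' n, e (n + (k + 1)) * t ^ n := by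
        rw [← tsum_mul_left]
        refine tsum_congr fun n => ?_
        have : n + 1 + k = n + (k + 1) := by omega
        rw [this]; ring
      rw [h2] at h1
      exact h1
    have hSbound : ∀ t : ℝ, |t| ≤ r → |∑' n, e (n + (k + 1)) * t ^ n| ≤ M := by
      intro t ht
      have hsum1 : Summable fun n => ‖e (n + (k + 1)) * t ^ n‖ := by
        simpa only [Real.norm_eq_abs] using (habs (k+1) t ht).abs
      have hb := norm_tsum_le_tsum_norm hsum1
      simp only [Real.norm_eq_abs] at hb
      calc |∑' n, e (n + (k + 1)) * t ^ n| ≤ ∑' n, |e (n + (k + 1)) * t ^ n| := hb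
        _ ≤ M := by
            refine Summable.tsum_le_tsum (fun n => ?_) ((habs (k+1) t ht).abs) (shift_summable hr hs (k+1))
            rw [abs_mul, abs_pow]
            exact mul_le_mul_of_nonneg_left (pow_le_pow_left₀ (abs_nonneg t) ht n) (abs_nonneg _)
    have hek : e k = 0 := by
      by_contra hne
      set t : ℝ := min r (|e k| / (M + 1)) with htdef
      have ht0 : 0 < t := lt_min hr (by positivity)
      have htr : |t| ≤ r := by rw [abs_of_pos ht0]; exact min_le_left _ _
      have := key t htr ht0.ne'
      have h3 : |e k| = |t| * |∑' n, e (n + (k + 1)) * t ^ n| := by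
        rw [← abs_mul]
        have : e k = -(t * ∑' n, e (n + (k + 1)) * t ^ n) := by linarith
        rw [this, abs_neg]
      have h4 : |e k| ≤ t * M := by
        rw [h3, abs_of_pos ht0]
        exact mul_le_mul_of_nonneg_left (hSbound t htr) ht0.le
      have h5 : t ≤ |e k| / (M + 1) := min_le_right _ _
      have h6 : 0 < |e k| := abs_pos.2 hne
      have h7 : t * M ≤ (|e k| / (M + 1)) * M := mul_le_mul_of_nonneg_right h5 hM0
      have h8 : (|e k| / (M + 1)) * (M + 1) = |e k| := by field_simp
      nlinarith [h4, h7, h8, h6, hM0]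
    refine ⟨hek, fun t ht ht0 => ?_⟩
    have := key t ht ht0
    rw [hek, zero_add] at this
    rcases mul_eq_zero.1 this with h' | h'
    · exact absurd h' ht0
    · exact h'
  have hall : ∀ k, H k := by
    intro k
    induction k with
    | zero => intro t ht _; simpa using h t ht
    | succ k ih => exact (step k ih).2
  exact fun n => (step n (hall n)).1


lemma deriv_aux_summable {ρ : ℝ} (h0 : 0 < ρ) (h1 : ρ < 1) :
    Summable fun n : ℕ => (n : ℝ) * ρ ^ (n - 1) := by
  rw [← summable_nat_add_iff 1]
  have h2 : Summable fun n : ℕ => ((n : ℝ) + 1) * ρ ^ n := by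
    have ha : Summable fun n : ℕ => (n : ℝ) * ρ ^ n := by
      simpa using summable_pow_mul_geometric_of_norm_lt_one 1 (r := ρ)
        (by rw [Real.norm_eq_abs, abs_of_pos h0]; exact h1)
    have hb : Summable fun n : ℕ => ρ ^ n :=
      summable_geometric_of_lt_one h0.le h1
    simpa [add_mul] using ha.add hb
  refine h2.congr fun n => ?_
  push_cast [Nat.add_sub_cancel]
  ring


lemma sum_np1_geo {ρ : ℝ} (h0 : 0 ≤ ρ) (h1 : ρ < 1) :
    Summable fun n : ℕ => ((n : ℝ) + 1) * ρ ^ n := by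
  have ha : Summable fun n : ℕ => (n : ℝ) * ρ ^ n := by
    simpa using summable_pow_mul_geometric_of_norm_lt_one 1 (r := ρ)
      (by rw [Real.norm_eq_abs, abs_of_nonneg h0]; exact h1)
  have hb : Summable fun n : ℕ => ρ ^ n := summable_geometric_of_lt_one h0 h1
  simpa [add_mul] using ha.add hb

lemma coeff_rec (ν A B K : ℝ) (hν : 0 < ν) (hK : 0 < K) (hAB : |B| < A)
    (a : ℕ → ℝ) (ha : Summable fun n => |a n|)
    (h : ∀ t : ℝ, |t| ≤ 1 → ∑' n, a n * t ^ n = (K / (A - B * t)) ^ ν) :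
    ∀ n : ℕ, ((n : ℝ) + 1) * A * a (n + 1) = (ν + n) * B * a n := by
  have hA : 0 < A := lt_of_le_of_lt (abs_nonneg B) hAB
  set M : ℝ := ∑' n, |a n| with hMdef
  have hM : ∀ n, |a n| ≤ M := fun n => Summable.le_tsum ha n fun _ _ => abs_nonneg _
  have hM0 : 0 ≤ M := (abs_nonneg _).trans (hM 0)
  have hpos : ∀ t : ℝ, |t| ≤ 1 → 0 < A - B * t := by
    intro t ht
    have : B * t ≤ |B| * |t| := by rw [← abs_mul]; exact le_abs_self _
    nlinarith [abs_nonneg B]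
  have hsum : ∀ t : ℝ, |t| ≤ 1 → Summable fun n => a n * t ^ n := by
    intro t ht
    refine Summable.of_norm_bounded ha fun n => ?_
    rw [norm_mul, norm_pow, Real.norm_eq_abs, Real.norm_eq_abs]
    calc |a n| * |t| ^ n ≤ |a n| * 1 ^ n := by
          exact mul_le_mul_of_nonneg_left (pow_le_pow_left₀ (abs_nonneg t) ht n) (abs_nonneg _)
      _ = |a n| := by simp
  -- term-by-term derivative
  have hder : ∀ t₀ : ℝ, |t₀| < 1 →
      HasDerivAt (fun z : ℝ => ∑' n, a n * z ^ n)
        (∑' n, a n * ((n : ℝ) * t₀ ^ (n - 1))) t₀ := by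
    intro t₀ ht₀
    set ρ : ℝ := (1 + |t₀|) / 2 with hρ
    have hρ0 : 0 < ρ := by positivity
    have hρ1 : ρ < 1 := by rw [hρ]; linarith
    have ht₀ρ : |t₀| < ρ := by rw [hρ]; linarith
    refine hasDerivAt_tsum_of_isPreconnected
      (u := fun n : ℕ => M * ((n : ℝ) * ρ ^ (n - 1)))
      (t := Set.Ioo (-ρ) ρ)
      (g := fun (n : ℕ) (z : ℝ) => a n * z ^ n)
      (g' := fun (n : ℕ) (z : ℝ) => a n * ((n : ℝ) * z ^ (n - 1)))
      ((deriv_aux_summable hρ0 hρ1).mul_left M)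
      isOpen_Ioo (isPreconnected_Ioo)
      (fun n y _ => (hasDerivAt_pow n y).const_mul (a n))
      (fun n y hy => ?_) (y₀ := 0) (by constructor <;> [linarith; linarith])
      (by simpa using (hsum 0 (by norm_num))) (by rwa [Set.mem_Ioo, ← abs_lt])
    · have hyρ : |y| ≤ ρ := by
        rw [Set.mem_Ioo] at hy; rw [abs_le]; exact ⟨hy.1.le, hy.2.le⟩
      rw [Real.norm_eq_abs, abs_mul, abs_mul, abs_pow]
      have h1 : |a n| ≤ M := hM n
      have h2 : |y| ^ (n - 1) ≤ ρ ^ (n - 1) := pow_le_pow_left₀ (abs_nonneg y) hyρ _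
      have h3 : |(n : ℝ)| = (n : ℝ) := abs_of_nonneg (Nat.cast_nonneg n)
      rw [h3]
      exact mul_le_mul h1 (mul_le_mul_of_nonneg_left h2 (Nat.cast_nonneg n))
        (by positivity) hM0
  -- derivative of the closed form
  have hder2 : ∀ t₀ : ℝ, |t₀| < 1 →
      HasDerivAt (fun z : ℝ => (K / (A - B * z)) ^ ν)
        ((K * B / (A - B * t₀) ^ 2) * ν * (K / (A - B * t₀)) ^ (ν - 1)) t₀ := by
    intro t₀ ht₀
    have hw : 0 < A - B * t₀ := hpos t₀ ht₀.le
    have h1 : HasDerivAt (fun z : ℝ => A - B * z) (-B) t₀ := by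
      simpa using ((hasDerivAt_id t₀).const_mul B).const_sub A
    have h2 : HasDerivAt (fun z : ℝ => K / (A - B * z))
        ((0 * (A - B * t₀) - K * (-B)) / (A - B * t₀) ^ 2) t₀ :=
      (hasDerivAt_const t₀ K).div h1 hw.ne'
    have h3 : (0 * (A - B * t₀) - K * (-B)) / (A - B * t₀) ^ 2
        = K * B / (A - B * t₀) ^ 2 := by ring
    rw [h3] at h2
    have h4 := h2.rpow_const (p := ν) (Or.inl (by positivity))
    exact h4
  -- equate the two derivatives
  have hkey : ∀ t : ℝ, |t| < 1 →
      (A - B * t) * (∑' n, a n * ((n : ℝ) * t ^ (n - 1)))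
        = ν * B * ∑' n, a n * t ^ n := by
    intro t ht
    have hg := hder t ht
    have hw : 0 < A - B * t := hpos t ht.le
    have heq : (fun z : ℝ => ∑' n, a n * z ^ n)
        =ᶠ[nhds t] (fun z : ℝ => (K / (A - B * z)) ^ ν) := by
      have hmem : Set.Ioo (-1 : ℝ) 1 ∈ nhds t := by
        exact Ioo_mem_nhds (by cases abs_lt.1 ht; linarith) (abs_lt.1 ht).2
      filter_upwards [hmem] with z hz
      exact h z (by rw [abs_le]; exact ⟨hz.1.le, hz.2.le⟩)
    have hg2 : HasDerivAt (fun z : ℝ => (K / (A - B * z)) ^ ν)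
        (∑' n, a n * ((n : ℝ) * t ^ (n - 1))) t := hg.congr_of_eventuallyEq heq.symm
    have huniq := hg2.unique (hder2 t ht)
    rw [huniq, h t ht.le]
    have hKw : 0 < K / (A - B * t) := by positivity
    have hrw : (K / (A - B * t)) ^ (ν - 1) = (K / (A - B * t)) ^ ν / (K / (A - B * t)) :=
      Real.rpow_sub_one hKw.ne' ν
    rw [hrw]
    field_simp
  -- rearrange into a power series identity
  set e : ℕ → ℝ := fun n => A * ((n : ℝ) + 1) * a (n + 1) - (ν + n) * B * a n with hedef
  have hts : ∀ t : ℝ, |t| ≤ 1/2 → ∑' n, e n * t ^ n = 0 := by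
    intro t ht
    have ht1 : |t| < 1 := lt_of_le_of_lt ht (by norm_num)
    have hpowt : ∀ n : ℕ, |t| ^ n ≤ (1/2 : ℝ) ^ n :=
      fun n => pow_le_pow_left₀ (abs_nonneg t) ht n
    have hgeo : Summable fun n : ℕ => ((n : ℝ) + 1) * (1/2 : ℝ) ^ n :=
      sum_np1_geo (by norm_num) (by norm_num)
    have hsS : Summable fun n => a n * t ^ n := hsum t ht1.le
    have hsT : Summable fun n : ℕ => ((n : ℝ) + 1) * a (n + 1) * t ^ n := by
      refine Summable.of_norm_bounded (g := fun n => M * (((n : ℝ) + 1) * (1/2 : ℝ) ^ n))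
        (hgeo.mul_left M) fun n => ?_
      rw [Real.norm_eq_abs, abs_mul, abs_mul, abs_pow,
        abs_of_nonneg (by positivity : (0:ℝ) ≤ (n : ℝ) + 1)]
      show ((n : ℝ) + 1) * |a (n + 1)| * |t| ^ n ≤ M * (((n : ℝ) + 1) * (1/2 : ℝ) ^ n)
      calc ((n : ℝ) + 1) * |a (n + 1)| * |t| ^ n
          ≤ ((n : ℝ) + 1) * M * (1/2 : ℝ) ^ n := by
            gcongr <;> first | exact hM (n + 1) | exact hpowt n | skip
        _ = M * (((n : ℝ) + 1) * (1/2 : ℝ) ^ n) := by ring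
    have hsU : Summable fun n : ℕ => (n : ℝ) * a n * t ^ n := by
      refine Summable.of_norm_bounded (g := fun n => M * (((n : ℝ) + 1) * (1/2 : ℝ) ^ n))
        (hgeo.mul_left M) fun n => ?_
      rw [Real.norm_eq_abs, abs_mul, abs_mul, abs_pow,
        abs_of_nonneg (by positivity : (0:ℝ) ≤ (n : ℝ))]
      show (n : ℝ) * |a n| * |t| ^ n ≤ M * (((n : ℝ) + 1) * (1/2 : ℝ) ^ n)
      calc (n : ℝ) * |a n| * |t| ^ n
          ≤ ((n : ℝ) + 1) * M * (1/2 : ℝ) ^ n := by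
            gcongr <;> first | linarith [Nat.cast_nonneg (α := ℝ) n] | exact hM n | exact hpowt n | skip
        _ = M * (((n : ℝ) + 1) * (1/2 : ℝ) ^ n) := by ring
    have hsD : Summable fun n : ℕ => a n * ((n : ℝ) * t ^ (n - 1)) := by
      refine Summable.of_norm_bounded (g := fun n => M * ((n : ℝ) * (1/2 : ℝ) ^ (n - 1)))
        ((deriv_aux_summable (by norm_num) (by norm_num)).mul_left M) fun n => ?_
      rw [Real.norm_eq_abs, abs_mul, abs_mul, abs_pow,
        abs_of_nonneg (Nat.cast_nonneg (α := ℝ) n)]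
      show |a n| * ((n : ℝ) * |t| ^ (n - 1)) ≤ M * ((n : ℝ) * (1/2 : ℝ) ^ (n - 1))
      gcongr <;> first | exact hM n | exact pow_le_pow_left₀ (abs_nonneg t) ht (n - 1) | skip
    have hD : ∑' n, a n * ((n : ℝ) * t ^ (n - 1))
        = ∑' n : ℕ, ((n : ℝ) + 1) * a (n + 1) * t ^ n := by
      rw [Summable.tsum_eq_zero_add hsD]
      simp only [Nat.cast_zero, zero_mul, mul_zero, zero_add]
      exact tsum_congr fun n => by
        push_cast [Nat.add_sub_cancel]
        ring
    have hU : ∑' n : ℕ, (n : ℝ) * a n * t ^ n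
        = t * ∑' n : ℕ, ((n : ℝ) + 1) * a (n + 1) * t ^ n := by
      rw [← tsum_mul_left, Summable.tsum_eq_zero_add hsU]
      simp only [Nat.cast_zero, zero_mul, zero_add]
      exact tsum_congr fun n => by push_cast; ring
    have hk := hkey t ht1
    rw [hD] at hk
    have hsplit : ∑' n, e n * t ^ n
        = ∑' n : ℕ, (A * (((n : ℝ) + 1) * a (n + 1) * t ^ n)
            - ((ν * B) * (a n * t ^ n) + B * ((n : ℝ) * a n * t ^ n))) :=
      tsum_congr fun n => by simp only [hedef]; ring
    rw [hsplit, Summable.tsum_sub (hsT.mul_left A) (((hsS.mul_left (ν * B))).add (hsU.mul_left B)),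
      Summable.tsum_add (hsS.mul_left (ν * B)) (hsU.mul_left B), tsum_mul_left, tsum_mul_left,
      tsum_mul_left, hU]
    linear_combination hk
  have hsum_e : Summable fun n => |e n| * (1/2 : ℝ) ^ n := by
    set C0 : ℝ := (A + |B| * (ν + 1)) * M with hC0
    refine Summable.of_nonneg_of_le (fun n => by positivity)
      (fun n => ?_) ((sum_np1_geo (ρ := 1/2) (by norm_num) (by norm_num)).mul_left C0)
    have h1 : |e n| ≤ C0 * ((n : ℝ) + 1) := by
      have h2 : |e n| ≤ A * ((n : ℝ) + 1) * |a (n + 1)| + (ν + n) * |B| * |a n| := by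
        have := abs_sub (A * ((n : ℝ) + 1) * a (n + 1)) ((ν + n) * B * a n)
        simp only [hedef]
        calc |A * ((n : ℝ) + 1) * a (n + 1) - (ν + n) * B * a n|
            ≤ |A * ((n : ℝ) + 1) * a (n + 1)| + |(ν + n) * B * a n| := abs_sub _ _
          _ = A * ((n : ℝ) + 1) * |a (n + 1)| + (ν + n) * |B| * |a n| := by
              rw [abs_mul, abs_mul, abs_mul, abs_mul,
                abs_of_pos hA, abs_of_nonneg (by positivity : (0:ℝ) ≤ (n:ℝ)+1),
                abs_of_nonneg (by positivity : (0:ℝ) ≤ ν + n)]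
      have h3 := hM n
      have h4 := hM (n + 1)
      have h5 : (ν + (n : ℝ)) ≤ (ν + 1) * ((n : ℝ) + 1) := by
        nlinarith [Nat.cast_nonneg (α := ℝ) n, hν]
      have h6 : A * ((n : ℝ) + 1) * |a (n + 1)| ≤ A * ((n : ℝ) + 1) * M :=
        mul_le_mul_of_nonneg_left h4 (by positivity)
      have h7 : (ν + (n : ℝ)) * |B| * |a n| ≤ ((ν + 1) * ((n : ℝ) + 1)) * |B| * M := by
        have h8 : (ν + (n : ℝ)) * |B| ≤ ((ν + 1) * ((n : ℝ) + 1)) * |B| :=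
          mul_le_mul_of_nonneg_right h5 (abs_nonneg B)
        exact mul_le_mul h8 h3 (abs_nonneg _) (by positivity)
      calc |e n| ≤ A * ((n : ℝ) + 1) * M + ((ν + 1) * ((n : ℝ) + 1)) * |B| * M := by
            linarith
        _ = C0 * ((n : ℝ) + 1) := by rw [hC0]; ring
    have h6 : (0:ℝ) ≤ (1/2 : ℝ) ^ n := by positivity
    calc |e n| * (1/2 : ℝ) ^ n ≤ (C0 * ((n : ℝ) + 1)) * (1/2 : ℝ) ^ n :=
          mul_le_mul_of_nonneg_right h1 h6
      _ = C0 * (((n : ℝ) + 1) * (1/2 : ℝ) ^ n) := by ring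
  have hez := coeff_zero_of_tsum_zero e (1/2) (by norm_num) hsum_e hts
  intro n
  have h7 := hez n
  simp only [hedef] at h7
  linarith [h7]

lemma interp_pos {E1 E2 s G : ℝ} (h1 : 0 < E1) (h2 : 0 < E2)
    (hs1 : -1 ≤ s) (hs2 : s ≤ 1) (hG : 2 * G = (1 + s) * E1 + (1 - s) * E2) : 0 < G := by
  have hm : 0 < min E1 E2 := lt_min h1 h2
  nlinarith [mul_nonneg (by linarith : (0:ℝ) ≤ 1 + s)
      (by simp [sub_nonneg] : (0:ℝ) ≤ E1 - min E1 E2),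
    mul_nonneg (by linarith : (0:ℝ) ≤ 1 - s)
      (by simp [sub_nonneg] : (0:ℝ) ≤ E2 - min E1 E2)]

set_option maxHeartbeats 2000000 in
lemma bnb_rec (ν π1 π2 π0 : ℝ) (hν : 0 < ν)
    (hπ1 : π1 ∈ Set.Ioo (0 : ℝ) 1) (hπ2 : π2 ∈ Set.Ioo (0 : ℝ) 1)
    (hπ0 : π0 ∈ Set.Ioo (-(π1 * π2)) 1) (hb : π0 + π1 + π2 < 1)
    (p : PMF (ℕ × ℕ)) (hp : isBNB ν π1 π2 π0 p) :
    (∀ j : ℕ, ((j : ℝ) + 1) * (p (0, j+1)).toReal = (ν + j) * π2 * (p (0, j)).toReal) ∧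
    (∀ i j : ℕ, ((j : ℝ) + 1) * (p (i+1, j+1)).toReal
      = π1 * ((j : ℝ) + 1) * (p (i, j+1)).toReal
        + (ν + j) * (π2 * (p (i+1, j)).toReal + π0 * (p (i, j)).toReal)) := by
  obtain ⟨hπ1a, hπ1b⟩ := hπ1
  obtain ⟨hπ2a, hπ2b⟩ := hπ2
  obtain ⟨hπ0a, hπ0b⟩ := hπ0
  set P : ℕ → ℕ → ℝ := fun i j => (p (i, j)).toReal with hPdef
  have hPnn : ∀ i j, 0 ≤ P i j := fun i j => ENNReal.toReal_nonneg
  have hPsum : Summable fun q : ℕ × ℕ => P q.1 q.2 := by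
    have : Summable fun q : ℕ × ℕ => (p q).toReal :=
      ENNReal.summable_toReal (by rw [p.tsum_coe]; exact ENNReal.one_ne_top)
    exact this
  have hslice : ∀ j, Summable fun i => P i j := by
    intro j
    exact hPsum.comp_injective (i := fun i => (i, j))
      (fun a b hab => (Prod.ext_iff.1 hab).1)
  set Q : ℕ → ℝ := fun j => ∑' i, P i j with hQdef
  have hQnn : ∀ j, 0 ≤ Q j := fun j => tsum_nonneg fun i => hPnn i j
  have hQsum : Summable Q := by
    have hsw : Summable fun q : ℕ × ℕ => P q.2 q.1 := hPsum.prod_symm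
    exact ((summable_prod_of_nonneg (fun q => hPnn q.2 q.1)).1 hsw).2
  -- summability of s-slices
  have hps : ∀ (s : ℝ), |s| ≤ 1 → ∀ jj, Summable fun i => P i jj * s ^ i := by
    intro s hs jj
    refine Summable.of_norm_bounded (hslice jj) fun i => ?_
    rw [Real.norm_eq_abs, abs_mul, abs_pow, abs_of_nonneg (hPnn i jj)]
    calc P i jj * |s| ^ i ≤ P i jj * 1 ^ i := by
          gcongr
          all_goals exact hs
      _ = P i jj := by simp
  -- the recurrence for the coefficient functions c j (s)
  have hrec : ∀ (s : ℝ), |s| ≤ 1 → ∀ j : ℕ,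
      ((j : ℝ) + 1) * (1 - π1 * s) * (∑' i, P i (j+1) * s ^ i)
        = (ν + j) * (π2 + π0 * s) * (∑' i, P i j * s ^ i) := by
    intro s hs j
    obtain ⟨hs1, hs2⟩ := abs_le.1 hs
    set c : ℕ → ℝ := fun j => ∑' i, P i j * s ^ i with hcdef
    have hcabs : ∀ jj, |c jj| ≤ Q jj := by
      intro jj
      have h1 : Summable fun i => ‖P i jj * s ^ i‖ := by
        simpa only [Real.norm_eq_abs] using (hps s hs jj).abs
      have h2 := norm_tsum_le_tsum_norm h1
      simp only [Real.norm_eq_abs] at h2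
      refine h2.trans ?_
      refine Summable.tsum_le_tsum (fun i => ?_) ((hps s hs jj).abs) (hslice jj)
      rw [abs_mul, abs_pow, abs_of_nonneg (hPnn i jj)]
      calc P i jj * |s| ^ i ≤ P i jj * 1 ^ i := by
            gcongr
            all_goals exact hs
        _ = P i jj := by simp
    have hcsum : Summable fun jj => |c jj| :=
      Summable.of_nonneg_of_le (fun jj => abs_nonneg _) hcabs hQsum
    have hK : 0 < 1 - (π0 + π1 + π2) := by linarith
    have hE1 : 0 < 1 + π2 - π1 + π0 := by
      nlinarith [mul_pos (by linarith : (0:ℝ) < 1 - π1) (by linarith : (0:ℝ) < 1 + π2)]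
    have hE2 : 0 < 1 + π2 + π1 - π0 := by linarith
    have hF2 : 0 < 1 - π2 + π1 + π0 := by
      nlinarith [mul_pos (by linarith : (0:ℝ) < 1 + π1) (by linarith : (0:ℝ) < 1 - π2)]
    have hAB : |π2 + π0 * s| < 1 - π1 * s := by
      rw [abs_lt]
      constructor
      · have := interp_pos hE1 hE2 hs1 hs2
          (G := 1 + π2 + (π0 - π1) * s) (by ring)
        nlinarith [this]
      · have := interp_pos (by linarith : (0:ℝ) < 1 - π2 - π1 - π0) hF2 hs1 hs2
          (G := 1 - π2 - (π1 + π0) * s) (by ring)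
        nlinarith [this]
    have hPGF : ∀ t : ℝ, |t| ≤ 1 →
        ∑' n, c n * t ^ n
          = ((1 - (π0 + π1 + π2)) / ((1 - π1 * s) - (π2 + π0 * s) * t)) ^ ν := by
      intro t ht
      have h0 := hp s t hs ht
      have hgsum : Summable fun a : ℕ × ℕ => P a.2 a.1 * s ^ a.2 * t ^ a.1 := by
        refine Summable.of_norm_bounded hPsum.prod_symm fun a => ?_
        rw [Real.norm_eq_abs, abs_mul, abs_mul, abs_pow, abs_pow,
          abs_of_nonneg (hPnn a.2 a.1)]
        calc P a.2 a.1 * |s| ^ a.2 * |t| ^ a.1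
            ≤ P a.2 a.1 * 1 ^ a.2 * 1 ^ a.1 := by
              gcongr
              all_goals first | exact hs | exact ht
          _ = P a.2 a.1 := by simp
      have hswap : (∑' q : ℕ × ℕ, (p q).toReal * s ^ q.1 * t ^ q.2)
          = ∑' a : ℕ × ℕ, P a.2 a.1 * s ^ a.2 * t ^ a.1 := by
        exact ((Equiv.prodComm ℕ ℕ).tsum_eq
          (fun q : ℕ × ℕ => (p q).toReal * s ^ q.1 * t ^ q.2)).symm
      have hfub : (∑' a : ℕ × ℕ, P a.2 a.1 * s ^ a.2 * t ^ a.1)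
          = ∑' (jj : ℕ) (i : ℕ), P i jj * s ^ i * t ^ jj :=
        Summable.tsum_prod' hgsum fun jj => (hps s hs jj).mul_right (t ^ jj)
      have hinner : ∀ jj : ℕ, (∑' i, P i jj * s ^ i * t ^ jj) = c jj * t ^ jj := by
        intro jj
        rw [hcdef, ← tsum_mul_right]
      rw [hswap, hfub] at h0
      calc ∑' n, c n * t ^ n = ∑' (jj : ℕ) (i : ℕ), P i jj * s ^ i * t ^ jj := by
            rw [tsum_congr hinner]
        _ = ((1 - (π0 + π1 + π2)) / (1 - π1 * s - π2 * t - π0 * s * t)) ^ ν := h0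
        _ = ((1 - (π0 + π1 + π2)) / ((1 - π1 * s) - (π2 + π0 * s) * t)) ^ ν := by
            ring_nf
    have := coeff_rec ν (1 - π1 * s) (π2 + π0 * s) (1 - (π0 + π1 + π2)) hν hK hAB c hcsum
      (by
        intro t ht
        have hfix : ∀ i : ℕ, P i (0:ℕ) = P i 0 := fun _ => rfl
        exact hPGF t ht) j
    linarith [this]
  -- Step B: extract coefficients in s
  have main : ∀ j : ℕ,
      (((j : ℝ) + 1) * P 0 (j+1) = (ν + j) * π2 * P 0 j) ∧
      (∀ i : ℕ, ((j : ℝ) + 1) * P (i+1) (j+1)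
        = π1 * ((j : ℝ) + 1) * P i (j+1) + (ν + j) * (π2 * P (i+1) j + π0 * P i j)) := by
    intro j
    set e : ℕ → ℝ := fun n => Nat.casesOn n
      (((j : ℝ) + 1) * P 0 (j+1) - (ν + j) * π2 * P 0 j)
      (fun i => ((j : ℝ) + 1) * (P (i+1) (j+1) - π1 * P i (j+1))
        - (ν + j) * (π2 * P (i+1) j + π0 * P i j)) with hedef
    have he0 : e 0 = ((j : ℝ) + 1) * P 0 (j+1) - (ν + j) * π2 * P 0 j := rfl
    have heS : ∀ i : ℕ, e (i+1) = ((j : ℝ) + 1) * (P (i+1) (j+1) - π1 * P i (j+1))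
        - (ν + j) * (π2 * P (i+1) j + π0 * P i j) := fun i => rfl
    -- summability of |e|
    have hsea : Summable fun n => |e n| := by
      rw [← summable_nat_add_iff 1]
      have hbnd : Summable fun i : ℕ =>
          ((j : ℝ) + 1) * P (i+1) (j+1) + π1 * (((j : ℝ) + 1) * P i (j+1))
            + (ν + j) * (π2 * P (i+1) j) + (ν + j) * (|π0| * P i j) := by
        have s1 : Summable fun i : ℕ => P (i+1) (j+1) := (summable_nat_add_iff 1).2 (hslice (j+1))
        have s2 : Summable fun i : ℕ => P i (j+1) := hslice (j+1)
        have s3 : Summable fun i : ℕ => P (i+1) j := (summable_nat_add_iff 1).2 (hslice j)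
        have s4 : Summable fun i : ℕ => P i j := hslice j
        exact (((s1.mul_left _).add ((s2.mul_left _).mul_left _)).add
          ((s3.mul_left _).mul_left _)).add ((s4.mul_left _).mul_left _)
      refine Summable.of_nonneg_of_le (fun i => abs_nonneg _) (fun i => ?_) hbnd
      rw [heS i]
      have hν0 : (0:ℝ) ≤ ν + j := by positivity
      have hj0 : (0:ℝ) ≤ (j:ℝ) + 1 := by positivity
      calc |((j : ℝ) + 1) * (P (i+1) (j+1) - π1 * P i (j+1))
            - (ν + j) * (π2 * P (i+1) j + π0 * P i j)|
          ≤ |((j : ℝ) + 1) * (P (i+1) (j+1) - π1 * P i (j+1))|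
            + |(ν + j) * (π2 * P (i+1) j + π0 * P i j)| := abs_sub _ _
        _ ≤ ((j : ℝ) + 1) * (P (i+1) (j+1) + π1 * P i (j+1))
            + (ν + j) * (π2 * P (i+1) j + |π0| * P i j) := by
            rw [abs_mul, abs_mul, abs_of_nonneg hj0, abs_of_nonneg hν0]
            have b1 : |P (i+1) (j+1) - π1 * P i (j+1)| ≤ P (i+1) (j+1) + π1 * P i (j+1) := by
              refine (abs_sub _ _).trans ?_
              rw [abs_of_nonneg (hPnn _ _), abs_mul, abs_of_pos hπ1a,
                abs_of_nonneg (hPnn _ _)]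
            have b2 : |π2 * P (i+1) j + π0 * P i j| ≤ π2 * P (i+1) j + |π0| * P i j := by
              refine (abs_add_le _ _).trans ?_
              rw [abs_mul, abs_mul, abs_of_pos hπ2a, abs_of_nonneg (hPnn _ _),
                abs_of_nonneg (hPnn _ _)]
            exact add_le_add (mul_le_mul_of_nonneg_left b1 hj0)
              (mul_le_mul_of_nonneg_left b2 hν0)
        _ ≤ ((j : ℝ) + 1) * P (i+1) (j+1) + π1 * (((j : ℝ) + 1) * P i (j+1))
            + (ν + j) * (π2 * P (i+1) j) + (ν + j) * (|π0| * P i j) := by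
            ring_nf
            exact le_refl _
    -- vanishing of the power series in s
    have hts : ∀ s : ℝ, |s| ≤ 1 → ∑' n, e n * s ^ n = 0 := by
      intro s hs
      have hkey := hrec s hs j
      have X1 : Summable fun i : ℕ => P (i+1) (j+1) * s ^ (i+1) :=
        (summable_nat_add_iff 1).2 (hps s hs (j+1))
      have X2 : Summable fun i : ℕ => P i (j+1) * s ^ (i+1) :=
        ((hps s hs (j+1)).mul_right s).congr fun i => by ring
      have X3 : Summable fun i : ℕ => P (i+1) j * s ^ (i+1) :=
        (summable_nat_add_iff 1).2 (hps s hs j)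
      have X4 : Summable fun i : ℕ => P i j * s ^ (i+1) :=
        ((hps s hs j).mul_right s).congr fun i => by ring
      have hseS : Summable fun i : ℕ => e (i+1) * s ^ (i+1) := by
        refine ((((X1.mul_left (((j : ℝ) + 1))).sub
          (X2.mul_left (((j : ℝ) + 1) * π1))).sub
          (X3.mul_left ((ν + j) * π2))).sub
          (X4.mul_left ((ν + j) * π0))).congr fun i => ?_
        rw [heS i]; ring
      have hse : Summable fun n : ℕ => e n * s ^ n := by
        rw [← summable_nat_add_iff 1]
        exact hseS
      -- values of shifted sums
      have V1 : ∑' i : ℕ, P (i+1) (j+1) * s ^ (i+1)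
          = (∑' i, P i (j+1) * s ^ i) - P 0 (j+1) := by
        have := Summable.tsum_eq_zero_add (hps s hs (j+1))
        simp only [pow_zero, mul_one] at this
        linarith [this]
      have V3 : ∑' i : ℕ, P (i+1) j * s ^ (i+1)
          = (∑' i, P i j * s ^ i) - P 0 j := by
        have := Summable.tsum_eq_zero_add (hps s hs j)
        simp only [pow_zero, mul_one] at this
        linarith [this]
      have V2 : ∑' i : ℕ, P i (j+1) * s ^ (i+1) = s * ∑' i, P i (j+1) * s ^ i := by
        rw [← tsum_mul_left]
        exact tsum_congr fun i => by ring
      have V4 : ∑' i : ℕ, P i j * s ^ (i+1) = s * ∑' i, P i j * s ^ i := by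
        rw [← tsum_mul_left]
        exact tsum_congr fun i => by ring
      rw [Summable.tsum_eq_zero_add hse, he0]
      have hsplit : ∑' i : ℕ, e (i+1) * s ^ (i+1)
          = (((j : ℝ) + 1) * ∑' i : ℕ, P (i+1) (j+1) * s ^ (i+1))
            - (((j : ℝ) + 1) * π1) * (∑' i : ℕ, P i (j+1) * s ^ (i+1))
            - ((ν + j) * π2) * (∑' i : ℕ, P (i+1) j * s ^ (i+1))
            - ((ν + j) * π0) * (∑' i : ℕ, P i j * s ^ (i+1)) := by
        rw [← tsum_mul_left, ← tsum_mul_left, ← tsum_mul_left, ← tsum_mul_left,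
          ← Summable.tsum_sub (X1.mul_left _) (X2.mul_left _),
          ← Summable.tsum_sub (((X1.mul_left _)).sub (X2.mul_left _)) (X3.mul_left _),
          ← Summable.tsum_sub ((((X1.mul_left _)).sub (X2.mul_left _)).sub (X3.mul_left _))
            (X4.mul_left _)]
        exact tsum_congr fun i => by rw [heS i]; ring
      rw [hsplit, V1, V2, V3, V4]
      simp only [pow_zero, mul_one]
      linear_combination hkey
    have hez := coeff_zero_of_tsum_zero e 1 one_pos (by simpa using hsea) hts
    constructor
    · have h0 := hez 0
      rw [he0] at h0
      linarith
    · intro i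
      have h1 := hez (i+1)
      rw [heS i] at h1
      linarith
  exact ⟨fun j => (main j).1, fun i j => (main j).2 i⟩

set_option maxHeartbeats 2000000 in
theorem stein_bnb_second (ν π1 π2 π0 : ℝ) (hν : 0 < ν)
    (hπ1 : π1 ∈ Set.Ioo (0 : ℝ) 1) (hπ2 : π2 ∈ Set.Ioo (0 : ℝ) 1)
    (hπ0 : π0 ∈ Set.Ioo (-(π1 * π2)) 1) (hb : π0 + π1 + π2 < 1)
    (p : PMF (ℕ × ℕ)) (hp : isBNB ν π1 π2 π0 p)
    (f : ℕ × ℕ → ℝ) (hf : ∃ C : ℝ, ∀ q : ℕ × ℕ, |f q| ≤ C) :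
    pExp p (fun q => (q.2 : ℝ) * f q) - π1 * pExp p (fun q => (q.2 : ℝ) * f (q.1 + 1, q.2))
      = π2 * pExp p (fun q => (ν + (q.2 : ℝ)) * f (q.1, q.2 + 1))
        + π0 * pExp p (fun q => (ν + (q.2 : ℝ)) * f (q.1 + 1, q.2 + 1)) := by
  obtain ⟨R0, R1⟩ := bnb_rec ν π1 π2 π0 hν hπ1 hπ2 hπ0 hb p hp
  obtain ⟨hπ1a, hπ1b⟩ := hπ1
  obtain ⟨hπ2a, hπ2b⟩ := hπ2
  obtain ⟨hπ0a, hπ0b⟩ := hπ0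
  obtain ⟨C, hC⟩ := hf
  have hC0 : 0 ≤ C := (abs_nonneg _).trans (hC (0, 0))
  set P : ℕ → ℕ → ℝ := fun i j => (p (i, j)).toReal with hPdef
  have hPnn : ∀ i j, 0 ≤ P i j := fun i j => ENNReal.toReal_nonneg
  have hPsum : Summable fun q : ℕ × ℕ => P q.1 q.2 := by
    have : Summable fun q : ℕ × ℕ => (p q).toReal :=
      ENNReal.summable_toReal (by rw [p.tsum_coe]; exact ENNReal.one_ne_top)
    exact this
  have hslice : ∀ j, Summable fun i => P i j := by
    intro j
    exact hPsum.comp_injective (i := fun i => (i, j))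
      (fun a b hab => (Prod.ext_iff.1 hab).1)
  set Q : ℕ → ℝ := fun j => ∑' i, P i j with hQdef
  have hQnn : ∀ j, 0 ≤ Q j := fun j => tsum_nonneg fun i => hPnn i j
  -- Step C: the marginal recurrence and moment summability
  have hQR : ∀ j : ℕ, ((j : ℝ) + 1) * (1 - π1) * Q (j+1) = (ν + j) * (π2 + π0) * Q j := by
    intro j
    have s1 : Summable fun i : ℕ => P (i+1) (j+1) := (summable_nat_add_iff 1).2 (hslice (j+1))
    have s3 : Summable fun i : ℕ => P (i+1) j := (summable_nat_add_iff 1).2 (hslice j)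
    have v1 : Q (j+1) = P 0 (j+1) + ∑' i, P (i+1) (j+1) := Summable.tsum_eq_zero_add (hslice (j+1))
    have v3 : Q j = P 0 j + ∑' i, P (i+1) j := Summable.tsum_eq_zero_add (hslice j)
    have hmain : ∑' i : ℕ, (((j : ℝ) + 1) * P (i+1) (j+1))
        = (π1 * ((j : ℝ) + 1)) * Q (j+1) + ((ν + j) * π2) * (∑' i, P (i+1) j)
          + ((ν + j) * π0) * Q j := by
      have hsplit : ∀ i : ℕ, ((j : ℝ) + 1) * P (i+1) (j+1)
          = (π1 * ((j : ℝ) + 1)) * P i (j+1) + ((ν + j) * π2) * P (i+1) j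
            + ((ν + j) * π0) * P i j := by
        intro i
        have := R1 i j
        simp only [hPdef] at this ⊢
        linarith [this]
      calc ∑' i : ℕ, (((j : ℝ) + 1) * P (i+1) (j+1))
          = ∑' i : ℕ, ((π1 * ((j : ℝ) + 1)) * P i (j+1) + ((ν + j) * π2) * P (i+1) j
              + ((ν + j) * π0) * P i j) := tsum_congr hsplit
        _ = (π1 * ((j : ℝ) + 1)) * Q (j+1) + ((ν + j) * π2) * (∑' i, P (i+1) j)
              + ((ν + j) * π0) * Q j := by
            rw [Summable.tsum_add (((hslice (j+1)).mul_left _).add (s3.mul_left _)) ((hslice j).mul_left _),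
              Summable.tsum_add ((hslice (j+1)).mul_left _) (s3.mul_left _),
              tsum_mul_left, tsum_mul_left, tsum_mul_left]
    have hR0' : ((j : ℝ) + 1) * P 0 (j+1) = (ν + (j : ℝ)) * π2 * P 0 j := R0 j
    have hsum1 : ∑' i : ℕ, (((j : ℝ) + 1) * P (i+1) (j+1)) = ((j : ℝ) + 1) * ∑' i, P (i+1) (j+1) :=
      tsum_mul_left
    rw [hsum1] at hmain
    linear_combination hR0' + hmain + ((j : ℝ) + 1) * v1 - ((ν + (j : ℝ)) * π2) * v3
  have hπs : 0 < π2 + π0 := by nlinarith [mul_pos hπ1a hπ2a]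
  have hπs1 : π2 + π0 < 1 - π1 := by linarith
  have hSW : Summable fun j : ℕ => (ν + (j : ℝ)) * Q j := by
    set l : ℝ := ((1 - π1) + (π2 + π0)) / (2 * (1 - π1)) with hldef
    have h1π : 0 < 1 - π1 := by linarith
    have hl1 : l < 1 := by
      rw [hldef, div_lt_one (by linarith)]
      linarith
    have hδ : 0 < (1 - π1) - (π2 + π0) := by linarith
    obtain ⟨N, hN⟩ := exists_nat_ge ((π2 + π0) * ν * 2 / ((1 - π1) - (π2 + π0)))
    refine summable_of_ratio_norm_eventually_le hl1 ?_
    rw [Filter.eventually_atTop]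
    refine ⟨N, fun n hn => ?_⟩
    have hn' : ((π2 + π0) * ν * 2 / ((1 - π1) - (π2 + π0))) ≤ (n : ℝ) := by
      exact hN.trans (Nat.cast_le.2 hn)
    have hcond : (π2 + π0) * (ν + n + 1) ≤ l * (1 - π1) * ((n : ℝ) + 1) := by
      have hl2 : l * (1 - π1) = ((1 - π1) + (π2 + π0)) / 2 := by
        rw [hldef]; field_simp
      rw [hl2]
      rw [div_le_iff₀ hδ] at hn'
      nlinarith [hn', Nat.cast_nonneg (α := ℝ) n]
    have hkey : (ν + (n : ℝ) + 1) * (((n : ℝ) + 1) * (1 - π1) * Q (n+1))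
        = (ν + n + 1) * ((ν + n) * (π2 + π0) * Q n) := by rw [hQR n]
    rw [Real.norm_eq_abs, Real.norm_eq_abs,
      abs_of_nonneg (mul_nonneg (by positivity) (hQnn _)),
      abs_of_nonneg (mul_nonneg (by positivity) (hQnn _))]
    have hQn : 0 ≤ Q n := hQnn n
    have hc : 0 < ((n : ℝ) + 1) * (1 - π1) := by positivity
    rw [← mul_le_mul_iff_of_pos_right hc]
    push_cast
    calc (ν + ((n : ℝ) + 1)) * Q (n + 1) * (((n : ℝ) + 1) * (1 - π1))
        = (ν + n + 1) * ((ν + n) * (π2 + π0) * Q n) := by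
          rw [← hkey]; ring
      _ = ((π2 + π0) * (ν + n + 1)) * ((ν + n) * Q n) := by ring
      _ ≤ (l * (1 - π1) * ((n : ℝ) + 1)) * ((ν + n) * Q n) := by
          exact mul_le_mul_of_nonneg_right hcond (by positivity)
      _ = l * ((ν + (n : ℝ)) * Q n) * (((n : ℝ) + 1) * (1 - π1)) := by ring
  have hSW2 : Summable fun q : ℕ × ℕ => (ν + (q.2 : ℝ)) * P q.1 q.2 := by
    have h1 : Summable fun q : ℕ × ℕ => (ν + (q.1 : ℝ)) * P q.2 q.1 := by
      refine (summable_prod_of_nonneg ?_).2 ⟨fun j => (hslice j).mul_left (ν + (j : ℝ)), ?_⟩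
      · exact fun q => mul_nonneg (by positivity) (hPnn _ _)
      · refine hSW.congr fun j => ?_
        exact (tsum_mul_left).symm
    exact h1.prod_symm
  -- Step D: bookkeeping
  have hinj1 : Function.Injective (fun q : ℕ × ℕ => (q.1, q.2 + 1)) := by
    intro a b hab
    have hab' : (a.1, a.2 + 1) = (b.1, b.2 + 1) := hab
    rw [Prod.mk.injEq] at hab'
    exact Prod.ext_iff.2 ⟨hab'.1, by omega⟩
  have hinj2 : Function.Injective (fun q : ℕ × ℕ => (q.1 + 1, q.2)) := by
    intro a b hab
    have hab' : (a.1 + 1, a.2) = (b.1 + 1, b.2) := hab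
    rw [Prod.mk.injEq] at hab'
    exact Prod.ext_iff.2 ⟨by omega, hab'.2⟩
  have hSW2a : Summable fun q : ℕ × ℕ => (ν + (q.2 : ℝ) + 1) * P q.1 (q.2 + 1) := by
    have h1 := hSW2.comp_injective hinj1
    refine h1.congr fun q => ?_
    show (ν + ((q.2 + 1 : ℕ) : ℝ)) * P q.1 (q.2 + 1) = _
    push_cast
    ring
  have hSW2b : Summable fun q : ℕ × ℕ => (ν + (q.2 : ℝ)) * P (q.1 + 1) q.2 :=
    hSW2.comp_injective hinj2
  have keybound : ∀ x w c F : ℝ, 0 ≤ x → 0 ≤ w → w ≤ c → |F| ≤ C →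
      |x * (w * F)| ≤ C * (c * x) := by
    intro x w c F hx hw hwc hF
    rw [abs_mul, abs_mul, abs_of_nonneg hx, abs_of_nonneg hw]
    calc x * (w * |F|) ≤ x * (c * C) :=
          mul_le_mul_of_nonneg_left (mul_le_mul hwc hF (abs_nonneg F) (hw.trans hwc)) hx
      _ = C * (c * x) := by ring
  have dom : ∀ g u : ℕ × ℕ → ℝ, Summable u → (∀ q, |g q| ≤ C * u q) →
      Summable g ∧ Summable fun q => |g q| := by
    intro g u hu hbd
    constructor
    · refine Summable.of_norm_bounded (hu.mul_left C) fun q => ?_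
      rw [Real.norm_eq_abs]
      exact hbd q
    · exact Summable.of_nonneg_of_le (fun q => abs_nonneg _) hbd (hu.mul_left C)
  have hν2 : ∀ j : ℕ, (j : ℝ) ≤ ν + j := fun j => by linarith
  have D1 := dom (fun q : ℕ × ℕ => P q.1 q.2 * ((q.2 : ℝ) * f q))
    (fun q => (ν + (q.2 : ℝ)) * P q.1 q.2) hSW2
    (fun q => keybound _ _ _ _ (hPnn _ _) (Nat.cast_nonneg _) (hν2 q.2) (hC q))
  have D2 := dom (fun q : ℕ × ℕ => P q.1 q.2 * ((q.2 : ℝ) * f (q.1 + 1, q.2)))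
    (fun q => (ν + (q.2 : ℝ)) * P q.1 q.2) hSW2
    (fun q => keybound _ _ _ _ (hPnn _ _) (Nat.cast_nonneg _) (hν2 q.2) (hC _))
  have DB1 := dom (fun q : ℕ × ℕ => P q.1 (q.2 + 1) * (((q.2 : ℝ) + 1) * f (q.1, q.2 + 1)))
    (fun q => (ν + (q.2 : ℝ) + 1) * P q.1 (q.2 + 1)) hSW2a
    (fun q => keybound _ _ _ _ (hPnn _ _) (by positivity) (by linarith) (hC _))
  have DB2 := dom (fun q : ℕ × ℕ => P q.1 (q.2 + 1) * (((q.2 : ℝ) + 1) * f (q.1 + 1, q.2 + 1)))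
    (fun q => (ν + (q.2 : ℝ) + 1) * P q.1 (q.2 + 1)) hSW2a
    (fun q => keybound _ _ _ _ (hPnn _ _) (by positivity) (by linarith) (hC _))
  have D3 := dom (fun q : ℕ × ℕ => P q.1 q.2 * ((ν + (q.2 : ℝ)) * f (q.1, q.2 + 1)))
    (fun q => (ν + (q.2 : ℝ)) * P q.1 q.2) hSW2
    (fun q => keybound _ _ _ _ (hPnn _ _) (by positivity) (le_refl _) (hC _))
  have D4 := dom (fun q : ℕ × ℕ => P q.1 q.2 * ((ν + (q.2 : ℝ)) * f (q.1 + 1, q.2 + 1)))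
    (fun q => (ν + (q.2 : ℝ)) * P q.1 q.2) hSW2
    (fun q => keybound _ _ _ _ (hPnn _ _) (by positivity) (le_refl _) (hC _))
  have D32 := dom (fun q : ℕ × ℕ => P (q.1 + 1) q.2 * ((ν + (q.2 : ℝ)) * f (q.1 + 1, q.2 + 1)))
    (fun q => (ν + (q.2 : ℝ)) * P (q.1 + 1) q.2) hSW2b
    (fun q => keybound _ _ _ _ (hPnn _ _) (by positivity) (le_refl _) (hC _))
  -- reindexing in the second coordinate
  have reindex : ∀ F : ℕ × ℕ → ℝ,
      (∑' q : ℕ × ℕ, P q.1 q.2 * ((q.2 : ℝ) * F q))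
        = ∑' q : ℕ × ℕ, P q.1 (q.2 + 1) * (((q.2 : ℝ) + 1) * F (q.1, q.2 + 1)) := by
    intro F
    have hsupp : Function.support (fun q : ℕ × ℕ => P q.1 q.2 * ((q.2 : ℝ) * F q))
        ⊆ Set.range (fun q : ℕ × ℕ => (q.1, q.2 + 1)) := by
      rintro ⟨i, j⟩ hq
      match j with
      | 0 => simp [Function.mem_support] at hq
      | (j+1) => exact ⟨(i, j), rfl⟩
    have h1 := Function.Injective.tsum_eq hinj1
      (f := fun q : ℕ × ℕ => P q.1 q.2 * ((q.2 : ℝ) * F q)) hsupp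
    rw [← h1]
    refine tsum_congr fun q => ?_
    show P q.1 (q.2 + 1) * (((q.2 + 1 : ℕ) : ℝ) * F (q.1, q.2 + 1)) = _
    push_cast
    ring
  -- splitting off the first coordinate
  have splitsum : ∀ h : ℕ × ℕ → ℝ, Summable h → (Summable fun q => |h q|) →
      ∑' q : ℕ × ℕ, h q = (∑' j : ℕ, h (0, j)) + ∑' q : ℕ × ℕ, h (q.1 + 1, q.2) := by
    intro h hsum habs
    have hslices : ∀ i : ℕ, Summable fun j => h (i, j) := fun i => hsum.prod_factor i
    have houter : Summable fun i : ℕ => ∑' j, h (i, j) := by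
      have h1 : Summable fun i : ℕ => ∑' j, |h (i, j)| :=
        ((summable_prod_of_nonneg (fun q => abs_nonneg _)).1 habs).2
      refine Summable.of_norm_bounded h1 fun i => ?_
      rw [Real.norm_eq_abs]
      have h2 : Summable fun j => ‖h (i, j)‖ := by
        simpa only [Real.norm_eq_abs] using (hslices i).abs
      have h3 := norm_tsum_le_tsum_norm h2
      simpa only [Real.norm_eq_abs] using h3
    have hsucc : Summable fun q : ℕ × ℕ => h (q.1 + 1, q.2) := hsum.comp_injective hinj2
    rw [Summable.tsum_prod' hsum hslices, Summable.tsum_eq_zero_add houter]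
    congr 1
    exact (Summable.tsum_prod' hsucc fun i => hslices (i + 1)).symm
  -- names for the recurring sums
  set T12 : ℝ := ∑' q : ℕ × ℕ, P q.1 (q.2 + 1) * (((q.2 : ℝ) + 1) * f (q.1 + 1, q.2 + 1))
    with hT12
  set T32 : ℝ := ∑' q : ℕ × ℕ, P (q.1 + 1) q.2 * ((ν + (q.2 : ℝ)) * f (q.1 + 1, q.2 + 1))
    with hT32
  set T4 : ℝ := ∑' q : ℕ × ℕ, P q.1 q.2 * ((ν + (q.2 : ℝ)) * f (q.1 + 1, q.2 + 1)) with hT4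
  set J0 : ℝ := ∑' j : ℕ, P 0 j * ((ν + (j : ℝ)) * f (0, j + 1)) with hJ0
  have hR0' : ∀ j : ℕ, ((j : ℝ) + 1) * P 0 (j + 1) = (ν + (j : ℝ)) * π2 * P 0 j := fun j => R0 j
  have hR1' : ∀ i j : ℕ, ((j : ℝ) + 1) * P (i + 1) (j + 1)
      = π1 * ((j : ℝ) + 1) * P i (j + 1)
        + (ν + (j : ℝ)) * (π2 * P (i + 1) j + π0 * P i j) := fun i j => R1 i j
  -- main identity for E1
  have eq1 : (∑' q : ℕ × ℕ, P q.1 q.2 * ((q.2 : ℝ) * f q))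
      = π2 * J0 + (π1 * T12 + (π2 * T32 + π0 * T4)) := by
    rw [reindex f,
      splitsum (fun q : ℕ × ℕ => P q.1 (q.2 + 1) * (((q.2 : ℝ) + 1) * f (q.1, q.2 + 1)))
        DB1.1 DB1.2]
    have piece1 : (∑' j : ℕ, P 0 (j + 1) * (((j : ℝ) + 1) * f (0, j + 1))) = π2 * J0 := by
      rw [hJ0, ← tsum_mul_left]
      refine tsum_congr fun j => ?_
      linear_combination (f (0, j + 1)) * hR0' j
    have piece2 : (∑' q : ℕ × ℕ, P (q.1 + 1) (q.2 + 1) * (((q.2 : ℝ) + 1) * f (q.1 + 1, q.2 + 1)))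
        = π1 * T12 + (π2 * T32 + π0 * T4) := by
      have hpc : ∀ q : ℕ × ℕ, P (q.1 + 1) (q.2 + 1) * (((q.2 : ℝ) + 1) * f (q.1 + 1, q.2 + 1))
          = π1 * (P q.1 (q.2 + 1) * (((q.2 : ℝ) + 1) * f (q.1 + 1, q.2 + 1)))
            + (π2 * (P (q.1 + 1) q.2 * ((ν + (q.2 : ℝ)) * f (q.1 + 1, q.2 + 1)))
              + π0 * (P q.1 q.2 * ((ν + (q.2 : ℝ)) * f (q.1 + 1, q.2 + 1)))) := by
        intro q
        linear_combination (f (q.1 + 1, q.2 + 1)) * hR1' q.1 q.2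
      rw [tsum_congr hpc,
        Summable.tsum_add (DB2.1.mul_left π1) ((D32.1.mul_left π2).add (D4.1.mul_left π0)),
        Summable.tsum_add (D32.1.mul_left π2) (D4.1.mul_left π0),
        tsum_mul_left, tsum_mul_left, tsum_mul_left]
    rw [piece1, piece2]
  have eq2 : (∑' q : ℕ × ℕ, P q.1 q.2 * ((q.2 : ℝ) * f (q.1 + 1, q.2))) = T12 := by
    rw [reindex (fun q => f (q.1 + 1, q.2)), hT12]
  have eq3 : (∑' q : ℕ × ℕ, P q.1 q.2 * ((ν + (q.2 : ℝ)) * f (q.1, q.2 + 1))) = J0 + T32 := by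
    rw [splitsum (fun q : ℕ × ℕ => P q.1 q.2 * ((ν + (q.2 : ℝ)) * f (q.1, q.2 + 1))) D3.1 D3.2]
  have eq4 : (∑' q : ℕ × ℕ, P q.1 q.2 * ((ν + (q.2 : ℝ)) * f (q.1 + 1, q.2 + 1))) = T4 := rfl
  have hpe1 : pExp p (fun q => (q.2 : ℝ) * f q)
      = ∑' q : ℕ × ℕ, P q.1 q.2 * ((q.2 : ℝ) * f q) := rfl
  have hpe2 : pExp p (fun q => (q.2 : ℝ) * f (q.1 + 1, q.2))
      = ∑' q : ℕ × ℕ, P q.1 q.2 * ((q.2 : ℝ) * f (q.1 + 1, q.2)) := rfl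
  have hpe3 : pExp p (fun q => (ν + (q.2 : ℝ)) * f (q.1, q.2 + 1))
      = ∑' q : ℕ × ℕ, P q.1 q.2 * ((ν + (q.2 : ℝ)) * f (q.1, q.2 + 1)) := rfl
  have hpe4 : pExp p (fun q => (ν + (q.2 : ℝ)) * f (q.1 + 1, q.2 + 1))
      = ∑' q : ℕ × ℕ, P q.1 q.2 * ((ν + (q.2 : ℝ)) * f (q.1 + 1, q.2 + 1)) := rfl
  rw [hpe1, hpe2, hpe3, hpe4, eq1, eq2, eq3, eq4]
  ring
end
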